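/- arXiv:2512.14871 — 8 statements merged into one kernel-verified Lean document; each statement's English description precedes it below -/
import Mathlib

section
/- Fix integers N ≥ 1, α_1 > α_2 > … > α_N ≥ 1 and m_1, …, m_N ≥ 1. For each r let B_r ∈ GL_{m_r}(ℂ) satisfy B_rᵀ = B_r if α_r is odd and B_rᵀ = −B_r if α_r is even. Set 𝓑 := ⊕_{r=1}^{N} (⊕_{j=1}^{α_r} (−1)^{j−1} B_r), 𝓕 := ⊕_{r=1}^{N} E_{α_r}(I_{m_r}), and 𝕏 := {𝒳 ∈ 𝕋^{α,μ} : 𝓕 𝒳ᵀ 𝓕 𝓑 𝒳 = 𝓑}. Let 𝕆 := {⊕_{r=1}^{N} (⊕_{j=1}^{α_r} Q_r) : Q_r ∈ M_{m_r}(ℂ), Q_rᵀ B_r Q_r = B_r} and 𝕍 := {𝒳 ∈ 𝕏 : (𝒳_{rr})_{ii} = I_{m_r} for all r and all 1 ≤ i ≤ α_r}. Then: 𝕏 is a subgroup of GL_n(ℂ); 𝕆 and 𝕍 are subgroups of 𝕏; 𝕍 is normal in 𝕏; 𝕆 ∩ 𝕍 = {I}; and every 𝒳 ∈ 𝕏 factors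 uniquely as 𝒳 = 𝒬𝒱 with 𝒬 ∈ 𝕆 and 𝒱 ∈ 𝕍. In other words, 𝕏 = 𝕆 ⋉ 𝕍 is a semidirect product. -/
open Matrix Complex

noncomputable section

/-- The block-Toeplitz pattern for multiplicities `μ`. -/
def BlockToeplitz (N : ℕ) (α μ : Fin N → ℕ)
    (X : Matrix ((r : Fin N) × (Fin (α r) × Fin (μ r)))
      ((r : Fin N) × (Fin (α r) × Fin (μ r))) ℂ) : Prop :=
  (∀ (r s : Fin N) (i i' : Fin (α r)) (j j' : Fin (α s)) (p : Fin (μ r)) (q : Fin (μ s)),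
      (i' : ℕ) = (i : ℕ) + 1 → (j' : ℕ) = (j : ℕ) + 1 →
      X ⟨r, i', p⟩ ⟨s, j', q⟩ = X ⟨r, i, p⟩ ⟨s, j, q⟩) ∧
  (∀ (r s : Fin N) (i : Fin (α r)) (j : Fin (α s)) (p : Fin (μ r)) (q : Fin (μ s)),
      (i : ℕ) ≠ 0 → (j : ℕ) = 0 → X ⟨r, i, p⟩ ⟨s, j, q⟩ = 0) ∧
  (∀ (r s : Fin N) (i : Fin (α r)) (j : Fin (α s)) (p : Fin (μ r)) (q : Fin (μ s)),
      (i : ℕ) + 1 = α r → (j : ℕ) + 1 < α s → X ⟨r, i, p⟩ ⟨s, j, q⟩ = 0)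

/-- `𝓕 = ⊕_{r=1}^{N} E_{α_r}(I_{μ_r})`. -/
def Fcal (N : ℕ) (α μ : Fin N → ℕ) :
    Matrix ((r : Fin N) × (Fin (α r) × Fin (μ r)))
      ((r : Fin N) × (Fin (α r) × Fin (μ r))) ℂ :=
  Matrix.of fun x y =>
    if x.1 = y.1 ∧ (x.2.1 : ℕ) + (y.2.1 : ℕ) + 1 = α x.1 ∧ (x.2.2 : ℕ) = (y.2.2 : ℕ) then 1
    else 0

/-- `𝓑 = ⊕_{r=1}^{N} (⊕_{j=1}^{α_r} (-1)^{j-1} B_r)` built from given matrices `B_r`. -/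
def BcalOf (N : ℕ) (α μ : Fin N → ℕ) (B : ∀ r, Matrix (Fin (μ r)) (Fin (μ r)) ℂ) :
    Matrix ((r : Fin N) × (Fin (α r) × Fin (μ r)))
      ((r : Fin N) × (Fin (α r) × Fin (μ r))) ℂ :=
  Matrix.of fun x y =>
    if h : x.1 = y.1 ∧ (x.2.1 : ℕ) = (y.2.1 : ℕ) then
      (-1 : ℂ) ^ (x.2.1 : ℕ) * B x.1 x.2.2 (Fin.cast (congrArg μ h.1.symm) y.2.2)
    else 0

/-- `⊕_{r=1}^{N} (⊕_{j=1}^{α_r} Q_r)`: the block diagonal matrix whose `α_r` diagonal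
sub-blocks in the `r`-th diagonal block all equal `Q_r`. -/
def diagRep (N : ℕ) (α μ : Fin N → ℕ) (Q : ∀ r, Matrix (Fin (μ r)) (Fin (μ r)) ℂ) :
    Matrix ((r : Fin N) × (Fin (α r) × Fin (μ r)))
      ((r : Fin N) × (Fin (α r) × Fin (μ r))) ℂ :=
  Matrix.of fun x y =>
    if h : x.1 = y.1 ∧ (x.2.1 : ℕ) = (y.2.1 : ℕ) then
      Q x.1 x.2.2 (Fin.cast (congrArg μ h.1.symm) y.2.2)
    else 0

abbrev Idx (N : ℕ) (α m : Fin N → ℕ) := (r : Fin N) × (Fin (α r) × Fin (m r))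

section AuxS
variable {N : ℕ} {α m : Fin N → ℕ}

lemma Fcal_apply {r s : Fin N} (i : Fin (α r)) (p : Fin (m r)) (j : Fin (α s))
    (q : Fin (m s)) :
    Fcal N α m ⟨r, (i, p)⟩ ⟨s, (j, q)⟩ =
      if r = s ∧ (i : ℕ) + (j : ℕ) + 1 = α r ∧ (p : ℕ) = (q : ℕ) then 1 else 0 := rfl

lemma sum_idx (f : Idx N α m → ℂ) :
    ∑ z : Idx N α m, f z = ∑ s, ∑ k, ∑ t, f ⟨s, (k, t)⟩ := by
  rw [← Finset.univ_sigma_univ, Finset.sum_sigma]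
  exact Finset.sum_congr rfl fun s _ => by rw [Fintype.sum_prod_type]

lemma sum_idx_single (r : Fin N) (i : Fin (α r)) (f : Idx N α m → ℂ)
    (h : ∀ (s : Fin N) (k : Fin (α s)) (t : Fin (m s)),
      ¬(s = r ∧ (k : ℕ) = (i : ℕ)) → f ⟨s, (k, t)⟩ = 0) :
    ∑ z : Idx N α m, f z = ∑ t, f ⟨r, (i, t)⟩ := by
  rw [sum_idx]
  rw [Finset.sum_eq_single r
    (fun s _ hs => Finset.sum_eq_zero fun k _ => Finset.sum_eq_zero fun t _ =>
      h s k t (fun hc => hs hc.1)) (by simp)]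
  rw [Finset.sum_eq_single i
    (fun k _ hk => Finset.sum_eq_zero fun t _ =>
      h r k t (fun hc => hk (Fin.ext hc.2))) (by simp)]

lemma idx_mk_eq_iff {r s : Fin N} {i : Fin (α r)} {p : Fin (m r)} {j : Fin (α s)}
    {q : Fin (m s)} :
    (⟨r, (i, p)⟩ : Idx N α m) = ⟨s, (j, q)⟩ ↔ r = s ∧ (i : ℕ) = (j : ℕ) ∧ (p : ℕ) = (q : ℕ) := by
  constructor
  · intro h
    cases h
    exact ⟨rfl, rfl, rfl⟩
  · rintro ⟨rfl, hi, hp⟩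
    have h1 : i = j := Fin.ext hi
    have h2 : p = q := Fin.ext hp
    rw [h1, h2]

lemma one_apply_idx (r s : Fin N) (i : Fin (α r)) (p : Fin (m r)) (j : Fin (α s))
    (q : Fin (m s)) :
    (1 : Matrix (Idx N α m) (Idx N α m) ℂ) ⟨r, (i, p)⟩ ⟨s, (j, q)⟩ =
      if r = s ∧ (i : ℕ) = (j : ℕ) ∧ (p : ℕ) = (q : ℕ) then 1 else 0 := by
  simp only [Matrix.one_apply, idx_mk_eq_iff]

lemma Fcal_mul_apply (X : Matrix (Idx N α m) (Idx N α m) ℂ) (r : Fin N) (i : Fin (α r))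
    (p : Fin (m r)) (y : Idx N α m) :
    (Fcal N α m * X) ⟨r, (i, p)⟩ y = X ⟨r, (i.rev, p)⟩ y := by
  have hrev := Fin.val_rev i
  have hi := i.isLt
  rw [Matrix.mul_apply, sum_idx_single r i.rev]
  · rw [Fintype.sum_eq_single p (fun t ht => by
      have h0 : Fcal N α m ⟨r, (i, p)⟩ ⟨r, (i.rev, t)⟩ = 0 := by
        rw [Fcal_apply, if_neg]
        rintro ⟨-, -, hpt⟩
        exact ht (Fin.ext hpt.symm)
      rw [h0, zero_mul])]
    have h1 : Fcal N α m ⟨r, (i, p)⟩ ⟨r, (i.rev, p)⟩ = 1 := by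
      rw [Fcal_apply, if_pos ⟨rfl, by omega, rfl⟩]
    rw [h1, one_mul]
  · intro s k t hsk
    have h0 : Fcal N α m ⟨r, (i, p)⟩ ⟨s, (k, t)⟩ = 0 := by
      rw [Fcal_apply, if_neg]
      rintro ⟨rfl, hk, -⟩
      exact hsk ⟨rfl, by omega⟩
    rw [h0, zero_mul]

lemma mul_Fcal_apply (X : Matrix (Idx N α m) (Idx N α m) ℂ) (x : Idx N α m) (s : Fin N)
    (j : Fin (α s)) (q : Fin (m s)) :
    (X * Fcal N α m) x ⟨s, (j, q)⟩ = X x ⟨s, (j.rev, q)⟩ := by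
  have hrev := Fin.val_rev j
  have hj := j.isLt
  rw [Matrix.mul_apply, sum_idx_single s j.rev]
  · rw [Fintype.sum_eq_single q (fun t ht => by
      have h0 : Fcal N α m ⟨s, (j.rev, t)⟩ ⟨s, (j, q)⟩ = 0 := by
        rw [Fcal_apply, if_neg]
        rintro ⟨-, -, hpt⟩
        exact ht (Fin.ext hpt)
      rw [h0, mul_zero])]
    have h1 : Fcal N α m ⟨s, (j.rev, q)⟩ ⟨s, (j, q)⟩ = 1 := by
      rw [Fcal_apply, if_pos ⟨rfl, by omega, rfl⟩]
    rw [h1, mul_one]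
  · intro u k t huk
    have h0 : Fcal N α m ⟨u, (k, t)⟩ ⟨s, (j, q)⟩ = 0 := by
      rw [Fcal_apply, if_neg]
      rintro ⟨rfl, hk, -⟩
      exact huk ⟨rfl, by omega⟩
    rw [h0, mul_zero]

lemma Fcal_invol : Fcal N α m * Fcal N α m = (1 : Matrix (Idx N α m) (Idx N α m) ℂ) := by
  ext ⟨r, i, p⟩ ⟨s, j, q⟩
  rw [Fcal_mul_apply, one_apply_idx, Fcal_apply]
  have hrev := Fin.val_rev i
  have hi := i.isLt
  have hj := j.isLt
  exact if_congr (by constructor <;> (rintro ⟨rfl, h1, h2⟩; exact ⟨rfl, by omega, by omega⟩))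
    rfl rfl
def bdiag (N : ℕ) (α m : Fin N → ℕ) (C : ∀ r, Fin (α r) → Matrix (Fin (m r)) (Fin (m r)) ℂ) :
    Matrix (Idx N α m) (Idx N α m) ℂ :=
  Matrix.of fun x y =>
    if h : x.1 = y.1 ∧ (x.2.1 : ℕ) = (y.2.1 : ℕ) then
      C x.1 x.2.1 x.2.2 (Fin.cast (congrArg m h.1.symm) y.2.2)
    else 0

section Aux2
variable {N : ℕ} {α m : Fin N → ℕ}

lemma fin_cast_self {n : ℕ} (h : n = n) (a : Fin n) : Fin.cast h a = a := rfl

lemma bdiag_apply_same (C : ∀ r, Fin (α r) → Matrix (Fin (m r)) (Fin (m r)) ℂ) (r : Fin N)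
    (i j : Fin (α r)) (p q : Fin (m r)) :
    bdiag N α m C ⟨r, (i, p)⟩ ⟨r, (j, q)⟩ = if (i : ℕ) = (j : ℕ) then C r i p q else 0 := by
  by_cases h : (i : ℕ) = (j : ℕ)
  · rw [if_pos h]
    exact dif_pos ⟨rfl, h⟩
  · rw [if_neg h]
    exact dif_neg (fun hc => h hc.2)

lemma bdiag_apply_ne (C : ∀ r, Fin (α r) → Matrix (Fin (m r)) (Fin (m r)) ℂ)
    {x y : Idx N α m} (h : ¬(x.1 = y.1 ∧ (x.2.1 : ℕ) = (y.2.1 : ℕ))) :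
    bdiag N α m C x y = 0 := dif_neg h

lemma diagRep_eq_bdiag (Q : ∀ r, Matrix (Fin (m r)) (Fin (m r)) ℂ) :
    diagRep N α m Q = bdiag N α m (fun r _ => Q r) := rfl

lemma Bcal_eq_bdiag (B : ∀ r, Matrix (Fin (m r)) (Fin (m r)) ℂ) :
    BcalOf N α m B = bdiag N α m (fun r i => ((-1 : ℂ) ^ (i : ℕ)) • B r) := rfl

lemma bdiag_mul_apply (C : ∀ r, Fin (α r) → Matrix (Fin (m r)) (Fin (m r)) ℂ)
    (X : Matrix (Idx N α m) (Idx N α m) ℂ) (r : Fin N) (i : Fin (α r)) (p : Fin (m r))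
    (y : Idx N α m) :
    (bdiag N α m C * X) ⟨r, (i, p)⟩ y = ∑ t, C r i p t * X ⟨r, (i, t)⟩ y := by
  rw [Matrix.mul_apply, sum_idx_single r i]
  · exact Finset.sum_congr rfl fun t _ => by rw [bdiag_apply_same, if_pos rfl]
  · intro s k t hsk
    rw [bdiag_apply_ne C (fun hc => hsk ⟨hc.1.symm, hc.2.symm⟩), zero_mul]

lemma mul_bdiag_apply (C : ∀ r, Fin (α r) → Matrix (Fin (m r)) (Fin (m r)) ℂ)
    (X : Matrix (Idx N α m) (Idx N α m) ℂ) (x : Idx N α m) (s : Fin N) (j : Fin (α s))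
    (q : Fin (m s)) :
    (X * bdiag N α m C) x ⟨s, (j, q)⟩ = ∑ t, X x ⟨s, (j, t)⟩ * C s j t q := by
  rw [Matrix.mul_apply, sum_idx_single s j]
  · exact Finset.sum_congr rfl fun t _ => by rw [bdiag_apply_same, if_pos rfl]
  · intro u k t huk
    rw [bdiag_apply_ne C (fun hc => huk ⟨hc.1, hc.2⟩), mul_zero]

lemma bdiag_mul_bdiag (C C' : ∀ r, Fin (α r) → Matrix (Fin (m r)) (Fin (m r)) ℂ) :
    bdiag N α m C * bdiag N α m C' = bdiag N α m (fun r i => C r i * C' r i) := by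
  ext ⟨r, i, p⟩ ⟨s, j, q⟩
  rw [bdiag_mul_apply]
  by_cases hrs : r = s
  · subst hrs
    rw [bdiag_apply_same]
    by_cases hij : (i : ℕ) = (j : ℕ)
    · have : i = j := Fin.ext hij
      subst this
      rw [if_pos rfl, Matrix.mul_apply]
      exact Finset.sum_congr rfl fun t _ => by rw [bdiag_apply_same, if_pos rfl]
    · rw [if_neg hij]
      exact Finset.sum_eq_zero fun t _ => by
        rw [bdiag_apply_same, if_neg hij, mul_zero]
  · rw [bdiag_apply_ne _ (fun hc => hrs hc.1)]
    exact Finset.sum_eq_zero fun t _ => by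
      rw [bdiag_apply_ne _ (fun hc => hrs hc.1), mul_zero]

lemma bdiag_one : bdiag N α m (fun _ _ => (1 : Matrix _ _ ℂ)) = 1 := by
  ext ⟨r, i, p⟩ ⟨s, j, q⟩
  rw [one_apply_idx]
  by_cases hrs : r = s
  · subst hrs
    rw [bdiag_apply_same]
    by_cases hij : (i : ℕ) = (j : ℕ)
    · rw [if_pos hij, Matrix.one_apply]
      by_cases hpq : p = q
      · rw [if_pos hpq, if_pos ⟨rfl, hij, by rw [hpq]⟩]
      · rw [if_neg hpq, if_neg (fun hc => hpq (Fin.ext hc.2.2))]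
    · rw [if_neg hij, if_neg (fun hc => hij hc.2.1)]
  · rw [bdiag_apply_ne _ (fun hc => hrs hc.1), if_neg (fun hc => hrs hc.1)]

lemma diagRep_one : diagRep N α m (fun _ => 1) = 1 := by
  rw [diagRep_eq_bdiag]; exact bdiag_one

lemma diagRep_mul (Q Q' : ∀ r, Matrix (Fin (m r)) (Fin (m r)) ℂ) :
    diagRep N α m Q * diagRep N α m Q' = diagRep N α m (fun r => Q r * Q' r) := by
  rw [diagRep_eq_bdiag, diagRep_eq_bdiag, bdiag_mul_bdiag]; rfl

lemma bdiag_transpose (C : ∀ r, Fin (α r) → Matrix (Fin (m r)) (Fin (m r)) ℂ) :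
    (bdiag N α m C)ᵀ = bdiag N α m (fun r i => (C r i)ᵀ) := by
  ext ⟨r, i, p⟩ ⟨s, j, q⟩
  rw [Matrix.transpose_apply]
  by_cases hrs : r = s
  · subst hrs
    rw [bdiag_apply_same, bdiag_apply_same]
    by_cases hij : (i : ℕ) = (j : ℕ)
    · have : i = j := Fin.ext hij
      subst this
      rw [if_pos hij, if_pos hij, Matrix.transpose_apply]
    · rw [if_neg (fun h => hij h.symm), if_neg hij]
  · rw [bdiag_apply_ne _ (fun hc => hrs hc.1.symm), bdiag_apply_ne _ (fun hc => hrs hc.1)]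

lemma diagRep_transpose (Q : ∀ r, Matrix (Fin (m r)) (Fin (m r)) ℂ) :
    (diagRep N α m Q)ᵀ = diagRep N α m (fun r => (Q r)ᵀ) := by
  rw [diagRep_eq_bdiag, bdiag_transpose]; rfl

lemma Fcal_comm_diagRep (Q : ∀ r, Matrix (Fin (m r)) (Fin (m r)) ℂ) :
    Fcal N α m * diagRep N α m Q = diagRep N α m Q * Fcal N α m := by
  ext ⟨r, i, p⟩ ⟨s, j, q⟩
  rw [Fcal_mul_apply, mul_Fcal_apply, diagRep_eq_bdiag]
  have h1 := Fin.val_rev i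
  have h2 := Fin.val_rev j
  have h3 := i.isLt
  have h4 := j.isLt
  by_cases hrs : r = s
  · subst hrs
    rw [bdiag_apply_same, bdiag_apply_same]
    exact if_congr (by omega) rfl rfl
  · rw [bdiag_apply_ne _ (fun hc => hrs hc.1), bdiag_apply_ne _ (fun hc => hrs hc.1)]
def Scal (N : ℕ) (α m : Fin N → ℕ) : Matrix (Idx N α m) (Idx N α m) ℂ :=
  Matrix.of fun x y =>
    if x.1 = y.1 ∧ (y.2.1 : ℕ) = (x.2.1 : ℕ) + 1 ∧ (x.2.2 : ℕ) = (y.2.2 : ℕ) then 1 else 0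

section Aux3
variable {N : ℕ} {α m : Fin N → ℕ}

lemma fin_mk_val {n a : ℕ} (h : a < n) : ((⟨a, h⟩ : Fin n) : ℕ) = a := rfl

lemma X_congr (X : Matrix (Idx N α m) (Idx N α m) ℂ) {r s : Fin N} {i i' : Fin (α r)}
    {j j' : Fin (α s)} (p : Fin (m r)) (q : Fin (m s)) (hi : (i : ℕ) = (i' : ℕ))
    (hj : (j : ℕ) = (j' : ℕ)) :
    X ⟨r, (i, p)⟩ ⟨s, (j, q)⟩ = X ⟨r, (i', p)⟩ ⟨s, (j', q)⟩ := by
  have h1 : i = i' := Fin.ext hi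
  have h2 : j = j' := Fin.ext hj
  rw [h1, h2]

lemma Scal_apply {r s : Fin N} (i : Fin (α r)) (p : Fin (m r)) (j : Fin (α s))
    (q : Fin (m s)) :
    Scal N α m ⟨r, (i, p)⟩ ⟨s, (j, q)⟩ =
      if r = s ∧ (j : ℕ) = (i : ℕ) + 1 ∧ (p : ℕ) = (q : ℕ) then 1 else 0 := rfl

lemma Scal_mul_apply (X : Matrix (Idx N α m) (Idx N α m) ℂ) (r : Fin N) (i : Fin (α r))
    (p : Fin (m r)) (y : Idx N α m) :
    (Scal N α m * X) ⟨r, (i, p)⟩ y =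
      if h : (i : ℕ) + 1 < α r then X ⟨r, (⟨(i : ℕ) + 1, h⟩, p)⟩ y else 0 := by
  rw [Matrix.mul_apply]
  by_cases h : (i : ℕ) + 1 < α r
  · rw [dif_pos h, sum_idx_single r ⟨(i : ℕ) + 1, h⟩]
    · rw [Fintype.sum_eq_single p (fun t ht => by
        rw [Scal_apply, if_neg (fun hc => ht (Fin.ext hc.2.2.symm)), zero_mul])]
      rw [Scal_apply, if_pos ⟨rfl, rfl, rfl⟩, one_mul]
    · intro s k t hsk
      rw [Scal_apply, if_neg (fun hc => hsk ⟨hc.1.symm, by simp only [fin_mk_val]; omega⟩), zero_mul]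
  · rw [dif_neg h]
    refine Finset.sum_eq_zero fun z _ => ?_
    obtain ⟨s, k, t⟩ := z
    rw [Scal_apply, if_neg, zero_mul]
    rintro ⟨rfl, hk, -⟩
    exact h (hk ▸ k.isLt)

lemma mul_Scal_apply (X : Matrix (Idx N α m) (Idx N α m) ℂ) (x : Idx N α m) (s : Fin N)
    (j : Fin (α s)) (q : Fin (m s)) :
    (X * Scal N α m) x ⟨s, (j, q)⟩ =
      if 0 < (j : ℕ) then X x ⟨s, (⟨(j : ℕ) - 1, by omega⟩, q)⟩ else 0 := by
  rw [Matrix.mul_apply]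
  by_cases h : 0 < (j : ℕ)
  · rw [if_pos h, sum_idx_single s ⟨(j : ℕ) - 1, by omega⟩]
    · rw [Fintype.sum_eq_single q (fun t ht => by
        rw [Scal_apply, if_neg (fun hc => ht (Fin.ext hc.2.2)), mul_zero])]
      rw [Scal_apply, if_pos ⟨rfl, by simp only [fin_mk_val]; omega, rfl⟩, mul_one]
    · intro u k t huk
      rw [Scal_apply, if_neg (fun hc => huk ⟨hc.1, by simp only [fin_mk_val] at hc ⊢; omega⟩), mul_zero]
  · rw [if_neg h]
    refine Finset.sum_eq_zero fun z _ => ?_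
    obtain ⟨u, k, t⟩ := z
    rw [Scal_apply, if_neg, mul_zero]
    rintro ⟨rfl, hk, -⟩
    omega

lemma blockToeplitz_iff_comm (X : Matrix (Idx N α m) (Idx N α m) ℂ) :
    BlockToeplitz N α m X ↔ Scal N α m * X = X * Scal N α m := by
  constructor
  · intro hX
    ext ⟨r, i, p⟩ ⟨s, j, q⟩
    rw [Scal_mul_apply, mul_Scal_apply]
    by_cases h1 : (i : ℕ) + 1 < α r <;> by_cases h2 : 0 < (j : ℕ)
    · rw [dif_pos h1, if_pos h2]
      exact hX.1 r s i ⟨(i : ℕ) + 1, h1⟩ ⟨(j : ℕ) - 1, by omega⟩ j p q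
        (by simp only [fin_mk_val]) (by simp only [fin_mk_val]; omega)
    · rw [dif_pos h1, if_neg h2]
      exact hX.2.1 r s ⟨(i : ℕ) + 1, h1⟩ j p q (by simp only [fin_mk_val]; omega) (by omega)
    · rw [dif_neg h1, if_pos h2]
      refine (hX.2.2 r s i ⟨(j : ℕ) - 1, by omega⟩ p q ?_
        (by simp only [fin_mk_val]; omega)).symm
      have := i.isLt; omega
    · rw [dif_neg h1, if_neg h2]
  · intro hc
    refine ⟨?_, ?_, ?_⟩
    · intro r s i i' j j' p q hi' hj'
      have h := congrFun (congrFun hc ⟨r, (i, p)⟩) ⟨s, (j', q)⟩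
      rw [Scal_mul_apply, mul_Scal_apply] at h
      have h1 : (i : ℕ) + 1 < α r := hi' ▸ i'.isLt
      have h2 : 0 < (j' : ℕ) := by omega
      rw [dif_pos h1, if_pos h2] at h
      rw [X_congr X p q (show ((⟨(i : ℕ) + 1, h1⟩ : Fin (α r)) : ℕ) = (i' : ℕ) by
        simp only [fin_mk_val]; omega) rfl] at h
      rw [h]
      exact X_congr X p q rfl (by simp only [fin_mk_val]; omega)
    · intro r s i j p q hi hj
      have h := congrFun (congrFun hc ⟨r, (⟨(i : ℕ) - 1, by omega⟩, p)⟩) ⟨s, (j, q)⟩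
      rw [Scal_mul_apply, mul_Scal_apply] at h
      have h1 : ((⟨(i : ℕ) - 1, by omega⟩ : Fin (α r)) : ℕ) + 1 < α r := by
        have := i.isLt; simp only [fin_mk_val]; omega
      rw [dif_pos h1, if_neg (by omega)] at h
      exact (X_congr X p q (by simp only [fin_mk_val]; omega) rfl).trans h
    · intro r s i j p q hi hj
      have h := congrFun (congrFun hc ⟨r, (i, p)⟩) ⟨s, (⟨(j : ℕ) + 1, hj⟩, q)⟩
      rw [Scal_mul_apply, mul_Scal_apply] at h
      rw [dif_neg (by omega), if_pos (by simp only [fin_mk_val]; omega)] at h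
      exact (X_congr X p q rfl (by simp only [fin_mk_val]; omega)).trans h.symm

lemma bt_one : BlockToeplitz N α m 1 := by
  rw [blockToeplitz_iff_comm, mul_one, one_mul]

lemma bt_mul {X Y : Matrix (Idx N α m) (Idx N α m) ℂ} (hX : BlockToeplitz N α m X)
    (hY : BlockToeplitz N α m Y) : BlockToeplitz N α m (X * Y) := by
  rw [blockToeplitz_iff_comm] at hX hY ⊢
  rw [← mul_assoc, hX, mul_assoc, hY, ← mul_assoc]

lemma bt_inv {X : Matrix (Idx N α m) (Idx N α m) ℂ} (hX : BlockToeplitz N α m X)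
    (hu : IsUnit X) : BlockToeplitz N α m X⁻¹ := by
  have hd : IsUnit X.det := (Matrix.isUnit_iff_isUnit_det X).mp hu
  rw [blockToeplitz_iff_comm] at hX ⊢
  calc Scal N α m * X⁻¹ = X⁻¹ * X * Scal N α m * X⁻¹ := by
        rw [Matrix.nonsing_inv_mul _ hd, one_mul]
    _ = X⁻¹ * (Scal N α m * X) * X⁻¹ := by rw [mul_assoc X⁻¹ X, hX, ← mul_assoc]
    _ = X⁻¹ * Scal N α m * (X * X⁻¹) := by rw [mul_assoc, mul_assoc, mul_assoc]
    _ = X⁻¹ * Scal N α m := by rw [Matrix.mul_nonsing_inv _ hd, mul_one]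
end Aux3
section Aux4
variable {N : ℕ} {α m : Fin N → ℕ}

/-- L1: entries strictly below the sub-block diagonal vanish. -/
lemma bt_lower_zero {X : Matrix (Idx N α m) (Idx N α m) ℂ} (hX : BlockToeplitz N α m X) :
    ∀ (n : ℕ) (r s : Fin N) (i : Fin (α r)) (k : Fin (α s)) (p : Fin (m r)) (q : Fin (m s)),
      (k : ℕ) = n → (k : ℕ) < (i : ℕ) → X ⟨r, (i, p)⟩ ⟨s, (k, q)⟩ = 0 := by
  intro n
  induction n with
  | zero =>
    intro r s i k p q hk hlt
    exact hX.2.1 r s i k p q (by omega) hk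
  | succ n ih =>
    intro r s i k p q hk hlt
    have hi' : (i : ℕ) - 1 < α r := by have := i.isLt; omega
    have hk' : (k : ℕ) - 1 < α s := by have := k.isLt; omega
    have step := hX.1 r s ⟨(i : ℕ) - 1, hi'⟩ i ⟨(k : ℕ) - 1, hk'⟩ k p q
      (by simp only [fin_mk_val]; omega) (by simp only [fin_mk_val]; omega)
    rw [step]
    exact ih r s _ _ p q (by simp only [fin_mk_val]; omega) (by simp only [fin_mk_val]; omega)

lemma bt_zero_lt {X : Matrix (Idx N α m) (Idx N α m) ℂ} (hX : BlockToeplitz N α m X)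
    {r s : Fin N} {i : Fin (α r)} {k : Fin (α s)} (p : Fin (m r)) (q : Fin (m s))
    (h : (k : ℕ) < (i : ℕ)) : X ⟨r, (i, p)⟩ ⟨s, (k, q)⟩ = 0 :=
  bt_lower_zero hX (k : ℕ) r s i k p q rfl h

/-- L2: entries on diagonals above `α s - α r` vanish. -/
lemma bt_upper_zero {X : Matrix (Idx N α m) (Idx N α m) ℂ} (hX : BlockToeplitz N α m X) :
    ∀ (n : ℕ) (r s : Fin N) (i : Fin (α r)) (k : Fin (α s)) (p : Fin (m r)) (q : Fin (m s)),
      α r - 1 - (i : ℕ) = n → (k : ℕ) + α r < (i : ℕ) + α s → X ⟨r, (i, p)⟩ ⟨s, (k, q)⟩ = 0 := by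
  intro n
  induction n with
  | zero =>
    intro r s i k p q hn hlt
    have hi := i.isLt
    exact hX.2.2 r s i k p q (by omega) (by omega)
  | succ n ih =>
    intro r s i k p q hn hlt
    have hi := i.isLt
    have hk := k.isLt
    have hi' : (i : ℕ) + 1 < α r := by omega
    have hk' : (k : ℕ) + 1 < α s := by omega
    have step := hX.1 r s i ⟨(i : ℕ) + 1, hi'⟩ k ⟨(k : ℕ) + 1, hk'⟩ p q
      (by simp only [fin_mk_val]) (by simp only [fin_mk_val])
    rw [← step]
    exact ih r s _ _ p q (by simp only [fin_mk_val]; omega) (by simp only [fin_mk_val]; omega)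

lemma bt_zero_diag {X : Matrix (Idx N α m) (Idx N α m) ℂ} (hX : BlockToeplitz N α m X)
    {r s : Fin N} {i : Fin (α r)} {k : Fin (α s)} (p : Fin (m r)) (q : Fin (m s))
    (h : (k : ℕ) + α r < (i : ℕ) + α s) : X ⟨r, (i, p)⟩ ⟨s, (k, q)⟩ = 0 :=
  bt_upper_zero hX (α r - 1 - (i : ℕ)) r s i k p q rfl h

/-- The diagonal `m r × m r` sub-block of `X` at position `(r, i)`. -/
def dsub (X : Matrix (Idx N α m) (Idx N α m) ℂ) (r : Fin N) (i : Fin (α r)) :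
    Matrix (Fin (m r)) (Fin (m r)) ℂ :=
  Matrix.of fun p q => X ⟨r, (i, p)⟩ ⟨r, (i, q)⟩

lemma dsub_apply (X : Matrix (Idx N α m) (Idx N α m) ℂ) (r : Fin N) (i : Fin (α r))
    (p q : Fin (m r)) : dsub X r i p q = X ⟨r, (i, p)⟩ ⟨r, (i, q)⟩ := rfl

/-- L3: the diagonal sub-blocks of a block-Toeplitz matrix are constant along `i`. -/
lemma bt_dsub_const {X : Matrix (Idx N α m) (Idx N α m) ℂ} (hX : BlockToeplitz N α m X)
    (r : Fin N) (i j : Fin (α r)) : dsub X r i = dsub X r j := by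
  suffices h : ∀ (n : ℕ) (i : Fin (α r)), (i : ℕ) = n → ∀ i0 : Fin (α r), (i0 : ℕ) = 0 →
      dsub X r i = dsub X r i0 by
    have h0 : (0 : ℕ) < α r := by have := i.isLt; omega
    rw [h (i : ℕ) i rfl ⟨0, h0⟩ rfl, h (j : ℕ) j rfl ⟨0, h0⟩ rfl]
  intro n
  induction n with
  | zero =>
    intro i hi i0 h0
    have : i = i0 := Fin.ext (by omega)
    rw [this]
  | succ n ih =>
    intro i hi i0 h0
    have hi' : (i : ℕ) - 1 < α r := by have := i.isLt; omega
    have : dsub X r i = dsub X r ⟨(i : ℕ) - 1, hi'⟩ := by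
      ext p q
      rw [dsub_apply, dsub_apply]
      exact hX.1 r r ⟨(i : ℕ) - 1, hi'⟩ i ⟨(i : ℕ) - 1, hi'⟩ i p q
        (by simp only [fin_mk_val]; omega) (by simp only [fin_mk_val]; omega)
    rw [this]
    exact ih _ (by simp only [fin_mk_val]; omega) i0 h0

/-- KEY: diagonal sub-blocks multiply for products of block-Toeplitz matrices. -/
lemma dsub_mul (hinj : ∀ r s : Fin N, r ≠ s → α r ≠ α s)
    {X Y : Matrix (Idx N α m) (Idx N α m) ℂ} (hX : BlockToeplitz N α m X)
    (hY : BlockToeplitz N α m Y) (r : Fin N) (i : Fin (α r)) :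
    dsub (X * Y) r i = dsub X r i * dsub Y r i := by
  ext p q
  rw [dsub_apply, Matrix.mul_apply, Matrix.mul_apply, sum_idx_single r i]
  · exact Finset.sum_congr rfl fun t _ => rfl
  · intro s k t hsk
    rcases Nat.lt_trichotomy (k : ℕ) (i : ℕ) with hlt | heq | hgt
    · rw [bt_zero_lt hX p t hlt, zero_mul]
    · have hsr : s ≠ r := fun h => hsk ⟨h, heq⟩
      rcases (hinj s r hsr).lt_or_gt with ha | ha
      · rw [bt_zero_diag hY t q (by omega), mul_zero]
      · rw [bt_zero_diag hX p t (by omega), zero_mul]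
    · rw [bt_zero_lt hY t q hgt, mul_zero]

end Aux4
section Aux5
variable {N : ℕ} {α m : Fin N → ℕ}

lemma FF_cancel (Z : Matrix (Idx N α m) (Idx N α m) ℂ) :
    Fcal N α m * (Fcal N α m * Z) = Z := by
  rw [← mul_assoc, Fcal_invol, one_mul]

lemma rel_one (B : ∀ r, Matrix (Fin (m r)) (Fin (m r)) ℂ) :
    Fcal N α m * (1 : Matrix (Idx N α m) (Idx N α m) ℂ)ᵀ * Fcal N α m * BcalOf N α m B * 1 =
      BcalOf N α m B := by
  rw [Matrix.transpose_one, mul_one, mul_one, Fcal_invol, one_mul]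

lemma rel_mul {X Y : Matrix (Idx N α m) (Idx N α m) ℂ}
    (B : ∀ r, Matrix (Fin (m r)) (Fin (m r)) ℂ)
    (hX : Fcal N α m * Xᵀ * Fcal N α m * BcalOf N α m B * X = BcalOf N α m B)
    (hY : Fcal N α m * Yᵀ * Fcal N α m * BcalOf N α m B * Y = BcalOf N α m B) :
    Fcal N α m * (X * Y)ᵀ * Fcal N α m * BcalOf N α m B * (X * Y) = BcalOf N α m B := by
  have e : Fcal N α m * (X * Y)ᵀ * Fcal N α m * BcalOf N α m B * (X * Y) =
      Fcal N α m * Yᵀ * Fcal N α m * (Fcal N α m * Xᵀ * Fcal N α m * BcalOf N α m B * X) * Y := by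
    rw [Matrix.transpose_mul]
    simp only [mul_assoc, FF_cancel]
  rw [e, hX, hY]

lemma rel_inv {X : Matrix (Idx N α m) (Idx N α m) ℂ}
    (B : ∀ r, Matrix (Fin (m r)) (Fin (m r)) ℂ) (hu : IsUnit X)
    (hX : Fcal N α m * Xᵀ * Fcal N α m * BcalOf N α m B * X = BcalOf N α m B) :
    Fcal N α m * (X⁻¹)ᵀ * Fcal N α m * BcalOf N α m B * X⁻¹ = BcalOf N α m B := by
  have hd : IsUnit X.det := (Matrix.isUnit_iff_isUnit_det X).mp hu
  have hdT : IsUnit Xᵀ.det := by rwa [Matrix.det_transpose]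
  have hP : (Fcal N α m * (Xᵀ)⁻¹ * Fcal N α m) * (Fcal N α m * Xᵀ * Fcal N α m) = 1 := by
    have e : (Fcal N α m * (Xᵀ)⁻¹ * Fcal N α m) * (Fcal N α m * Xᵀ * Fcal N α m) =
        Fcal N α m * ((Xᵀ)⁻¹ * Xᵀ) * Fcal N α m := by
      simp only [mul_assoc, FF_cancel]
    rw [e, Matrix.nonsing_inv_mul _ hdT, mul_one, Fcal_invol]
  rw [Matrix.transpose_nonsing_inv]
  calc Fcal N α m * (Xᵀ)⁻¹ * Fcal N α m * BcalOf N α m B * X⁻¹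
      = Fcal N α m * (Xᵀ)⁻¹ * Fcal N α m *
        (Fcal N α m * Xᵀ * Fcal N α m * BcalOf N α m B * X) * X⁻¹ := by rw [hX]
    _ = ((Fcal N α m * (Xᵀ)⁻¹ * Fcal N α m) * (Fcal N α m * Xᵀ * Fcal N α m)) *
        (BcalOf N α m B * (X * X⁻¹)) := by simp only [mul_assoc]
    _ = BcalOf N α m B := by
        rw [hP, one_mul, Matrix.mul_nonsing_inv _ hd, mul_one]

lemma isUnit_of_inv_rel {X : Matrix (Idx N α m) (Idx N α m) ℂ} {Y : Matrix (Idx N α m) (Idx N α m) ℂ}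
    (h1 : X * Y = 1) (h2 : Y * X = 1) : IsUnit X := ⟨⟨X, Y, h1, h2⟩, rfl⟩

lemma isUnit_inv_of_isUnit {X : Matrix (Idx N α m) (Idx N α m) ℂ} (hu : IsUnit X) :
    IsUnit X⁻¹ := by
  have hd : IsUnit X.det := (Matrix.isUnit_iff_isUnit_det X).mp hu
  exact isUnit_of_inv_rel (Matrix.nonsing_inv_mul _ hd) (Matrix.mul_nonsing_inv _ hd)

lemma isUnit_Q_of_conj {k : ℕ} {Q B : Matrix (Fin k) (Fin k) ℂ} (hB : IsUnit B)
    (h : Qᵀ * B * Q = B) : IsUnit Q := by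
  have hdB : IsUnit B.det := (Matrix.isUnit_iff_isUnit_det B).mp hB
  have hd : Q.det * B.det * Q.det = B.det := by
    have h2 := congrArg Matrix.det h
    rwa [Matrix.det_mul, Matrix.det_mul, Matrix.det_transpose] at h2
  rw [Matrix.isUnit_iff_isUnit_det, isUnit_iff_ne_zero]
  intro h0
  rw [h0, zero_mul, zero_mul] at hd
  exact hdB.ne_zero hd.symm

lemma bt_diagRep (Q : ∀ r, Matrix (Fin (m r)) (Fin (m r)) ℂ) :
    BlockToeplitz N α m (diagRep N α m Q) := by
  refine ⟨?_, ?_, ?_⟩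
  · intro r s i i' j j' p q hi hj
    by_cases hrs : r = s
    · subst hrs
      rw [diagRep_eq_bdiag, bdiag_apply_same, bdiag_apply_same]
      exact if_congr (by omega) rfl rfl
    · rw [diagRep_eq_bdiag, bdiag_apply_ne _ (fun hc => hrs hc.1),
        bdiag_apply_ne _ (fun hc => hrs hc.1)]
  · intro r s i j p q hi hj
    by_cases hrs : r = s
    · subst hrs
      rw [diagRep_eq_bdiag, bdiag_apply_same, if_neg (by omega)]
    · rw [diagRep_eq_bdiag, bdiag_apply_ne _ (fun hc => hrs hc.1)]
  · intro r s i j p q hi hj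
    by_cases hrs : r = s
    · subst hrs
      rw [diagRep_eq_bdiag, bdiag_apply_same, if_neg (by omega)]
    · rw [diagRep_eq_bdiag, bdiag_apply_ne _ (fun hc => hrs hc.1)]

lemma dsub_diagRep (Q : ∀ r, Matrix (Fin (m r)) (Fin (m r)) ℂ) (r : Fin N) (i : Fin (α r)) :
    dsub (diagRep N α m Q) r i = Q r := by
  ext p q
  rw [dsub_apply, diagRep_eq_bdiag, bdiag_apply_same, if_pos rfl]

lemma dsub_one (r : Fin N) (i : Fin (α r)) :
    dsub (1 : Matrix (Idx N α m) (Idx N α m) ℂ) r i = 1 := by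
  ext p q
  rw [dsub_apply, one_apply_idx, Matrix.one_apply]
  exact if_congr ⟨fun h => Fin.ext h.2.2, fun h => ⟨rfl, rfl, congrArg _ h⟩⟩ rfl rfl

lemma diagRep_mul_inv {Q : ∀ r, Matrix (Fin (m r)) (Fin (m r)) ℂ} (h : ∀ r, IsUnit (Q r)) :
    diagRep N α m Q * diagRep N α m (fun r => (Q r)⁻¹) = 1 := by
  rw [diagRep_mul]
  have e : (fun r => Q r * (Q r)⁻¹) = fun _ : Fin N => (1 : Matrix _ _ ℂ) :=
    funext fun r => Matrix.mul_nonsing_inv _ ((Matrix.isUnit_iff_isUnit_det _).mp (h r))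
  rw [e, diagRep_one]

lemma diagRep_inv_mul {Q : ∀ r, Matrix (Fin (m r)) (Fin (m r)) ℂ} (h : ∀ r, IsUnit (Q r)) :
    diagRep N α m (fun r => (Q r)⁻¹) * diagRep N α m Q = 1 := by
  rw [diagRep_mul]
  have e : (fun r => (Q r)⁻¹ * Q r) = fun _ : Fin N => (1 : Matrix _ _ ℂ) :=
    funext fun r => Matrix.nonsing_inv_mul _ ((Matrix.isUnit_iff_isUnit_det _).mp (h r))
  rw [e, diagRep_one]

lemma isUnit_diagRep {Q : ∀ r, Matrix (Fin (m r)) (Fin (m r)) ℂ} (h : ∀ r, IsUnit (Q r)) :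
    IsUnit (diagRep N α m Q) :=
  isUnit_of_inv_rel (diagRep_mul_inv h) (diagRep_inv_mul h)

lemma diagRep_inv {Q : ∀ r, Matrix (Fin (m r)) (Fin (m r)) ℂ} (h : ∀ r, IsUnit (Q r)) :
    (diagRep N α m Q)⁻¹ = diagRep N α m (fun r => (Q r)⁻¹) :=
  Matrix.inv_eq_right_inv (diagRep_mul_inv h)

lemma rel_diagRep (B Q : ∀ r, Matrix (Fin (m r)) (Fin (m r)) ℂ)
    (hQ : ∀ r, (Q r)ᵀ * B r * Q r = B r) :
    Fcal N α m * (diagRep N α m Q)ᵀ * Fcal N α m * BcalOf N α m B * diagRep N α m Q =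
      BcalOf N α m B := by
  rw [diagRep_transpose]
  have e1 : Fcal N α m * diagRep N α m (fun r => (Q r)ᵀ) * Fcal N α m =
      diagRep N α m (fun r => (Q r)ᵀ) := by
    rw [Fcal_comm_diagRep, mul_assoc, Fcal_invol, mul_one]
  rw [e1, Bcal_eq_bdiag, diagRep_eq_bdiag, diagRep_eq_bdiag, bdiag_mul_bdiag, bdiag_mul_bdiag]
  refine congrArg (bdiag N α m) ?_
  funext r i
  rw [Matrix.mul_smul, Matrix.smul_mul, hQ r]
end Aux5
section Aux6
variable {N : ℕ} {α m : Fin N → ℕ}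

lemma rel_dsub (hα : ∀ r, 0 < α r) (hinj : ∀ r s : Fin N, r ≠ s → α r ≠ α s)
    {X : Matrix (Idx N α m) (Idx N α m) ℂ} (B : ∀ r, Matrix (Fin (m r)) (Fin (m r)) ℂ)
    (hX : BlockToeplitz N α m X)
    (hrel : Fcal N α m * Xᵀ * Fcal N α m * BcalOf N α m B * X = BcalOf N α m B)
    (r : Fin N) :
    (dsub X r ⟨0, hα r⟩)ᵀ * B r * dsub X r ⟨0, hα r⟩ = B r := by
  set i0 : Fin (α r) := ⟨0, hα r⟩ with hi0
  set la : Fin (α r) := ⟨α r - 1, by have := hα r; omega⟩ with hla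
  set D0 := dsub X r i0 with hD0
  have hlav : (la : ℕ) = α r - 1 := rfl
  have hrv : (la.rev : ℕ) = 0 := by rw [Fin.val_rev]; have := hα r; simp only [hla]; omega
  have hrev0 : la.rev = i0 := Fin.ext (by rw [hrv])
  have hdc : dsub X r la = D0 := bt_dsub_const hX r la i0
  have hXe : ∀ (u q' : Fin (m r)), X ⟨r, (la, u)⟩ ⟨r, (la, q')⟩ = D0 u q' :=
    fun u q' => congrFun (congrFun hdc u) q'
  have hrel' : (Fcal N α m * Xᵀ * Fcal N α m) * (BcalOf N α m B * X) = BcalOf N α m B := by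
    rw [show (Fcal N α m * Xᵀ * Fcal N α m) * (BcalOf N α m B * X) =
      Fcal N α m * Xᵀ * Fcal N α m * BcalOf N α m B * X from by simp only [mul_assoc]]
    exact hrel
  have eA : ∀ (s : Fin N) (k : Fin (α s)) (t : Fin (m s)) (p : Fin (m r)),
      (Fcal N α m * Xᵀ * Fcal N α m) ⟨r, (la, p)⟩ ⟨s, (k, t)⟩ =
        X ⟨s, (k.rev, t)⟩ ⟨r, (la.rev, p)⟩ := by
    intro s k t p
    rw [mul_Fcal_apply, Fcal_mul_apply, Matrix.transpose_apply]
  ext p q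
  have h := congrFun (congrFun hrel' ⟨r, (la, p)⟩) ⟨r, (la, q)⟩
  rw [Matrix.mul_apply, sum_idx_single r la] at h
  · -- h : ∑ t, A * W = Bc entry
    have hsum : (∑ t, (Fcal N α m * Xᵀ * Fcal N α m) ⟨r, (la, p)⟩ ⟨r, (la, t)⟩ *
        (BcalOf N α m B * X) ⟨r, (la, t)⟩ ⟨r, (la, q)⟩) =
        ∑ t, D0 t p * ∑ u, (-1 : ℂ) ^ (la : ℕ) * B r t u * D0 u q := by
      refine Finset.sum_congr rfl fun t _ => ?_
      have e1 : (Fcal N α m * Xᵀ * Fcal N α m) ⟨r, (la, p)⟩ ⟨r, (la, t)⟩ = D0 t p := by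
        rw [eA r la t p, hrev0]; rfl
      have e2 : (BcalOf N α m B * X) ⟨r, (la, t)⟩ ⟨r, (la, q)⟩ =
          ∑ u, (-1 : ℂ) ^ (la : ℕ) * B r t u * D0 u q := by
        rw [Bcal_eq_bdiag, bdiag_mul_apply]
        exact Finset.sum_congr rfl fun u _ => by
          rw [Matrix.smul_apply, smul_eq_mul, hXe u q]
      rw [e1, e2]
    have eBc : BcalOf N α m B ⟨r, (la, p)⟩ ⟨r, (la, q)⟩ = (-1 : ℂ) ^ (la : ℕ) * B r p q := by
      rw [Bcal_eq_bdiag, bdiag_apply_same, if_pos rfl, Matrix.smul_apply, smul_eq_mul]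
    rw [hsum, eBc] at h
    -- conclude
    have hL : ((-1 : ℂ) ^ (la : ℕ)) ≠ 0 := pow_ne_zero _ (by norm_num)
    apply mul_left_cancel₀ hL
    have e3 : (D0ᵀ * B r * D0) p q = ∑ j, (∑ t, D0 t p * B r t j) * D0 j q := by
      simp only [Matrix.mul_apply, Matrix.transpose_apply]
    rw [e3]
    have key : (-1 : ℂ) ^ (la : ℕ) * ∑ j, (∑ t, D0 t p * B r t j) * D0 j q =
        ∑ t, D0 t p * ∑ u, (-1 : ℂ) ^ (la : ℕ) * B r t u * D0 u q := by
      simp only [Finset.mul_sum, Finset.sum_mul]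
      rw [Finset.sum_comm]
      exact Finset.sum_congr rfl fun t _ => Finset.sum_congr rfl fun j _ => by ring
    rw [key, h]
  · -- off terms vanish
    intro s k t hsk
    rw [eA s k t p]
    by_cases h0 : 0 < (k.rev : ℕ)
    · rw [bt_zero_lt hX t p (by omega), zero_mul]
    · have hkrev := Fin.val_rev k
      have hks := k.isLt
      have hsr : s ≠ r := by
        intro hh
        subst hh
        exact hsk ⟨rfl, by simp only [hlav]; omega⟩
      rcases (hinj s r hsr).lt_or_gt with ha | ha
      · rw [bt_zero_diag hX t p (by omega), zero_mul]
      · have hW : (BcalOf N α m B * X) ⟨s, (k, t)⟩ ⟨r, (la, q)⟩ = 0 := by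
          rw [Bcal_eq_bdiag, bdiag_mul_apply]
          refine Finset.sum_eq_zero fun u _ => ?_
          rw [bt_zero_lt hX u q (by simp only [hlav]; omega), mul_zero]
        rw [hW, mul_zero]

end Aux6
end Aux2
end AuxS

/-- `𝕏 = {𝒳 ∈ 𝕋^{α,μ} : 𝓕𝒳ᵀ𝓕𝓑𝒳 = 𝓑}` is a subgroup of `GL_n(ℂ)`,
`𝕆` and `𝕍` are subgroups of `𝕏`, `𝕍` is normal in `𝕏`, `𝕆 ∩ 𝕍 = {I}`, and every
`𝒳 ∈ 𝕏` factors uniquely as `𝒳 = 𝒬𝒱` with `𝒬 ∈ 𝕆`, `𝒱 ∈ 𝕍`: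
`𝕏 = 𝕆 ⋉ 𝕍` is a semidirect product. -/
theorem stmt4 (N : ℕ) (hN : 0 < N) (α m : Fin N → ℕ)
    (hmono : ∀ r s : Fin N, r < s → α s < α r)
    (hα : ∀ r, 0 < α r) (hm : ∀ r, 0 < m r)
    (B : ∀ r, Matrix (Fin (m r)) (Fin (m r)) ℂ) (hBunit : ∀ r, IsUnit (B r))
    (hBsym : ∀ r, Odd (α r) → (B r)ᵀ = B r)
    (hBskew : ∀ r, Even (α r) → (B r)ᵀ = -B r) :
    (1 ∈ {X : Matrix ((r : Fin N) × (Fin (α r) × Fin (m r)))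
          ((r : Fin N) × (Fin (α r) × Fin (m r))) ℂ |
        (IsUnit X ∧ BlockToeplitz N α m X) ∧
        Fcal N α m * Xᵀ * Fcal N α m * BcalOf N α m B * X = BcalOf N α m B}) ∧
    (∀ X Y, X ∈ {X | (IsUnit X ∧ BlockToeplitz N α m X) ∧
          Fcal N α m * Xᵀ * Fcal N α m * BcalOf N α m B * X = BcalOf N α m B} →
        Y ∈ {X | (IsUnit X ∧ BlockToeplitz N α m X) ∧
          Fcal N α m * Xᵀ * Fcal N α m * BcalOf N α m B * X = BcalOf N α m B} →
        X * Y ∈ {X | (IsUnit X ∧ BlockToeplitz N α m X) ∧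
          Fcal N α m * Xᵀ * Fcal N α m * BcalOf N α m B * X = BcalOf N α m B}) ∧
    (∀ X, X ∈ {X | (IsUnit X ∧ BlockToeplitz N α m X) ∧
          Fcal N α m * Xᵀ * Fcal N α m * BcalOf N α m B * X = BcalOf N α m B} →
        X⁻¹ ∈ {X | (IsUnit X ∧ BlockToeplitz N α m X) ∧
          Fcal N α m * Xᵀ * Fcal N α m * BcalOf N α m B * X = BcalOf N α m B}) ∧
    ({X | ∃ Q : ∀ r, Matrix (Fin (m r)) (Fin (m r)) ℂ,
          (∀ r, (Q r)ᵀ * B r * Q r = B r) ∧ X = diagRep N α m Q} ⊆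
      {X | (IsUnit X ∧ BlockToeplitz N α m X) ∧
        Fcal N α m * Xᵀ * Fcal N α m * BcalOf N α m B * X = BcalOf N α m B}) ∧
    (1 ∈ {X | ∃ Q : ∀ r, Matrix (Fin (m r)) (Fin (m r)) ℂ,
          (∀ r, (Q r)ᵀ * B r * Q r = B r) ∧ X = diagRep N α m Q}) ∧
    (∀ X Y, X ∈ {X | ∃ Q : ∀ r, Matrix (Fin (m r)) (Fin (m r)) ℂ,
          (∀ r, (Q r)ᵀ * B r * Q r = B r) ∧ X = diagRep N α m Q} →
        Y ∈ {X | ∃ Q : ∀ r, Matrix (Fin (m r)) (Fin (m r)) ℂ,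
          (∀ r, (Q r)ᵀ * B r * Q r = B r) ∧ X = diagRep N α m Q} →
        X * Y ∈ {X | ∃ Q : ∀ r, Matrix (Fin (m r)) (Fin (m r)) ℂ,
          (∀ r, (Q r)ᵀ * B r * Q r = B r) ∧ X = diagRep N α m Q}) ∧
    (∀ X, X ∈ {X | ∃ Q : ∀ r, Matrix (Fin (m r)) (Fin (m r)) ℂ,
          (∀ r, (Q r)ᵀ * B r * Q r = B r) ∧ X = diagRep N α m Q} →
        X⁻¹ ∈ {X | ∃ Q : ∀ r, Matrix (Fin (m r)) (Fin (m r)) ℂ,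
          (∀ r, (Q r)ᵀ * B r * Q r = B r) ∧ X = diagRep N α m Q}) ∧
    (1 ∈ {X | ((IsUnit X ∧ BlockToeplitz N α m X) ∧
          Fcal N α m * Xᵀ * Fcal N α m * BcalOf N α m B * X = BcalOf N α m B) ∧
        ∀ (r : Fin N) (i : Fin (α r)) (p q : Fin (m r)),
          X ⟨r, i, p⟩ ⟨r, i, q⟩ = if p = q then 1 else 0}) ∧
    (∀ X Y, X ∈ {X | ((IsUnit X ∧ BlockToeplitz N α m X) ∧
          Fcal N α m * Xᵀ * Fcal N α m * BcalOf N α m B * X = BcalOf N α m B) ∧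
        ∀ (r : Fin N) (i : Fin (α r)) (p q : Fin (m r)),
          X ⟨r, i, p⟩ ⟨r, i, q⟩ = if p = q then 1 else 0} →
        Y ∈ {X | ((IsUnit X ∧ BlockToeplitz N α m X) ∧
          Fcal N α m * Xᵀ * Fcal N α m * BcalOf N α m B * X = BcalOf N α m B) ∧
        ∀ (r : Fin N) (i : Fin (α r)) (p q : Fin (m r)),
          X ⟨r, i, p⟩ ⟨r, i, q⟩ = if p = q then 1 else 0} →
        X * Y ∈ {X | ((IsUnit X ∧ BlockToeplitz N α m X) ∧
          Fcal N α m * Xᵀ * Fcal N α m * BcalOf N α m B * X = BcalOf N α m B) ∧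
        ∀ (r : Fin N) (i : Fin (α r)) (p q : Fin (m r)),
          X ⟨r, i, p⟩ ⟨r, i, q⟩ = if p = q then 1 else 0}) ∧
    (∀ X, X ∈ {X | ((IsUnit X ∧ BlockToeplitz N α m X) ∧
          Fcal N α m * Xᵀ * Fcal N α m * BcalOf N α m B * X = BcalOf N α m B) ∧
        ∀ (r : Fin N) (i : Fin (α r)) (p q : Fin (m r)),
          X ⟨r, i, p⟩ ⟨r, i, q⟩ = if p = q then 1 else 0} →
        X⁻¹ ∈ {X | ((IsUnit X ∧ BlockToeplitz N α m X) ∧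
          Fcal N α m * Xᵀ * Fcal N α m * BcalOf N α m B * X = BcalOf N α m B) ∧
        ∀ (r : Fin N) (i : Fin (α r)) (p q : Fin (m r)),
          X ⟨r, i, p⟩ ⟨r, i, q⟩ = if p = q then 1 else 0}) ∧
    (∀ X V, X ∈ {X | (IsUnit X ∧ BlockToeplitz N α m X) ∧
          Fcal N α m * Xᵀ * Fcal N α m * BcalOf N α m B * X = BcalOf N α m B} →
        V ∈ {X | ((IsUnit X ∧ BlockToeplitz N α m X) ∧
          Fcal N α m * Xᵀ * Fcal N α m * BcalOf N α m B * X = BcalOf N α m B) ∧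
        ∀ (r : Fin N) (i : Fin (α r)) (p q : Fin (m r)),
          X ⟨r, i, p⟩ ⟨r, i, q⟩ = if p = q then 1 else 0} →
        X * V * X⁻¹ ∈ {X | ((IsUnit X ∧ BlockToeplitz N α m X) ∧
          Fcal N α m * Xᵀ * Fcal N α m * BcalOf N α m B * X = BcalOf N α m B) ∧
        ∀ (r : Fin N) (i : Fin (α r)) (p q : Fin (m r)),
          X ⟨r, i, p⟩ ⟨r, i, q⟩ = if p = q then 1 else 0}) ∧
    ({X | ∃ Q : ∀ r, Matrix (Fin (m r)) (Fin (m r)) ℂ,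
          (∀ r, (Q r)ᵀ * B r * Q r = B r) ∧ X = diagRep N α m Q} ∩
      {X | ((IsUnit X ∧ BlockToeplitz N α m X) ∧
          Fcal N α m * Xᵀ * Fcal N α m * BcalOf N α m B * X = BcalOf N α m B) ∧
        ∀ (r : Fin N) (i : Fin (α r)) (p q : Fin (m r)),
          X ⟨r, i, p⟩ ⟨r, i, q⟩ = if p = q then 1 else 0} = {1}) ∧
    (∀ X, X ∈ {X | (IsUnit X ∧ BlockToeplitz N α m X) ∧
          Fcal N α m * Xᵀ * Fcal N α m * BcalOf N α m B * X = BcalOf N α m B} →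
        ∃! P : Matrix ((r : Fin N) × (Fin (α r) × Fin (m r)))
              ((r : Fin N) × (Fin (α r) × Fin (m r))) ℂ ×
            Matrix ((r : Fin N) × (Fin (α r) × Fin (m r)))
              ((r : Fin N) × (Fin (α r) × Fin (m r))) ℂ,
          P.1 ∈ {X | ∃ Q : ∀ r, Matrix (Fin (m r)) (Fin (m r)) ℂ,
              (∀ r, (Q r)ᵀ * B r * Q r = B r) ∧ X = diagRep N α m Q} ∧
          P.2 ∈ {X | ((IsUnit X ∧ BlockToeplitz N α m X) ∧
              Fcal N α m * Xᵀ * Fcal N α m * BcalOf N α m B * X = BcalOf N α m B) ∧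
            ∀ (r : Fin N) (i : Fin (α r)) (p q : Fin (m r)),
              X ⟨r, i, p⟩ ⟨r, i, q⟩ = if p = q then 1 else 0} ∧
          X = P.1 * P.2) := by
  have hinj : ∀ r s : Fin N, r ≠ s → α r ≠ α s := by
    intro r s hrs
    rcases lt_or_gt_of_ne hrs with h | h
    · exact (hmono r s h).ne'
    · exact (hmono s r h).ne
  -- abbreviations for the three membership predicates
  set 𝕏 : Set (Matrix (Idx N α m) (Idx N α m) ℂ) :=
    {X | (IsUnit X ∧ BlockToeplitz N α m X) ∧
      Fcal N α m * Xᵀ * Fcal N α m * BcalOf N α m B * X = BcalOf N α m B} with h𝕏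
  set 𝕆 : Set (Matrix (Idx N α m) (Idx N α m) ℂ) :=
    {X | ∃ Q : ∀ r, Matrix (Fin (m r)) (Fin (m r)) ℂ,
      (∀ r, (Q r)ᵀ * B r * Q r = B r) ∧ X = diagRep N α m Q} with h𝕆
  have hXone : (1 : Matrix (Idx N α m) (Idx N α m) ℂ) ∈ 𝕏 := ⟨⟨isUnit_one, bt_one⟩, rel_one B⟩
  have hXmul : ∀ X Y, X ∈ 𝕏 → Y ∈ 𝕏 → X * Y ∈ 𝕏 := by
    rintro X Y ⟨⟨hxu, hxt⟩, hxr⟩ ⟨⟨hyu, hyt⟩, hyr⟩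
    exact ⟨⟨hxu.mul hyu, bt_mul hxt hyt⟩, rel_mul B hxr hyr⟩
  have hXinv : ∀ X, X ∈ 𝕏 → X⁻¹ ∈ 𝕏 := by
    rintro X ⟨⟨hu, ht⟩, hr⟩
    exact ⟨⟨isUnit_inv_of_isUnit hu, bt_inv ht hu⟩, rel_inv B hu hr⟩
  have hOsub : 𝕆 ⊆ 𝕏 := by
    rintro X ⟨Q, hQ, rfl⟩
    exact ⟨⟨isUnit_diagRep (fun r => isUnit_Q_of_conj (hBunit r) (hQ r)), bt_diagRep Q⟩,
      rel_diagRep B Q hQ⟩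
  have hOone : (1 : Matrix (Idx N α m) (Idx N α m) ℂ) ∈ 𝕆 :=
    ⟨fun _ => 1, fun r => by rw [Matrix.transpose_one, one_mul, mul_one], diagRep_one.symm⟩
  have hOmul : ∀ X Y, X ∈ 𝕆 → Y ∈ 𝕆 → X * Y ∈ 𝕆 := by
    rintro X Y ⟨Q, hQ, rfl⟩ ⟨Q', hQ', rfl⟩
    refine ⟨fun r => Q r * Q' r, fun r => ?_, diagRep_mul Q Q'⟩
    rw [Matrix.transpose_mul]
    calc (Q' r)ᵀ * (Q r)ᵀ * B r * (Q r * Q' r)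
        = (Q' r)ᵀ * ((Q r)ᵀ * B r * Q r) * Q' r := by simp only [mul_assoc]
      _ = B r := by rw [hQ r, hQ' r]
  have hOinv : ∀ X, X ∈ 𝕆 → X⁻¹ ∈ 𝕆 := by
    rintro X ⟨Q, hQ, rfl⟩
    have hu : ∀ r, IsUnit (Q r) := fun r => isUnit_Q_of_conj (hBunit r) (hQ r)
    refine ⟨fun r => (Q r)⁻¹, fun r => ?_, diagRep_inv hu⟩
    have hd : IsUnit (Q r).det := (Matrix.isUnit_iff_isUnit_det _).mp (hu r)
    have hdT : IsUnit (Q r)ᵀ.det := by rwa [Matrix.det_transpose]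
    rw [Matrix.transpose_nonsing_inv]
    calc ((Q r)ᵀ)⁻¹ * B r * (Q r)⁻¹
        = ((Q r)ᵀ)⁻¹ * ((Q r)ᵀ * B r * Q r) * (Q r)⁻¹ := by rw [hQ r]
      _ = (((Q r)ᵀ)⁻¹ * (Q r)ᵀ) * (B r * (Q r * (Q r)⁻¹)) := by simp only [mul_assoc]
      _ = B r := by
          rw [Matrix.nonsing_inv_mul _ hdT, Matrix.mul_nonsing_inv _ hd, one_mul, mul_one]
  -- translating the 𝕍 diagonal condition
  have hd_of : ∀ (X : Matrix (Idx N α m) (Idx N α m) ℂ),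
      (∀ (r : Fin N) (i : Fin (α r)) (p q : Fin (m r)),
        X ⟨r, i, p⟩ ⟨r, i, q⟩ = if p = q then 1 else 0) →
      ∀ (r : Fin N) (i : Fin (α r)), dsub X r i = 1 := by
    intro X h r i
    ext p q
    rw [dsub_apply, h r i p q, Matrix.one_apply]
  have hof_d : ∀ (X : Matrix (Idx N α m) (Idx N α m) ℂ),
      (∀ (r : Fin N) (i : Fin (α r)), dsub X r i = 1) →
      ∀ (r : Fin N) (i : Fin (α r)) (p q : Fin (m r)),
        X ⟨r, i, p⟩ ⟨r, i, q⟩ = if p = q then 1 else 0 := by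
    intro X h r i p q
    have h2 := congrFun (congrFun (h r i) p) q
    rw [dsub_apply] at h2
    rw [h2, Matrix.one_apply]
  have hVone : ∀ (r : Fin N) (i : Fin (α r)) (p q : Fin (m r)),
      (1 : Matrix (Idx N α m) (Idx N α m) ℂ) ⟨r, i, p⟩ ⟨r, i, q⟩ = if p = q then 1 else 0 :=
    hof_d 1 (fun r i => dsub_one r i)
  refine ⟨hXone, hXmul, hXinv, hOsub, hOone, hOmul, hOinv, ⟨hXone, hVone⟩, ?_, ?_, ?_, ?_, ?_⟩
  · -- 𝕍 closed under multiplication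
    rintro X Y ⟨hX𝕏, hXd⟩ ⟨hY𝕏, hYd⟩
    refine ⟨hXmul X Y hX𝕏 hY𝕏, hof_d _ (fun r i => ?_)⟩
    rw [dsub_mul hinj hX𝕏.1.2 hY𝕏.1.2, hd_of X hXd r i, hd_of Y hYd r i, one_mul]
  · -- 𝕍 closed under inverse
    rintro X ⟨hX𝕏, hXd⟩
    have hXi := hXinv X hX𝕏
    refine ⟨hXi, hof_d _ (fun r i => ?_)⟩
    have hd : IsUnit X.det := (Matrix.isUnit_iff_isUnit_det X).mp hX𝕏.1.1
    have h1 : dsub X r i * dsub X⁻¹ r i = 1 := by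
      rw [← dsub_mul hinj hX𝕏.1.2 hXi.1.2, Matrix.mul_nonsing_inv _ hd, dsub_one]
    rwa [hd_of X hXd r i, one_mul] at h1
  · -- normality
    rintro X V hX𝕏 ⟨hV𝕏, hVd⟩
    have hXi := hXinv X hX𝕏
    have hXV := hXmul X V hX𝕏 hV𝕏
    refine ⟨hXmul _ _ hXV hXi, hof_d _ (fun r i => ?_)⟩
    have hd : IsUnit X.det := (Matrix.isUnit_iff_isUnit_det X).mp hX𝕏.1.1
    rw [dsub_mul hinj hXV.1.2 hXi.1.2, dsub_mul hinj hX𝕏.1.2 hV𝕏.1.2,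
      hd_of V hVd r i, mul_one, ← dsub_mul hinj hX𝕏.1.2 hXi.1.2,
      Matrix.mul_nonsing_inv _ hd, dsub_one]
  · -- intersection is {1}
    ext X
    simp only [Set.mem_inter_iff, Set.mem_singleton_iff]
    constructor
    · rintro ⟨⟨Q, hQ, rfl⟩, -, hdiag⟩
      have hQ1 : ∀ r, Q r = 1 := by
        intro r
        have h1 := hd_of _ hdiag r ⟨0, hα r⟩
        rwa [dsub_diagRep] at h1
      calc diagRep N α m Q = diagRep N α m (fun _ => 1) :=
            congrArg (diagRep N α m) (funext hQ1)
        _ = 1 := diagRep_one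
    · rintro rfl
      exact ⟨hOone, hXone, hVone⟩
  · -- unique factorization
    rintro X hX𝕏
    obtain ⟨⟨hu, ht⟩, hr⟩ := hX𝕏
    set Q : ∀ r, Matrix (Fin (m r)) (Fin (m r)) ℂ := fun r => dsub X r ⟨0, hα r⟩ with hQdef
    have hQB : ∀ r, (Q r)ᵀ * B r * Q r = B r := fun r => rel_dsub hα hinj B ht hr r
    have hQu : ∀ r, IsUnit (Q r) := fun r => isUnit_Q_of_conj (hBunit r) (hQB r)
    have hGmem : diagRep N α m Q ∈ 𝕆 := ⟨Q, hQB, rfl⟩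
    have hG𝕏 := hOsub hGmem
    have hGu : IsUnit (diagRep N α m Q) := hG𝕏.1.1
    have hGd : IsUnit (diagRep N α m Q).det := (Matrix.isUnit_iff_isUnit_det _).mp hGu
    have hXGV : X = diagRep N α m Q * ((diagRep N α m Q)⁻¹ * X) := by
      rw [← mul_assoc, Matrix.mul_nonsing_inv _ hGd, one_mul]
    have hV𝕏 : (diagRep N α m Q)⁻¹ * X ∈ 𝕏 :=
      hXmul _ _ (hXinv _ hG𝕏) ⟨⟨hu, ht⟩, hr⟩
    have hVt : BlockToeplitz N α m ((diagRep N α m Q)⁻¹ * X) := hV𝕏.1.2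
    have hdsubX : ∀ (r : Fin N) (i : Fin (α r)), dsub X r i = Q r :=
      fun r i => bt_dsub_const ht r i ⟨0, hα r⟩
    have hVd : ∀ (r : Fin N) (i : Fin (α r)),
        dsub ((diagRep N α m Q)⁻¹ * X) r i = 1 := by
      intro r i
      have hq : IsUnit (Q r).det := (Matrix.isUnit_iff_isUnit_det _).mp (hQu r)
      have e : Q r * dsub ((diagRep N α m Q)⁻¹ * X) r i = Q r := by
        rw [← dsub_diagRep Q r i, ← dsub_mul hinj (bt_diagRep Q) hVt, ← hXGV,
          hdsubX r i, dsub_diagRep]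
      calc dsub ((diagRep N α m Q)⁻¹ * X) r i
          = (Q r)⁻¹ * (Q r * dsub ((diagRep N α m Q)⁻¹ * X) r i) := by
            rw [← mul_assoc, Matrix.nonsing_inv_mul _ hq, one_mul]
        _ = (Q r)⁻¹ * Q r := by rw [e]
        _ = 1 := Matrix.nonsing_inv_mul _ hq
    refine ⟨(diagRep N α m Q, (diagRep N α m Q)⁻¹ * X),
      ⟨hGmem, ⟨hV𝕏, hof_d _ hVd⟩, hXGV⟩, ?_⟩
    rintro ⟨P1, P2⟩ ⟨⟨Q', hQ'B, rfl⟩, ⟨hP2𝕏, hP2d⟩, hXeq⟩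
    have hQ'mem : diagRep N α m Q' ∈ 𝕆 := ⟨Q', hQ'B, rfl⟩
    have hQ'𝕏 := hOsub hQ'mem
    have hQQ' : Q' = Q := by
      funext r
      have e1 : dsub X r ⟨0, hα r⟩ =
          dsub (diagRep N α m Q') r ⟨0, hα r⟩ * dsub P2 r ⟨0, hα r⟩ := by
        rw [← dsub_mul hinj (bt_diagRep Q') hP2𝕏.1.2, ← hXeq]
      rw [dsub_diagRep, hd_of P2 hP2d, mul_one] at e1
      exact e1.symm
    have hP1G : diagRep N α m Q' = diagRep N α m Q := by rw [hQQ']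
    have hP2eq : P2 = (diagRep N α m Q)⁻¹ * X := by
      rw [hXeq, hP1G, ← mul_assoc, Matrix.nonsing_inv_mul _ hGd, one_mul]
    rw [Prod.mk.injEq]
    exact ⟨hP1G, hP2eq⟩

end
end

section
/- Let σ_1, …, σ_N be nonzero real numbers with σ_1², …, σ_N² pairwise distinct, let m_1, …, m_N ≥ 1 and M ≥ 0, and set n := M + 2(m_1 + … + m_N). Let K := ⊕_{j=1}^{N} (⊕_{k=1}^{m_j} [[0, σ_j], [−σ_j, 0]]) ⊕ 0_M, an n×n real skew-symmetric matrix (0_M the M×M zero matrix). Then there exists an n×n real permutation matrix P such that conjugation by P maps the group G := {Q ∈ M_n(ℝ) : QᵀQ = I and Qᵀ K Q = K} bijectively onto the set of all block diagonal real matrices (⊕_{j=1}^{N} [[Re U_j, Im U_j], [−Im U_j, Re U_j]]) ⊕ R, where U_j ranges over the unitary group U(m_j) and R ranges over the real orthogonal group O_M(ℝ). In particular, G is isomorphic as a group to (∏_{j=1}^{N} U(m_j)) × O_M(ℝ). -/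
open Matrix Complex

noncomputable section

/-- `K = ⊕_{j=1}^{N} (⊕_{k=1}^{m_j} [[0, σ_j], [-σ_j, 0]]) ⊕ 0_M`. -/
def Kreal (N : ℕ) (m : Fin N → ℕ) (M : ℕ) (σ : Fin N → ℝ) :
    Matrix (((j : Fin N) × (_k : Fin (m j)) × Fin 2) ⊕ Fin M)
      (((j : Fin N) × (_k : Fin (m j)) × Fin 2) ⊕ Fin M) ℝ :=
  Matrix.fromBlocks
    (Matrix.blockDiagonal' fun j =>
      Matrix.blockDiagonal' fun _ : Fin (m j) => !![0, σ j; -σ j, 0]) 0 0 0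

def Jm (m : ℕ) : Matrix (Fin m ⊕ Fin m) (Fin m ⊕ Fin m) ℝ :=
  Matrix.fromBlocks 0 1 (-1) 0

lemma Jm_mul_Jm (m : ℕ) : Jm m * Jm m = -1 := by
  rw [Jm, Matrix.fromBlocks_multiply, ← Matrix.fromBlocks_one, Matrix.fromBlocks_neg]
  simp

def eFin2 (m : ℕ) : ((_k : Fin m) × Fin 2) ≃ (Fin m ⊕ Fin m) where
  toFun x := if x.2 = 0 then Sum.inl x.1 else Sum.inr x.1
  invFun s := match s with | .inl k => ⟨k, 0⟩ | .inr k => ⟨k, 1⟩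
  left_inv := by rintro ⟨k, i⟩; fin_cases i <;> rfl
  right_inv := by rintro (k|k) <;> rfl

def eBig (N : ℕ) (m : Fin N → ℕ) (M : ℕ) :
    (((j : Fin N) × (_k : Fin (m j)) × Fin 2) ⊕ Fin M) ≃
      (((j : Fin N) × (Fin (m j) ⊕ Fin (m j))) ⊕ Fin M) :=
  Equiv.sumCongr (Equiv.sigmaCongrRight fun j => eFin2 (m j)) (Equiv.refl (Fin M))

def Smat (N : ℕ) (m : Fin N → ℕ) (σ : Fin N → ℝ) :
    Matrix ((j : Fin N) × (Fin (m j) ⊕ Fin (m j))) ((j : Fin N) × (Fin (m j) ⊕ Fin (m j))) ℝ :=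
  Matrix.blockDiagonal' fun j => σ j • Jm (m j)

lemma reindex_Kreal (N : ℕ) (m : Fin N → ℕ) (M : ℕ) (σ : Fin N → ℝ) :
    Matrix.reindex (eBig N m M) (eBig N m M) (Kreal N m M σ) =
      Matrix.fromBlocks (Smat N m σ) 0 0 0 := by
  ext i i'
  rcases i with ⟨j, s⟩ | r <;> rcases i' with ⟨j', s'⟩ | r' <;>
    simp only [Matrix.reindex_apply, Matrix.submatrix_apply, eBig, Equiv.sumCongr_symm,
      Equiv.sumCongr_apply, Equiv.refl_symm, Sum.map_inl, Sum.map_inr, Equiv.refl_apply,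
      Kreal, Matrix.fromBlocks_apply₁₁, Matrix.fromBlocks_apply₁₂, Matrix.fromBlocks_apply₂₁,
      Matrix.fromBlocks_apply₂₂, Matrix.zero_apply, Equiv.sigmaCongrRight_symm,
      Equiv.sigmaCongrRight_apply, Smat]
  by_cases h : j = j'
  · subst h
    rw [Matrix.blockDiagonal'_apply_eq, Matrix.blockDiagonal'_apply_eq]
    rcases s with k | k <;> rcases s' with k' | k' <;>
      by_cases hk : k = k' <;>
      simp [eFin2, Matrix.blockDiagonal'_apply, hk, Jm, Matrix.one_apply,
        Matrix.fromBlocks_apply₁₁, Matrix.fromBlocks_apply₁₂, Matrix.fromBlocks_apply₂₁,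
        Matrix.fromBlocks_apply₂₂]
  · rw [Matrix.blockDiagonal'_apply_ne _ _ _ h, Matrix.blockDiagonal'_apply_ne _ _ _ h]

lemma ortho_iff {m : ℕ} (P Q : Matrix (Fin m) (Fin m) ℝ) :
    (Matrix.fromBlocks P Q (-Q) P)ᵀ * Matrix.fromBlocks P Q (-Q) P = 1 ↔
      (Pᵀ * P + Qᵀ * Q = 1 ∧ Pᵀ * Q = Qᵀ * P) := by
  rw [Matrix.fromBlocks_transpose, Matrix.fromBlocks_multiply, ← Matrix.fromBlocks_one]
  constructor
  · intro h
    have h11 := congrArg Matrix.toBlocks₁₁ h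
    have h12 := congrArg Matrix.toBlocks₁₂ h
    simp only [Matrix.toBlocks_fromBlocks₁₁, Matrix.toBlocks_fromBlocks₁₂,
      Matrix.transpose_neg, Matrix.neg_mul, Matrix.mul_neg, neg_neg] at h11 h12
    constructor
    · linear_combination (norm := abel) h11
    · linear_combination (norm := abel) h12
  · rintro ⟨h1, h2⟩
    simp only [Matrix.transpose_neg, Matrix.neg_mul, Matrix.mul_neg, neg_neg]
    rw [h1, h2, add_comm (Qᵀ * Q) (Pᵀ * P), h1]
    simp

lemma unitary_iff {m : ℕ} (U : Matrix (Fin m) (Fin m) ℂ) :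
    Uᴴ * U = 1 ↔
      ((U.map Complex.re)ᵀ * (U.map Complex.re) + (U.map Complex.im)ᵀ * (U.map Complex.im) = 1 ∧
       (U.map Complex.re)ᵀ * (U.map Complex.im) = (U.map Complex.im)ᵀ * (U.map Complex.re)) := by
  have idRe : ∀ x y, ((Uᴴ * U) x y).re =
      ((U.map Complex.re)ᵀ * (U.map Complex.re) + (U.map Complex.im)ᵀ * (U.map Complex.im)) x y := by
    intro x y
    rw [Matrix.add_apply, Matrix.mul_apply, Matrix.mul_apply, Matrix.mul_apply,
      ← Finset.sum_add_distrib, Complex.re_sum]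
    apply Finset.sum_congr rfl
    intro z _
    simp [Matrix.conjTranspose_apply, Complex.mul_re]
  have idIm : ∀ x y, ((Uᴴ * U) x y).im =
      ((U.map Complex.re)ᵀ * (U.map Complex.im) - (U.map Complex.im)ᵀ * (U.map Complex.re)) x y := by
    intro x y
    rw [Matrix.sub_apply, Matrix.mul_apply, Matrix.mul_apply, Matrix.mul_apply,
      ← Finset.sum_sub_distrib, Complex.im_sum]
    apply Finset.sum_congr rfl
    intro z _
    simp [Matrix.conjTranspose_apply, Complex.mul_im]
    ring
  constructor
  · intro h
    constructor
    · ext x y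
      rw [← idRe x y, h]
      by_cases hxy : x = y <;> simp [Matrix.one_apply, hxy]
    · rw [← sub_eq_zero]
      ext x y
      rw [← idIm x y, h]
      by_cases hxy : x = y <;> simp [Matrix.one_apply, hxy]
  · rintro ⟨h1, h2⟩
    ext x y
    apply Complex.ext
    · rw [idRe x y, h1]
      by_cases hxy : x = y <;> simp [Matrix.one_apply, hxy]
    · rw [idIm x y, h2]
      by_cases hxy : x = y <;> simp [Matrix.one_apply, hxy]

lemma commute_J {m : ℕ} (A : Matrix (Fin m ⊕ Fin m) (Fin m ⊕ Fin m) ℝ)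
    (h : Jm m * A = A * Jm m) :
    A = Matrix.fromBlocks A.toBlocks₁₁ A.toBlocks₁₂ (-A.toBlocks₁₂) A.toBlocks₁₁ := by
  have hA := (Matrix.fromBlocks_toBlocks A).symm
  rw [hA, Jm, Matrix.fromBlocks_multiply, Matrix.fromBlocks_multiply] at h
  have h21 := congrArg Matrix.toBlocks₂₁ h
  have h22 := congrArg Matrix.toBlocks₂₂ h
  simp only [Matrix.toBlocks_fromBlocks₂₁, Matrix.toBlocks_fromBlocks₂₂,
    Matrix.zero_mul, Matrix.mul_zero, Matrix.one_mul, Matrix.mul_one,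
    Matrix.neg_mul, Matrix.mul_neg, zero_add, add_zero, neg_inj] at h21 h22
  nth_rewrite 1 [hA]
  rw [← h21, ← h22]

lemma J_comm {m : ℕ} (P Q : Matrix (Fin m) (Fin m) ℝ) :
    Jm m * Matrix.fromBlocks P Q (-Q) P = Matrix.fromBlocks P Q (-Q) P * Jm m := by
  simp [Jm, Matrix.fromBlocks_multiply]

lemma bd_smul_one {N : ℕ} {ι : Fin N → Type*} [∀ j, Fintype (ι j)] [∀ j, DecidableEq (ι j)]
    (c : Fin N → ℝ) :
    Matrix.blockDiagonal' (fun j => c j • (1 : Matrix (ι j) (ι j) ℝ)) =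
      Matrix.diagonal (fun p : Σ j, ι j => c p.1) := by
  ext ⟨j, x⟩ ⟨j', x'⟩
  by_cases h : j = j'
  · subst h
    rw [Matrix.blockDiagonal'_apply_eq]
    by_cases hx : x = x'
    · subst hx; simp
    · rw [Matrix.diagonal_apply_ne]
      · simp [Matrix.one_apply, hx]
      · simp [Sigma.ext_iff, hx]
  · rw [Matrix.blockDiagonal'_apply_ne _ _ _ h, Matrix.diagonal_apply_ne]
    simp [Sigma.ext_iff, h]

lemma block_of_commute {N : ℕ} {ι : Fin N → Type*} [∀ j, Fintype (ι j)] [∀ j, DecidableEq (ι j)]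
    (f : Fin N → ℝ) (hf : ∀ j k, j ≠ k → f j ≠ f k)
    (A : Matrix (Σ j, ι j) (Σ j, ι j) ℝ)
    (h : A * Matrix.diagonal (fun p : Σ j, ι j => f p.1) =
      Matrix.diagonal (fun p : Σ j, ι j => f p.1) * A) :
    A = Matrix.blockDiagonal' (fun j => Matrix.of fun x y => A ⟨j, x⟩ ⟨j, y⟩) := by
  ext ⟨j, x⟩ ⟨j', x'⟩
  by_cases hj : j = j'
  · subst hj; rw [Matrix.blockDiagonal'_apply_eq]; rfl
  · rw [Matrix.blockDiagonal'_apply_ne _ _ _ hj]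
    have h' := congrFun (congrFun h ⟨j, x⟩) ⟨j', x'⟩
    simp only [Matrix.mul_diagonal, Matrix.diagonal_mul] at h'
    have h0 : (f j' - f j) * A ⟨j, x⟩ ⟨j', x'⟩ = 0 := by linear_combination h'
    rcases mul_eq_zero.mp h0 with h1 | h1
    · exact absurd (sub_eq_zero.mp h1) (hf j' j (Ne.symm hj))
    · exact h1

lemma Smat_mul_inv (N : ℕ) (m : Fin N → ℕ) (σ : Fin N → ℝ) (hσ : ∀ j, σ j ≠ 0) :
    Smat N m σ * Matrix.blockDiagonal' (fun j => (σ j)⁻¹ • (-(Jm (m j)))) = 1 ∧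
    Matrix.blockDiagonal' (fun j => (σ j)⁻¹ • (-(Jm (m j)))) * Smat N m σ = 1 := by
  constructor <;>
  · rw [Smat, ← Matrix.blockDiagonal'_mul, ← Matrix.blockDiagonal'_one]
    refine congrArg _ (funext fun j => ?_)
    rw [smul_mul_assoc, mul_smul_comm, smul_smul]
    first
    | rw [Matrix.mul_neg, Jm_mul_Jm, neg_neg, mul_inv_cancel₀ (hσ j), one_smul]
    | rw [Matrix.neg_mul, Jm_mul_Jm, neg_neg, inv_mul_cancel₀ (hσ j), one_smul]
    rfl

lemma Smat_sq (N : ℕ) (m : Fin N → ℕ) (σ : Fin N → ℝ) :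
    Smat N m σ * Smat N m σ =
      Matrix.diagonal (fun p : Σ j : Fin N, (Fin (m j) ⊕ Fin (m j)) => -(σ p.1 ^ 2)) := by
  rw [Smat, ← Matrix.blockDiagonal'_mul, ← bd_smul_one (fun j => -(σ j ^ 2))]
  refine congrArg _ (funext fun j => ?_)
  rw [smul_mul_assoc, mul_smul_comm, smul_smul, Jm_mul_Jm, pow_two, neg_smul, smul_neg]

lemma core (N : ℕ) (σ : Fin N → ℝ) (hσ : ∀ j, σ j ≠ 0)
    (hdist : ∀ j k, j ≠ k → σ j ^ 2 ≠ σ k ^ 2) (m : Fin N → ℕ) (M : ℕ)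
    (Y : Matrix (((j : Fin N) × (Fin (m j) ⊕ Fin (m j))) ⊕ Fin M)
      (((j : Fin N) × (Fin (m j) ⊕ Fin (m j))) ⊕ Fin M) ℝ) :
    (Yᵀ * Y = 1 ∧
      Yᵀ * Matrix.fromBlocks (Smat N m σ) 0 0 0 * Y = Matrix.fromBlocks (Smat N m σ) 0 0 0) ↔
    (∃ (U : ∀ j, Matrix (Fin (m j)) (Fin (m j)) ℂ) (R : Matrix (Fin M) (Fin M) ℝ),
      (∀ j, (U j)ᴴ * U j = 1) ∧ Rᵀ * R = 1 ∧
      Y = Matrix.fromBlocks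
        (Matrix.blockDiagonal' fun j =>
          Matrix.fromBlocks ((U j).map Complex.re) ((U j).map Complex.im)
            (-(U j).map Complex.im) ((U j).map Complex.re)) 0 0 R) := by
  set S := Smat N m σ with hS
  set Kb := Matrix.fromBlocks S 0 0 0 with hKb
  constructor
  · rintro ⟨hY, hK⟩
    have hYY : Y * Yᵀ = 1 := mul_eq_one_comm.mp hY
    have hcomm : Kb * Y = Y * Kb := by
      calc Kb * Y = (Y * Yᵀ) * Kb * Y := by rw [hYY, Matrix.one_mul]
        _ = Y * (Yᵀ * Kb * Y) := by noncomm_ring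
        _ = Y * Kb := by rw [hK]
    set A := Y.toBlocks₁₁ with hA
    set B := Y.toBlocks₁₂ with hB'
    set C := Y.toBlocks₂₁ with hC'
    set D := Y.toBlocks₂₂ with hD
    have hYb : Y = Matrix.fromBlocks A B C D := (Matrix.fromBlocks_toBlocks Y).symm
    rw [hYb, hKb, Matrix.fromBlocks_multiply, Matrix.fromBlocks_multiply] at hcomm
    have hSA := congrArg Matrix.toBlocks₁₁ hcomm
    have hSB := congrArg Matrix.toBlocks₁₂ hcomm
    have hCS := congrArg Matrix.toBlocks₂₁ hcomm
    simp only [Matrix.toBlocks_fromBlocks₁₁, Matrix.toBlocks_fromBlocks₁₂,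
      Matrix.toBlocks_fromBlocks₂₁, Matrix.zero_mul, Matrix.mul_zero, add_zero,
      zero_add] at hSA hSB hCS
    obtain ⟨hSi1, hSi2⟩ := Smat_mul_inv N m σ hσ
    set S' := Matrix.blockDiagonal' (fun j => (σ j)⁻¹ • (-(Jm (m j)))) with hS'
    have hB0 : B = 0 := by
      calc B = (S' * S) * B := by rw [hSi2, Matrix.one_mul]
        _ = S' * (S * B) := by rw [Matrix.mul_assoc]
        _ = 0 := by rw [hSB, Matrix.mul_zero]
    have hC0 : C = 0 := by
      calc C = C * (S * S') := by rw [hSi1, Matrix.mul_one]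
        _ = (C * S) * S' := by rw [Matrix.mul_assoc]
        _ = 0 := by rw [← hCS, Matrix.zero_mul]
    rw [hB0, hC0] at hYb
    rw [hYb, Matrix.fromBlocks_transpose, Matrix.fromBlocks_multiply] at hY
    rw [← Matrix.fromBlocks_one] at hY
    have hAO := congrArg Matrix.toBlocks₁₁ hY
    have hDO := congrArg Matrix.toBlocks₂₂ hY
    simp only [Matrix.toBlocks_fromBlocks₁₁, Matrix.toBlocks_fromBlocks₂₂,
      Matrix.transpose_zero, Matrix.zero_mul, Matrix.mul_zero, add_zero, zero_add] at hAO hDO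
    have hA2 : A * (S * S) = (S * S) * A := by
      calc A * (S * S) = (A * S) * S := by rw [Matrix.mul_assoc]
        _ = (S * A) * S := by rw [hSA]
        _ = S * (A * S) := by rw [Matrix.mul_assoc]
        _ = S * (S * A) := by rw [hSA]
        _ = (S * S) * A := by rw [Matrix.mul_assoc]
    rw [hS, Smat_sq] at hA2
    have hf : ∀ j k : Fin N, j ≠ k → -(σ j ^ 2) ≠ -(σ k ^ 2) := by
      intro j k hjk hc
      exact hdist j k hjk (neg_injective hc)
    set Ablk := (fun j => (Matrix.of fun x y => A ⟨j, x⟩ ⟨j, y⟩ :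
      Matrix (Fin (m j) ⊕ Fin (m j)) (Fin (m j) ⊕ Fin (m j)) ℝ)) with hAblkdef
    have hAblk : A = Matrix.blockDiagonal' Ablk :=
      block_of_commute (fun j => -(σ j ^ 2)) hf A hA2
    rw [hAblk, hS, Smat, ← Matrix.blockDiagonal'_mul, ← Matrix.blockDiagonal'_mul] at hSA
    have hSA' := Matrix.blockDiagonal'_injective hSA
    have hJA : ∀ j, Jm (m j) * Ablk j = Ablk j * Jm (m j) := by
      intro j
      have h1 := congrFun hSA' j
      simp only [smul_mul_assoc, mul_smul_comm] at h1
      exact smul_right_injective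
        (Matrix (Fin (m j) ⊕ Fin (m j)) (Fin (m j) ⊕ Fin (m j)) ℝ) (hσ j) h1
    rw [hAblk, Matrix.blockDiagonal'_transpose, ← Matrix.blockDiagonal'_mul,
      ← Matrix.blockDiagonal'_one] at hAO
    have hAO' := Matrix.blockDiagonal'_injective hAO
    have hABO : ∀ j, (Ablk j)ᵀ * Ablk j = 1 := fun j => congrFun hAO' j
    set Uc := (fun j => (Matrix.of fun x y =>
      (⟨(Ablk j).toBlocks₁₁ x y, (Ablk j).toBlocks₁₂ x y⟩ : ℂ) :
      Matrix (Fin (m j)) (Fin (m j)) ℂ)) with hUc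
    refine ⟨Uc, D, ?_, hDO, ?_⟩
    · intro j
      have hcj := commute_J (Ablk j) (hJA j)
      have hoj := hABO j
      rw [hcj] at hoj
      obtain ⟨o1, o2⟩ := (ortho_iff _ _).mp hoj
      exact (unitary_iff _).mpr ⟨o1, o2⟩
    · have hAeq : A = Matrix.blockDiagonal' (fun j =>
          Matrix.fromBlocks ((Uc j).map Complex.re) ((Uc j).map Complex.im)
            (-(Uc j).map Complex.im) ((Uc j).map Complex.re)) := by
        rw [hAblk]
        exact congrArg _ (funext fun j => commute_J (Ablk j) (hJA j))
      rw [hYb, hAeq]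
  · rintro ⟨U, R, hU, hR, rfl⟩
    set Ablk := (fun j => Matrix.fromBlocks ((U j).map Complex.re) ((U j).map Complex.im)
      (-(U j).map Complex.im) ((U j).map Complex.re)) with hAblkdef
    have hABO : ∀ j, (Ablk j)ᵀ * Ablk j = 1 := by
      intro j
      obtain ⟨o1, o2⟩ := (unitary_iff (U j)).mp (hU j)
      exact (ortho_iff _ _).mpr ⟨o1, o2⟩
    have hbd : (Matrix.blockDiagonal' fun k => (Ablk k)ᵀ) * Matrix.blockDiagonal' Ablk = 1 := by
      rw [← Matrix.blockDiagonal'_mul, ← Matrix.blockDiagonal'_one]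
      exact congrArg _ (funext fun j => hABO j)
    have hYO : (Matrix.fromBlocks (Matrix.blockDiagonal' Ablk) 0 0 R)ᵀ *
        Matrix.fromBlocks (Matrix.blockDiagonal' Ablk) 0 0 R = 1 := by
      rw [Matrix.fromBlocks_transpose, Matrix.fromBlocks_multiply,
        Matrix.blockDiagonal'_transpose]
      simp only [Matrix.mul_zero, Matrix.zero_mul, Matrix.transpose_zero, add_zero, zero_add]
      rw [hbd, hR, Matrix.fromBlocks_one]
    refine ⟨hYO, ?_⟩
    have hSbd : S * Matrix.blockDiagonal' Ablk = Matrix.blockDiagonal' Ablk * S := by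
      rw [hS, Smat, ← Matrix.blockDiagonal'_mul, ← Matrix.blockDiagonal'_mul]
      refine congrArg _ (funext fun j => ?_)
      rw [smul_mul_assoc, mul_smul_comm]
      exact congrArg _ (J_comm ((U j).map Complex.re) ((U j).map Complex.im))
    have hcomm : Kb * Matrix.fromBlocks (Matrix.blockDiagonal' Ablk) 0 0 R =
        Matrix.fromBlocks (Matrix.blockDiagonal' Ablk) 0 0 R * Kb := by
      rw [hKb, Matrix.fromBlocks_multiply, Matrix.fromBlocks_multiply]
      simp only [Matrix.mul_zero, Matrix.zero_mul, add_zero, zero_add]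
      rw [hSbd]
    calc (Matrix.fromBlocks (Matrix.blockDiagonal' Ablk) 0 0 R)ᵀ * Kb *
          Matrix.fromBlocks (Matrix.blockDiagonal' Ablk) 0 0 R
        = (Matrix.fromBlocks (Matrix.blockDiagonal' Ablk) 0 0 R)ᵀ *
            (Kb * Matrix.fromBlocks (Matrix.blockDiagonal' Ablk) 0 0 R) := by
          rw [Matrix.mul_assoc]
      _ = ((Matrix.fromBlocks (Matrix.blockDiagonal' Ablk) 0 0 R)ᵀ *
            Matrix.fromBlocks (Matrix.blockDiagonal' Ablk) 0 0 R) * Kb := by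
          rw [hcomm, Matrix.mul_assoc]
      _ = Kb := by rw [hYO, Matrix.one_mul]

/-- The real orthogonal isotropy group of
`K = ⊕_j (⊕_{k=1}^{m_j} [[0,σ_j],[-σ_j,0]]) ⊕ 0_M` is conjugate by a permutation matrix
(a relabeling of indices) to the set of block diagonal matrices
`(⊕_j [[Re U_j, Im U_j],[-Im U_j, Re U_j]]) ⊕ R` with `U_j` unitary and `R` real
orthogonal. -/
theorem stmt8 (N : ℕ) (σ : Fin N → ℝ) (hσ : ∀ j, σ j ≠ 0)
    (hdist : ∀ j k, j ≠ k → σ j ^ 2 ≠ σ k ^ 2)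
    (m : Fin N → ℕ) (hm : ∀ j, 0 < m j) (M : ℕ) :
    ∃ e : (((j : Fin N) × (_k : Fin (m j)) × Fin 2) ⊕ Fin M) ≃
        (((j : Fin N) × (Fin (m j) ⊕ Fin (m j))) ⊕ Fin M),
      Set.BijOn (fun Q => Matrix.reindex e e Q)
        {Q | Qᵀ * Q = 1 ∧ Qᵀ * Kreal N m M σ * Q = Kreal N m M σ}
        {Y | ∃ (U : ∀ j, Matrix (Fin (m j)) (Fin (m j)) ℂ)
            (R : Matrix (Fin M) (Fin M) ℝ),
          (∀ j, (U j)ᴴ * U j = 1) ∧ Rᵀ * R = 1 ∧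
          Y = Matrix.fromBlocks
            (Matrix.blockDiagonal' fun j =>
              Matrix.fromBlocks ((U j).map Complex.re) ((U j).map Complex.im)
                (-(U j).map Complex.im) ((U j).map Complex.re)) 0 0 R} := by
  classical
  refine ⟨eBig N m M, ?_, ?_, ?_⟩
  case refine_2 =>
    intro Q _ Q' _ h
    exact (Matrix.reindex (eBig N m M) (eBig N m M)).injective h
  all_goals
    have hmul : ∀ (X Z : Matrix (((j : Fin N) × (_k : Fin (m j)) × Fin 2) ⊕ Fin M)
        (((j : Fin N) × (_k : Fin (m j)) × Fin 2) ⊕ Fin M) ℝ),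
        Matrix.reindex (eBig N m M) (eBig N m M) (X * Z) =
          Matrix.reindex (eBig N m M) (eBig N m M) X *
          Matrix.reindex (eBig N m M) (eBig N m M) Z := by
      intro X Z
      simpa only [Matrix.reindexAlgEquiv_apply] using
        map_mul (Matrix.reindexAlgEquiv ℝ ℝ (eBig N m M)) X Z
    have hone : Matrix.reindex (eBig N m M) (eBig N m M)
        (1 : Matrix (((j : Fin N) × (_k : Fin (m j)) × Fin 2) ⊕ Fin M)
          (((j : Fin N) × (_k : Fin (m j)) × Fin 2) ⊕ Fin M) ℝ) = 1 := by
      simpa only [Matrix.reindexAlgEquiv_apply] using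
        map_one (Matrix.reindexAlgEquiv ℝ ℝ (eBig N m M))
    have hiff : ∀ Q : Matrix (((j : Fin N) × (_k : Fin (m j)) × Fin 2) ⊕ Fin M)
        (((j : Fin N) × (_k : Fin (m j)) × Fin 2) ⊕ Fin M) ℝ,
        (Qᵀ * Q = 1 ∧ Qᵀ * Kreal N m M σ * Q = Kreal N m M σ) ↔
        ((Matrix.reindex (eBig N m M) (eBig N m M) Q)ᵀ *
            Matrix.reindex (eBig N m M) (eBig N m M) Q = 1 ∧
          (Matrix.reindex (eBig N m M) (eBig N m M) Q)ᵀ *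
            Matrix.fromBlocks (Smat N m σ) 0 0 0 *
            Matrix.reindex (eBig N m M) (eBig N m M) Q =
            Matrix.fromBlocks (Smat N m σ) 0 0 0) := by
      intro Q
      rw [← reindex_Kreal N m M σ, Matrix.transpose_reindex, ← hmul, ← hmul, ← hmul, ← hone]
      constructor
      · rintro ⟨h1, h2⟩
        exact ⟨congrArg _ h1, congrArg _ h2⟩
      · rintro ⟨h1, h2⟩
        exact ⟨(Matrix.reindex (eBig N m M) (eBig N m M)).injective h1,
          (Matrix.reindex (eBig N m M) (eBig N m M)).injective h2⟩
  case refine_1 =>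
    intro Q hQ
    exact (core N σ hσ hdist m M (Matrix.reindex (eBig N m M) (eBig N m M) Q)).mp
      ((hiff Q).mp hQ)
  case refine_3 =>
    intro Y hY
    refine ⟨(Matrix.reindex (eBig N m M) (eBig N m M)).symm Y, ?_, ?_⟩
    · refine (hiff _).mpr ?_
      rw [Equiv.apply_symm_apply]
      exact (core N σ hσ hdist m M Y).mpr hY
    · exact Equiv.apply_symm_apply _ _


end
end

section
/- Let φ_1, …, φ_N be real numbers with sin φ_j ≠ 0 for all j and cos φ_1, …, cos φ_N pairwise distinct, let m_1, …, m_N ≥ 1 and M_1, M_2 ≥ 0, and set n := M_1 + M_2 + 2(m_1 + … + m_N). Let O := ⊕_{j=1}^{N} (⊕_{k=1}^{m_j} [[cos φ_j, sin φ_j], [−sin φ_j, cos φ_j]]) ⊕ I_{M_1} ⊕ (−I_{M_2}), an n×n real orthogonal matrix. Then there exists an n×n real permutation matrix P such that conjugation by P maps the group G := {Q ∈ M_n(ℝ) : QᵀQ = I and Qᵀ O Q = O} bijectively onto the set of all block diagonal real matrices (⊕_{j=1}^{N} [[Re U_j, Im U_j], [−Im U_j, Re U_j]]) ⊕ R_1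 ⊕ R_2, where U_j ranges over the unitary group U(m_j), R_1 over O_{M_1}(ℝ) and R_2 over O_{M_2}(ℝ). In particular, G is isomorphic as a group to (∏_{j=1}^{N} U(m_j)) × O_{M_1}(ℝ) × O_{M_2}(ℝ). -/
open Matrix Complex

noncomputable section

/-- `O = ⊕_{j=1}^{N} (⊕_{k=1}^{m_j} [[cos φ_j, sin φ_j], [-sin φ_j, cos φ_j]])
      ⊕ I_{M₁} ⊕ (-I_{M₂})`. -/
def Oreal (N : ℕ) (m : Fin N → ℕ) (M₁ M₂ : ℕ) (φ : Fin N → ℝ) :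
    Matrix (((j : Fin N) × (_k : Fin (m j)) × Fin 2) ⊕ (Fin M₁ ⊕ Fin M₂))
      (((j : Fin N) × (_k : Fin (m j)) × Fin 2) ⊕ (Fin M₁ ⊕ Fin M₂)) ℝ :=
  Matrix.fromBlocks
    (Matrix.blockDiagonal' fun j =>
      Matrix.blockDiagonal' fun _ : Fin (m j) =>
        !![Real.cos (φ j), Real.sin (φ j); -Real.sin (φ j), Real.cos (φ j)]) 0 0
    (Matrix.fromBlocks 1 0 0 (-1))

namespace Stmt9

variable {N : ℕ} {m : Fin N → ℕ} {M₁ M₂ : ℕ} (φ : Fin N → ℝ)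

abbrev Idx (N : ℕ) (m : Fin N → ℕ) (M₁ M₂ : ℕ) :=
  ((j : Fin N) × (_k : Fin (m j)) × Fin 2) ⊕ (Fin M₁ ⊕ Fin M₂)

abbrev Idx' (N : ℕ) (m : Fin N → ℕ) (M₁ M₂ : ℕ) :=
  ((j : Fin N) × (Fin (m j) ⊕ Fin (m j))) ⊕ (Fin M₁ ⊕ Fin M₂)

def tau : Idx N m M₁ M₂ → Idx N m M₁ M₂
  | .inl ⟨j, k, i⟩ => .inl ⟨j, k, 1 - i⟩
  | .inr x => .inr x

def gam : Idx N m M₁ M₂ → ℝ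
  | .inl ⟨j, _, _⟩ => Real.cos (φ j)
  | .inr (.inl _) => 1
  | .inr (.inr _) => -1

def sig : Idx N m M₁ M₂ → ℝ
  | .inl ⟨j, _, i⟩ => if i = 0 then Real.sin (φ j) else -Real.sin (φ j)
  | .inr _ => 0

lemma one_sub_one_sub (i : Fin 2) : 1 - (1 - i) = i := by fin_cases i <;> decide

@[simp] lemma tau_tau (a : Idx N m M₁ M₂) : tau (tau a) = a := by
  rcases a with ⟨j, k, i⟩ | x
  · simp only [tau, one_sub_one_sub]
  · rfl

@[simp] lemma gam_tau (a : Idx N m M₁ M₂) : gam φ (tau a) = gam φ a := by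
  rcases a with ⟨j, k, i⟩ | (x | x) <;> rfl

@[simp] lemma sig_tau (a : Idx N m M₁ M₂) : sig φ (tau a) = -sig φ a := by
  rcases a with ⟨j, k, i⟩ | (x | x)
  · simp only [tau, sig]
    fin_cases i <;> norm_num
  · simp [sig, tau]
  · simp [sig, tau]

lemma Oreal_apply (a b : Idx N m M₁ M₂) :
    Oreal N m M₁ M₂ φ a b =
      (if b = a then gam φ a else 0) + (if b = tau a then sig φ a else 0) := by
  rcases a with ⟨j, k, i⟩ | (p | p) <;> rcases b with ⟨j', k', i'⟩ | (q | q) <;>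
    simp only [Oreal, Matrix.fromBlocks_apply₁₁, Matrix.fromBlocks_apply₁₂,
      Matrix.fromBlocks_apply₂₁, Matrix.fromBlocks_apply₂₂, gam, sig, tau,
      Matrix.zero_apply, Matrix.one_apply, Matrix.neg_apply]
  · rcases eq_or_ne j' j with rfl | hj
    · rcases eq_or_ne k' k with rfl | hk
      · rw [Matrix.blockDiagonal'_apply_eq, Matrix.blockDiagonal'_apply_eq]
        fin_cases i <;> fin_cases i' <;> simp 
      · rw [Matrix.blockDiagonal'_apply_eq, Matrix.blockDiagonal'_apply_ne _ _ _ (Ne.symm hk)]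
        simp [hk]
    · rw [Matrix.blockDiagonal'_apply_ne _ _ _ (Ne.symm hj)]
      simp [hj]
  · simp
  · simp
  · simp
  · rcases eq_or_ne p q with rfl | h
    · simp
    · simp [h, Ne.symm h]
  · simp
  · simp
  · simp
  · rcases eq_or_ne p q with rfl | h
    · simp
    · simp [h, Ne.symm h]

variable {Q : Matrix (Idx N m M₁ M₂) (Idx N m M₁ M₂) ℝ}

lemma Oreal_mul_apply (Q : Matrix (Idx N m M₁ M₂) (Idx N m M₁ M₂) ℝ) (a b : Idx N m M₁ M₂) :
    (Oreal N m M₁ M₂ φ * Q) a b = gam φ a * Q a b + sig φ a * Q (tau a) b := by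
  rw [Matrix.mul_apply]
  have : ∀ c, Oreal N m M₁ M₂ φ a c * Q c b
      = (if c = a then gam φ a * Q c b else 0) + (if c = tau a then sig φ a * Q c b else 0) := by
    intro c
    rw [Oreal_apply, add_mul]
    congr 1 <;> split <;> simp
  simp only [this, Finset.sum_add_distrib, Finset.sum_ite_eq', Finset.mem_univ, if_true]

lemma mul_Oreal_apply (Q : Matrix (Idx N m M₁ M₂) (Idx N m M₁ M₂) ℝ) (a b : Idx N m M₁ M₂) :
    (Q * Oreal N m M₁ M₂ φ) a b = gam φ b * Q a b - sig φ b * Q a (tau b) := by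
  rw [Matrix.mul_apply]
  have : ∀ c, Q a c * Oreal N m M₁ M₂ φ c b
      = (if c = b then gam φ b * Q a c else 0) + (if c = tau b then -sig φ b * Q a c else 0) := by
    intro c
    rw [Oreal_apply, mul_add]
    congr 1
    · rcases eq_or_ne c b with rfl | h
      · simp [mul_comm]
      · simp [h, Ne.symm h]
    · rcases eq_or_ne c (tau b) with rfl | h
      · have : b = tau (tau b) := (tau_tau b).symm
        simp [← this, sig_tau, mul_comm]
      · have : b ≠ tau c := by
          intro hb; exact h (by rw [hb, tau_tau])
        simp [h, this]
  simp only [this, Finset.sum_add_distrib, Finset.sum_ite_eq', Finset.mem_univ, if_true]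
  ring

lemma star_rel (hQ : Oreal N m M₁ M₂ φ * Q = Q * Oreal N m M₁ M₂ φ) (a b : Idx N m M₁ M₂) :
    gam φ a * Q a b + sig φ a * Q (tau a) b = gam φ b * Q a b - sig φ b * Q a (tau b) := by
  have := congrFun (congrFun hQ a) b
  rwa [Oreal_mul_apply, mul_Oreal_apply] at this

lemma vanish (hQ : Oreal N m M₁ M₂ φ * Q = Q * Oreal N m M₁ M₂ φ)
    {a b : Idx N m M₁ M₂} (hne : gam φ a ≠ gam φ b) : Q a b = 0 := by
  have h1 := star_rel φ hQ a b
  have h2 := star_rel φ hQ a (tau b)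
  have h3 := star_rel φ hQ (tau a) b
  have h4 := star_rel φ hQ (tau a) (tau b)
  simp only [tau_tau, gam_tau, sig_tau] at h2 h3 h4
  set γa := gam φ a with hγa
  set γb := gam φ b with hγb
  set p := sig φ a
  set q := sig φ b
  set x := Q a b
  set y := Q a (tau b)
  set z := Q (tau a) b
  set w := Q (tau a) (tau b)
  -- h1 : γa * x + p * z = γb * x - q * y
  -- h2 : γa * y + p * w = γb * y + q * x
  -- h3 : γa * z + -p * x = γb * z - q * w
  -- h4 : γa * w + -p * y = γb * w + q * z
  have hA : ((γa - γb)^2 + p^2 + q^2) * x = 2*p*q*w := by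
    linear_combination (γa - γb) * h1 - q * h2 - p * h3
  have hB : ((γa - γb)^2 + p^2 + q^2) * w = 2*p*q*x := by
    linear_combination (γa - γb) * h4 + p * h2 + q * h3
  have hC : (((γa-γb)^2+(p-q)^2) * ((γa-γb)^2+(p+q)^2)) * x = 0 := by
    linear_combination ((γa - γb)^2 + p^2 + q^2) * hA + 2*p*q*hB
  have hd : (0:ℝ) < (γa - γb)^2 := by
    have : γa - γb ≠ 0 := sub_ne_zero.mpr hne
    positivity
  have hpos : (0:ℝ) < ((γa-γb)^2+(p-q)^2) * ((γa-γb)^2+(p+q)^2) :=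
    mul_pos (by nlinarith [sq_nonneg (p-q)]) (by nlinarith [sq_nonneg (p+q)])
  exact (mul_eq_zero.mp hC).resolve_left hpos.ne'


@[simp] lemma tau_zero (j : Fin N) (k : Fin (m j)) :
    tau (M₁ := M₁) (M₂ := M₂) (.inl ⟨j,k,0⟩) = .inl ⟨j,k,1⟩ := rfl

@[simp] lemma tau_one (j : Fin N) (k : Fin (m j)) :
    tau (M₁ := M₁) (M₂ := M₂) (.inl ⟨j,k,1⟩) = .inl ⟨j,k,0⟩ := rfl

@[simp] lemma sig_zero (j : Fin N) (k : Fin (m j)) :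
    sig (M₁ := M₁) (M₂ := M₂) φ (.inl ⟨j,k,0⟩) = Real.sin (φ j) := by simp [sig]

@[simp] lemma sig_one (j : Fin N) (k : Fin (m j)) :
    sig (M₁ := M₁) (M₂ := M₂) φ (.inl ⟨j,k,1⟩) = -Real.sin (φ j) := by simp [sig]

@[simp] lemma gam_inl (j : Fin N) (k : Fin (m j)) (i : Fin 2) :
    gam (M₁ := M₁) (M₂ := M₂) φ (.inl ⟨j,k,i⟩) = Real.cos (φ j) := rfl

lemma rel_diag (hφ : ∀ j, Real.sin (φ j) ≠ 0)
    (hQ : Oreal N m M₁ M₂ φ * Q = Q * Oreal N m M₁ M₂ φ)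
    (j : Fin N) (k k' : Fin (m j)) :
    Q (.inl ⟨j,k,1⟩) (.inl ⟨j,k',1⟩) = Q (.inl ⟨j,k,0⟩) (.inl ⟨j,k',0⟩) := by
  have h := star_rel φ hQ (.inl ⟨j,k,0⟩) (.inl ⟨j,k',1⟩)
  simp only [tau_zero, tau_one, sig_zero, sig_one, gam_inl] at h
  have h2 : Real.sin (φ j) * (Q (.inl ⟨j,k,1⟩) (.inl ⟨j,k',1⟩)
      - Q (.inl ⟨j,k,0⟩) (.inl ⟨j,k',0⟩)) = 0 := by linarith
  rcases mul_eq_zero.mp h2 with h3 | h3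
  · exact absurd h3 (hφ j)
  · linarith

lemma rel_off (hφ : ∀ j, Real.sin (φ j) ≠ 0)
    (hQ : Oreal N m M₁ M₂ φ * Q = Q * Oreal N m M₁ M₂ φ)
    (j : Fin N) (k k' : Fin (m j)) :
    Q (.inl ⟨j,k,1⟩) (.inl ⟨j,k',0⟩) = - Q (.inl ⟨j,k,0⟩) (.inl ⟨j,k',1⟩) := by
  have h := star_rel φ hQ (.inl ⟨j,k,0⟩) (.inl ⟨j,k',0⟩)
  simp only [tau_zero, tau_one, sig_zero, sig_one, gam_inl] at h
  have h2 : Real.sin (φ j) * (Q (.inl ⟨j,k,1⟩) (.inl ⟨j,k',0⟩)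
      + Q (.inl ⟨j,k,0⟩) (.inl ⟨j,k',1⟩)) = 0 := by linarith
  rcases mul_eq_zero.mp h2 with h3 | h3
  · exact absurd h3 (hφ j)
  · linarith

lemma cos_ne_one {x : ℝ} (h : Real.sin x ≠ 0) : Real.cos x ≠ 1 := by
  intro hc; apply h; nlinarith [Real.sin_sq_add_cos_sq x]

lemma cos_ne_neg_one {x : ℝ} (h : Real.sin x ≠ 0) : Real.cos x ≠ -1 := by
  intro hc; apply h; nlinarith [Real.sin_sq_add_cos_sq x]

lemma sum_idx (f : Idx N m M₁ M₂ → ℝ) :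
    ∑ c, f c = (∑ j : Fin N, ∑ k, (f (.inl ⟨j,k,0⟩) + f (.inl ⟨j,k,1⟩)))
      + ((∑ p, f (.inr (.inl p))) + ∑ p, f (.inr (.inr p))) := by
  rw [Fintype.sum_sum_type, Fintype.sum_sum_type]
  congr 1
  rw [← Finset.univ_sigma_univ, Finset.sum_sigma]
  refine Finset.sum_congr rfl fun j _ => ?_
  rw [← Finset.univ_sigma_univ, Finset.sum_sigma]
  refine Finset.sum_congr rfl fun k _ => ?_
  exact Fin.sum_univ_two _

variable (hφ : ∀ j, Real.sin (φ j) ≠ 0)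
    (hdist : ∀ j k, j ≠ k → Real.cos (φ j) ≠ Real.cos (φ k))

section
variable (hQ1 : Qᵀ * Q = 1) (hQc : Oreal N m M₁ M₂ φ * Q = Q * Oreal N m M₁ M₂ φ)
include hφ hdist hQ1 hQc

lemma QtQ_block (j : Fin N) (ka kb : Fin (m j)) (ia ib : Fin 2) :
    (∑ k, (Q (.inl ⟨j,k,0⟩) (.inl ⟨j,ka,ia⟩) * Q (.inl ⟨j,k,0⟩) (.inl ⟨j,kb,ib⟩)
      + Q (.inl ⟨j,k,1⟩) (.inl ⟨j,ka,ia⟩) * Q (.inl ⟨j,k,1⟩) (.inl ⟨j,kb,ib⟩)))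
    = if ka = kb ∧ ia = ib then 1 else 0 := by
  have h := congrFun (congrFun hQ1 (.inl ⟨j,ka,ia⟩)) (.inl ⟨j,kb,ib⟩)
  rw [Matrix.mul_apply] at h
  simp only [Matrix.transpose_apply] at h
  rw [sum_idx] at h
  rw [Finset.sum_eq_single_of_mem j (Finset.mem_univ j)
    (fun j' _ hj' => Finset.sum_eq_zero fun k _ => by
      rw [vanish φ hQc (show gam φ (.inl ⟨j',k,0⟩) ≠ gam φ (.inl ⟨j,ka,ia⟩) from hdist j' j hj'),
        vanish φ hQc (show gam φ (.inl ⟨j',k,1⟩) ≠ gam φ (.inl ⟨j,ka,ia⟩) from hdist j' j hj')]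
      ring)] at h
  rw [Finset.sum_eq_zero (fun (p : Fin M₁) _ => by
      rw [vanish φ hQc (show gam φ (.inr (.inl p)) ≠ gam φ (.inl ⟨j,ka,ia⟩) from
        (cos_ne_one (hφ j)).symm), zero_mul]),
    Finset.sum_eq_zero (fun (p : Fin M₂) (_ : p ∈ Finset.univ) => by
      rw [vanish φ hQc (show gam φ (.inr (.inr p)) ≠ gam φ (.inl ⟨j,ka,ia⟩) from
        fun hc => (cos_ne_neg_one (hφ j)) hc.symm), zero_mul])] at h
  simp only [add_zero] at h
  rw [h]
  simp [Matrix.one_apply]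

lemma QtQ_M1 (p q : Fin M₁) :
    (∑ r, Q (.inr (.inl r)) (.inr (.inl p)) * Q (.inr (.inl r)) (.inr (.inl q)))
      = if p = q then 1 else 0 := by
  have h := congrFun (congrFun hQ1 (.inr (.inl p))) (.inr (.inl q))
  rw [Matrix.mul_apply] at h
  simp only [Matrix.transpose_apply] at h
  rw [sum_idx] at h
  rw [Finset.sum_eq_zero (fun j' (_ : j' ∈ Finset.univ) => Finset.sum_eq_zero fun k _ => by
      rw [vanish φ hQc (show gam φ (.inl ⟨j',k,0⟩) ≠ gam φ (.inr (.inl p)) from cos_ne_one (hφ j')),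
        vanish φ hQc (show gam φ (.inl ⟨j',k,1⟩) ≠ gam φ (.inr (.inl p)) from cos_ne_one (hφ j'))]
      ring)] at h
  rw [Finset.sum_eq_zero (fun (r : Fin M₂) (_ : r ∈ Finset.univ) => by
      rw [vanish φ hQc (show gam φ (.inr (.inr r)) ≠ gam φ (.inr (.inl p)) by norm_num [gam]),
        zero_mul])] at h
  simp only [zero_add, add_zero] at h
  rw [h]
  simp [Matrix.one_apply]

lemma QtQ_M2 (p q : Fin M₂) :
    (∑ r, Q (.inr (.inr r)) (.inr (.inr p)) * Q (.inr (.inr r)) (.inr (.inr q)))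
      = if p = q then 1 else 0 := by
  have h := congrFun (congrFun hQ1 (.inr (.inr p))) (.inr (.inr q))
  rw [Matrix.mul_apply] at h
  simp only [Matrix.transpose_apply] at h
  rw [sum_idx] at h
  rw [Finset.sum_eq_zero (fun j' (_ : j' ∈ Finset.univ) => Finset.sum_eq_zero fun k _ => by
      rw [vanish φ hQc (show gam φ (.inl ⟨j',k,0⟩) ≠ gam φ (.inr (.inr p)) from cos_ne_neg_one (hφ j')),
        vanish φ hQc (show gam φ (.inl ⟨j',k,1⟩) ≠ gam φ (.inr (.inr p)) from cos_ne_neg_one (hφ j'))]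
      ring)] at h
  rw [Finset.sum_eq_zero (fun (r : Fin M₁) (_ : r ∈ Finset.univ) => by
      rw [vanish φ hQc (show gam φ (.inr (.inl r)) ≠ gam φ (.inr (.inr p)) by norm_num [gam]),
        zero_mul])] at h
  simp only [zero_add, add_zero] at h
  rw [h]
  simp [Matrix.one_apply]

end


@[simp] lemma gam_r1 (p : Fin M₁) :
    gam (N := N) (m := m) (M₂ := M₂) φ (.inr (.inl p)) = 1 := rfl
@[simp] lemma gam_r2 (p : Fin M₂) :
    gam (N := N) (m := m) (M₁ := M₁) φ (.inr (.inr p)) = -1 := rfl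
@[simp] lemma sig_inr (x : Fin M₁ ⊕ Fin M₂) :
    sig (N := N) (m := m) φ (.inr x) = 0 := rfl
@[simp] lemma tau_inr (x : Fin M₁ ⊕ Fin M₂) :
    tau (N := N) (m := m) (.inr x) = .inr x := rfl

@[simp] lemma cmk_re (a b : ℝ) : (Complex.mk a b).re = a := rfl
@[simp] lemma cmk_im (a b : ℝ) : (Complex.mk a b).im = b := rfl

def fwd : Idx N m M₁ M₂ → Idx' N m M₁ M₂
  | .inl ⟨j, k, i⟩ => .inl ⟨j, if i = 0 then .inl k else .inr k⟩
  | .inr x => .inr x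

def bwd : Idx' N m M₁ M₂ → Idx N m M₁ M₂
  | .inl ⟨j, .inl k⟩ => .inl ⟨j, k, 0⟩
  | .inl ⟨j, .inr k⟩ => .inl ⟨j, k, 1⟩
  | .inr x => .inr x

@[simp] lemma fwd_zero (j : Fin N) (k : Fin (m j)) :
    fwd (M₁ := M₁) (M₂ := M₂) (.inl ⟨j, k, 0⟩) = .inl ⟨j, .inl k⟩ := rfl
@[simp] lemma fwd_one (j : Fin N) (k : Fin (m j)) :
    fwd (M₁ := M₁) (M₂ := M₂) (.inl ⟨j, k, 1⟩) = .inl ⟨j, .inr k⟩ := rfl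
@[simp] lemma fwd_inr (x : Fin M₁ ⊕ Fin M₂) :
    fwd (N := N) (m := m) (.inr x) = .inr x := rfl
@[simp] lemma bwd_inl (j : Fin N) (k : Fin (m j)) :
    bwd (M₁ := M₁) (M₂ := M₂) (.inl ⟨j, .inl k⟩) = .inl ⟨j, k, 0⟩ := rfl
@[simp] lemma bwd_inr' (j : Fin N) (k : Fin (m j)) :
    bwd (M₁ := M₁) (M₂ := M₂) (.inl ⟨j, .inr k⟩) = .inl ⟨j, k, 1⟩ := rfl
@[simp] lemma bwd_inr (x : Fin M₁ ⊕ Fin M₂) :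
    bwd (N := N) (m := m) (.inr x) = .inr x := rfl

def eIdx : Idx N m M₁ M₂ ≃ Idx' N m M₁ M₂ where
  toFun := fwd
  invFun := bwd
  left_inv := by
    rintro (⟨j, k, i⟩ | x)
    · fin_cases i <;> rfl
    · rfl
  right_inv := by rintro (⟨j, k | k⟩ | x) <;> rfl

@[simp] lemma eIdx_apply (x : Idx N m M₁ M₂) : eIdx x = fwd x := rfl
@[simp] lemma eIdx_symm_apply (x : Idx' N m M₁ M₂) : eIdx.symm x = bwd x := rfl

lemma one_re_eq {n : ℕ} (k k' : Fin n) :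
    ((1 : Matrix (Fin n) (Fin n) ℂ) k k').re = (1 : Matrix (Fin n) (Fin n) ℝ) k k' := by
  rcases eq_or_ne k k' with rfl | hkk
  · simp [Matrix.one_apply]
  · simp [Matrix.one_apply, hkk]

lemma unitary_re {n : ℕ} {U : Matrix (Fin n) (Fin n) ℂ} (hU : Uᴴ * U = 1) :
    (U.map Complex.re)ᵀ * U.map Complex.re + (U.map Complex.im)ᵀ * U.map Complex.im = 1 := by
  ext k k'
  have h := congrArg Complex.re (congrFun (congrFun hU k) k')
  rw [Matrix.mul_apply, Complex.re_sum, one_re_eq] at h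
  simp only [Matrix.conjTranspose_apply, Complex.star_def, Complex.mul_re,
    Complex.conj_re, Complex.conj_im] at h
  rw [Matrix.add_apply, Matrix.mul_apply, Matrix.mul_apply, ← Finset.sum_add_distrib, ← h]
  exact Finset.sum_congr rfl fun c _ => by
    simp only [Matrix.transpose_apply, Matrix.map_apply]; ring

lemma unitary_im {n : ℕ} {U : Matrix (Fin n) (Fin n) ℂ} (hU : Uᴴ * U = 1) :
    (U.map Complex.re)ᵀ * U.map Complex.im = (U.map Complex.im)ᵀ * U.map Complex.re := by
  ext k k'
  have h := congrArg Complex.im (congrFun (congrFun hU k) k')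
  rw [Matrix.mul_apply, Complex.im_sum] at h
  simp only [Matrix.conjTranspose_apply, Complex.star_def, Complex.mul_im,
    Complex.conj_re, Complex.conj_im] at h
  have h1 : ((1 : Matrix (Fin n) (Fin n) ℂ) k k').im = 0 := by
    rcases eq_or_ne k k' with rfl | hkk
    · simp [Matrix.one_apply]
    · simp [Matrix.one_apply, hkk]
  rw [h1] at h
  rw [Matrix.mul_apply, Matrix.mul_apply, ← sub_eq_zero, ← Finset.sum_sub_distrib, ← h]
  exact Finset.sum_congr rfl fun c _ => by
    simp only [Matrix.transpose_apply, Matrix.map_apply]; ring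

section Ymat

variable (U : ∀ j, Matrix (Fin (m j)) (Fin (m j)) ℂ)
  (R₁ : Matrix (Fin M₁) (Fin M₁) ℝ) (R₂ : Matrix (Fin M₂) (Fin M₂) ℝ)

def Ymat : Matrix (Idx' N m M₁ M₂) (Idx' N m M₁ M₂) ℝ :=
  Matrix.fromBlocks
    (Matrix.blockDiagonal' fun j =>
      Matrix.fromBlocks ((U j).map Complex.re) ((U j).map Complex.im)
        (-(U j).map Complex.im) ((U j).map Complex.re)) 0 0
    (Matrix.fromBlocks R₁ 0 0 R₂)

lemma Ymat_orth (hU : ∀ j, (U j)ᴴ * U j = 1) (hR1 : R₁ᵀ * R₁ = 1) (hR2 : R₂ᵀ * R₂ = 1) :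
    (Ymat U R₁ R₂)ᵀ * Ymat U R₁ R₂ = 1 := by
  have hA : ∀ j, (Matrix.fromBlocks ((U j).map Complex.re) ((U j).map Complex.im)
      (-(U j).map Complex.im) ((U j).map Complex.re))ᵀ *
      Matrix.fromBlocks ((U j).map Complex.re) ((U j).map Complex.im)
        (-(U j).map Complex.im) ((U j).map Complex.re) = 1 := by
    intro j
    set P := (U j).map Complex.re
    set Qm := (U j).map Complex.im
    rw [Matrix.fromBlocks_transpose, Matrix.fromBlocks_multiply]
    have e11 : Pᵀ * P + (-Qm)ᵀ * -Qm = 1 := by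
      rw [Matrix.transpose_neg, Matrix.neg_mul, Matrix.mul_neg, neg_neg]
      exact unitary_re (hU j)
    have e12 : Pᵀ * Qm + (-Qm)ᵀ * P = 0 := by
      rw [Matrix.transpose_neg, Matrix.neg_mul, ← sub_eq_add_neg, sub_eq_zero]
      exact unitary_im (hU j)
    have e21 : Qmᵀ * P + Pᵀ * -Qm = 0 := by
      rw [Matrix.mul_neg, ← sub_eq_add_neg, sub_eq_zero]
      exact (unitary_im (hU j)).symm
    have e22 : Qmᵀ * Qm + Pᵀ * P = 1 := by
      rw [add_comm]; exact unitary_re (hU j)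
    rw [e11, e12, e21, e22, Matrix.fromBlocks_one]
  have hC : (Matrix.fromBlocks R₁ 0 0 R₂)ᵀ * Matrix.fromBlocks R₁ 0 0 R₂ = 1 := by
    rw [Matrix.fromBlocks_transpose, Matrix.fromBlocks_multiply]
    simp only [Matrix.transpose_zero, Matrix.mul_zero, Matrix.zero_mul, add_zero, zero_add]
    rw [hR1, hR2, Matrix.fromBlocks_one]
  rw [Ymat, Matrix.fromBlocks_transpose, Matrix.fromBlocks_multiply]
  simp only [Matrix.transpose_zero, Matrix.mul_zero, Matrix.zero_mul, add_zero, zero_add]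
  rw [Matrix.blockDiagonal'_transpose, ← Matrix.blockDiagonal'_mul]
  simp only [hA, hC]
  have : (fun j => (1 : Matrix (Fin (m j) ⊕ Fin (m j)) (Fin (m j) ⊕ Fin (m j)) ℝ)) =
      (1 : ∀ j, Matrix (Fin (m j) ⊕ Fin (m j)) (Fin (m j) ⊕ Fin (m j)) ℝ) := rfl
  rw [this, Matrix.blockDiagonal'_one, Matrix.fromBlocks_one]

lemma Ymat_comm :
    Oreal N m M₁ M₂ φ * (Ymat U R₁ R₂).submatrix fwd fwd
      = (Ymat U R₁ R₂).submatrix fwd fwd * Oreal N m M₁ M₂ φ := by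
  ext a b
  rw [Oreal_mul_apply, mul_Oreal_apply]
  rcases a with ⟨j, k, i⟩ | (p | p) <;> rcases b with ⟨j', k', i'⟩ | (q | q)
  · rcases eq_or_ne j j' with rfl | hj
    · fin_cases i <;> fin_cases i' <;>
        simp only [Fin.zero_eta, Fin.mk_one, Fin.isValue, tau_zero, tau_one, sig_zero, sig_one,
          gam_inl, Matrix.submatrix_apply, fwd_zero, fwd_one, Ymat, Matrix.fromBlocks_apply₁₁,
          Matrix.blockDiagonal'_apply_eq, Matrix.fromBlocks_apply₁₂, Matrix.fromBlocks_apply₂₁,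
          Matrix.fromBlocks_apply₂₂, Matrix.neg_apply] <;> ring
    · fin_cases i <;> fin_cases i' <;>
        simp only [Fin.zero_eta, Fin.mk_one, Fin.isValue, tau_zero, tau_one, sig_zero, sig_one,
          gam_inl, Matrix.submatrix_apply, fwd_zero, fwd_one, Ymat, Matrix.fromBlocks_apply₁₁,
          Matrix.blockDiagonal'_apply_ne (h := hj)] <;> ring
  · fin_cases i <;> simp [Ymat, tau_zero, tau_one]
  · fin_cases i <;> simp [Ymat, tau_zero, tau_one]
  · fin_cases i' <;> simp [Ymat]
  · simp [Ymat]
  · simp [Ymat]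
  · fin_cases i' <;> simp [Ymat]
  · simp [Ymat]
  · simp [Ymat]

end Ymat

end Stmt9


open Stmt9 in
/-- The real orthogonal isotropy group of `O` is conjugate by a
permutation matrix (a relabeling of indices) to the set of block diagonal matrices
`(⊕_j [[Re U_j, Im U_j],[-Im U_j, Re U_j]]) ⊕ R₁ ⊕ R₂` with `U_j` unitary and
`R₁, R₂` real orthogonal. -/
theorem stmt9 (N : ℕ) (φ : Fin N → ℝ) (hφ : ∀ j, Real.sin (φ j) ≠ 0)
    (hdist : ∀ j k, j ≠ k → Real.cos (φ j) ≠ Real.cos (φ k))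
    (m : Fin N → ℕ) (hm : ∀ j, 0 < m j) (M₁ M₂ : ℕ) :
    ∃ e : (((j : Fin N) × (_k : Fin (m j)) × Fin 2) ⊕ (Fin M₁ ⊕ Fin M₂)) ≃
        (((j : Fin N) × (Fin (m j) ⊕ Fin (m j))) ⊕ (Fin M₁ ⊕ Fin M₂)),
      Set.BijOn (fun Q => Matrix.reindex e e Q)
        {Q | Qᵀ * Q = 1 ∧ Qᵀ * Oreal N m M₁ M₂ φ * Q = Oreal N m M₁ M₂ φ}
        {Y | ∃ (U : ∀ j, Matrix (Fin (m j)) (Fin (m j)) ℂ)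
            (R₁ : Matrix (Fin M₁) (Fin M₁) ℝ) (R₂ : Matrix (Fin M₂) (Fin M₂) ℝ),
          (∀ j, (U j)ᴴ * U j = 1) ∧ R₁ᵀ * R₁ = 1 ∧ R₂ᵀ * R₂ = 1 ∧
          Y = Matrix.fromBlocks
            (Matrix.blockDiagonal' fun j =>
              Matrix.fromBlocks ((U j).map Complex.re) ((U j).map Complex.im)
                (-(U j).map Complex.im) ((U j).map Complex.re)) 0 0
            (Matrix.fromBlocks R₁ 0 0 R₂)} := by
  classical
  have hcoe : ⇑(eIdx (N := N) (m := m) (M₁ := M₁) (M₂ := M₂)) = fwd := rfl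
  refine ⟨eIdx, ?_, fun A _ B _ h => (Matrix.reindex eIdx eIdx).injective h, ?_⟩
  · -- MapsTo
    rintro Q ⟨hQ1, hQ2⟩
    have hQQt : Q * Qᵀ = 1 := mul_eq_one_comm.mp hQ1
    have hQc : Oreal N m M₁ M₂ φ * Q = Q * Oreal N m M₁ M₂ φ := by
      calc Oreal N m M₁ M₂ φ * Q = (Q * Qᵀ) * Oreal N m M₁ M₂ φ * Q := by rw [hQQt, one_mul]
        _ = Q * (Qᵀ * Oreal N m M₁ M₂ φ * Q) := by noncomm_ring
        _ = Q * Oreal N m M₁ M₂ φ := by rw [hQ2]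
    refine ⟨fun j => Matrix.of fun k k' => Complex.mk (Q (.inl ⟨j,k,0⟩) (.inl ⟨j,k',0⟩))
        (Q (.inl ⟨j,k,0⟩) (.inl ⟨j,k',1⟩)),
      Matrix.of fun p q => Q (.inr (.inl p)) (.inr (.inl q)),
      Matrix.of fun p q => Q (.inr (.inr p)) (.inr (.inr q)), ?_, ?_, ?_, ?_⟩
    · intro j
      ext k k'
      apply Complex.ext
      · rw [Matrix.mul_apply, Complex.re_sum, one_re_eq]
        simp only [Matrix.conjTranspose_apply, Complex.star_def, Complex.mul_re,
          Complex.conj_re, Complex.conj_im, cmk_re, cmk_im, Matrix.of_apply]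
        have h0 := QtQ_block φ hφ hdist hQ1 hQc j k k' 0 0
        simp only [rel_off φ hφ hQc, rel_diag φ hφ hQc] at h0
        refine Eq.trans (Finset.sum_congr rfl fun c _ => ?_) (h0.trans ?_)
        · ring
        · simp [Matrix.one_apply]
      · have h1z : ((1 : Matrix (Fin (m j)) (Fin (m j)) ℂ) k k').im = 0 := by
          rcases eq_or_ne k k' with rfl | hkk
          · simp [Matrix.one_apply]
          · simp [Matrix.one_apply, hkk]
        rw [Matrix.mul_apply, Complex.im_sum, h1z]
        simp only [Matrix.conjTranspose_apply, Complex.star_def, Complex.mul_im,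
          Complex.conj_re, Complex.conj_im, cmk_re, cmk_im, Matrix.of_apply]
        have h1 := QtQ_block φ hφ hdist hQ1 hQc j k k' 0 1
        simp only [rel_off φ hφ hQc, rel_diag φ hφ hQc] at h1
        refine Eq.trans (Finset.sum_congr rfl fun c _ => ?_) (h1.trans ?_)
        · ring
        · simp
    · ext p q
      rw [Matrix.mul_apply, Matrix.one_apply]
      simp only [Matrix.transpose_apply, Matrix.of_apply]
      exact QtQ_M1 φ hφ hdist hQ1 hQc p q
    · ext p q
      rw [Matrix.mul_apply, Matrix.one_apply]
      simp only [Matrix.transpose_apply, Matrix.of_apply]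
      exact QtQ_M2 φ hφ hdist hQ1 hQc p q
    · -- the matrix identity
      ext a b
      simp only [Matrix.reindex_apply, Matrix.submatrix_apply, eIdx_symm_apply]
      rcases a with ⟨j, k | k⟩ | (p | p) <;> rcases b with ⟨j', k' | k'⟩ | (q | q) <;>
        simp only [bwd_inl, bwd_inr', bwd_inr, Matrix.fromBlocks_apply₁₁,
          Matrix.fromBlocks_apply₁₂, Matrix.fromBlocks_apply₂₁, Matrix.fromBlocks_apply₂₂,
          Matrix.zero_apply, Matrix.map_apply, Matrix.neg_apply, Matrix.of_apply]
      · rcases eq_or_ne j j' with rfl | hj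
        · rw [Matrix.blockDiagonal'_apply_eq]
          simp [Matrix.fromBlocks_apply₁₁]
        · rw [Matrix.blockDiagonal'_apply_ne _ _ _ hj]
          exact vanish φ hQc (hdist j j' hj)
      · rcases eq_or_ne j j' with rfl | hj
        · rw [Matrix.blockDiagonal'_apply_eq]
          simp [Matrix.fromBlocks_apply₁₂]
        · rw [Matrix.blockDiagonal'_apply_ne _ _ _ hj]
          exact vanish φ hQc (hdist j j' hj)
      · exact vanish φ hQc (cos_ne_one (hφ j))
      · exact vanish φ hQc (cos_ne_neg_one (hφ j))
      · rcases eq_or_ne j j' with rfl | hj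
        · rw [Matrix.blockDiagonal'_apply_eq]
          simp only [Matrix.fromBlocks_apply₂₁, Matrix.neg_apply, Matrix.map_apply, Matrix.of_apply]
          rw [rel_off φ hφ hQc]
        · rw [Matrix.blockDiagonal'_apply_ne _ _ _ hj]
          exact vanish φ hQc (hdist j j' hj)
      · rcases eq_or_ne j j' with rfl | hj
        · rw [Matrix.blockDiagonal'_apply_eq]
          simp only [Matrix.fromBlocks_apply₂₂, Matrix.map_apply, Matrix.of_apply]
          rw [rel_diag φ hφ hQc]
        · rw [Matrix.blockDiagonal'_apply_ne _ _ _ hj]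
          exact vanish φ hQc (hdist j j' hj)
      · exact vanish φ hQc (cos_ne_one (hφ j))
      · exact vanish φ hQc (cos_ne_neg_one (hφ j))
      · exact vanish φ hQc (Ne.symm (cos_ne_one (hφ j')))
      · exact vanish φ hQc (Ne.symm (cos_ne_one (hφ j')))
      · exact vanish φ hQc (by norm_num)
      · exact vanish φ hQc (Ne.symm (cos_ne_neg_one (hφ j')))
      · exact vanish φ hQc (Ne.symm (cos_ne_neg_one (hφ j')))
      · exact vanish φ hQc (by norm_num)
  · -- SurjOn
    rintro Y ⟨U, R₁, R₂, hU, hR1, hR2, rfl⟩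
    have hO : (Ymat U R₁ R₂)ᵀ * Ymat U R₁ R₂ = 1 := Ymat_orth U R₁ R₂ hU hR1 hR2
    refine ⟨(Ymat U R₁ R₂).submatrix fwd fwd, ⟨?_, ?_⟩, ?_⟩
    · rw [Matrix.transpose_submatrix, ← hcoe, Matrix.submatrix_mul_equiv, hO,
        Matrix.submatrix_one_equiv]
    · have hQ1 : ((Ymat U R₁ R₂).submatrix fwd fwd)ᵀ * (Ymat U R₁ R₂).submatrix fwd fwd = 1 := by
        rw [Matrix.transpose_submatrix, ← hcoe, Matrix.submatrix_mul_equiv, hO,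
          Matrix.submatrix_one_equiv]
      rw [Matrix.mul_assoc, Ymat_comm φ U R₁ R₂, ← Matrix.mul_assoc, hQ1, one_mul]
    · show Matrix.reindex eIdx eIdx ((Ymat U R₁ R₂).submatrix fwd fwd) = Ymat U R₁ R₂
      rw [Matrix.reindex_apply, ← hcoe, Matrix.submatrix_submatrix]
      simp


end
end

section
/- The set 𝕋^{α,μ} is a subgroup of GL_n(ℂ): it contains the identity matrix, the product of any two matrices in 𝕋^{α,μ} again lies in 𝕋^{α,μ}, and the inverse of any matrix in 𝕋^{α,μ} again lies in 𝕋^{α,μ}. -/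
open Matrix

noncomputable section

/-- Index type. -/
abbrev BTIdx (N : ℕ) (α μ : Fin N → ℕ) := (r : Fin N) × (Fin (α r) × Fin (μ r))

/-- The nilpotent shift matrix whose centralizer is the block-Toeplitz pattern. -/
def shiftH (N : ℕ) (α μ : Fin N → ℕ) : Matrix (BTIdx N α μ) (BTIdx N α μ) ℂ :=
  fun a b =>
    if a.1 = b.1 ∧ (a.2.1 : ℕ) + 1 = (b.2.1 : ℕ) ∧ (a.2.2 : ℕ) = (b.2.2 : ℕ) then 1 else 0

lemma mul_shiftH_apply {N : ℕ} {α μ : Fin N → ℕ}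
    (X : Matrix (BTIdx N α μ) (BTIdx N α μ) ℂ)
    (a : BTIdx N α μ) (s : Fin N) (j : Fin (α s)) (q : Fin (μ s)) :
    (X * shiftH N α μ) a ⟨s, j, q⟩ =
      if h : 0 < (j : ℕ) then
        X a ⟨s, ⟨(j : ℕ) - 1, by have := j.isLt; omega⟩, q⟩ else 0 := by
  rw [Matrix.mul_apply]
  split_ifs with h
  · rw [Finset.sum_eq_single
      (⟨s, ⟨(j : ℕ) - 1, by have := j.isLt; omega⟩, q⟩ : BTIdx N α μ)]
    · have : shiftH N α μ ⟨s, ⟨(j : ℕ) - 1, by have := j.isLt; omega⟩, q⟩ ⟨s, j, q⟩ = 1 := by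
        simp only [shiftH]
        split_ifs with hc
        · rfl
        · exact absurd (by and_intros <;> first | trivial | omega) hc
      rw [this, mul_one]
    · rintro ⟨r', j', q'⟩ - hc
      have : shiftH N α μ ⟨r', j', q'⟩ ⟨s, j, q⟩ = 0 := by
        simp only [shiftH]
        split_ifs with hcond
        · exfalso
          obtain ⟨h1, h2, h3⟩ := hcond
          subst h1
          apply hc
          have hj' : j' = ⟨(j : ℕ) - 1, by have := j.isLt; omega⟩ :=
            Fin.ext (by show (j' : ℕ) = (j : ℕ) - 1; omega)
          have hq' : q' = q := Fin.ext h3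
          rw [hj', hq']
        · rfl
      rw [this, mul_zero]
    · intro h'; exact absurd (Finset.mem_univ _) h'
  · apply Finset.sum_eq_zero
    rintro ⟨r', j', q'⟩ -
    have : shiftH N α μ ⟨r', j', q'⟩ ⟨s, j, q⟩ = 0 := by
      simp only [shiftH]
      split_ifs with hcond
      · exfalso
        obtain ⟨h1, h2, h3⟩ := hcond
        omega
      · rfl
    rw [this, mul_zero]

lemma shiftH_mul_apply {N : ℕ} {α μ : Fin N → ℕ}
    (X : Matrix (BTIdx N α μ) (BTIdx N α μ) ℂ)
    (r : Fin N) (i : Fin (α r)) (p : Fin (μ r)) (b : BTIdx N α μ) :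
    (shiftH N α μ * X) ⟨r, i, p⟩ b =
      if h : (i : ℕ) + 1 < α r then X ⟨r, ⟨(i : ℕ) + 1, h⟩, p⟩ b else 0 := by
  rw [Matrix.mul_apply]
  split_ifs with h
  · rw [Finset.sum_eq_single (⟨r, ⟨(i : ℕ) + 1, h⟩, p⟩ : BTIdx N α μ)]
    · have : shiftH N α μ ⟨r, i, p⟩ ⟨r, ⟨(i : ℕ) + 1, h⟩, p⟩ = 1 := by
        simp only [shiftH]
        split_ifs with hc
        · rfl
        · exact absurd (by and_intros <;> first | trivial | omega) hc
      rw [this, one_mul]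
    · rintro ⟨r', i', p'⟩ - hc
      have : shiftH N α μ ⟨r, i, p⟩ ⟨r', i', p'⟩ = 0 := by
        simp only [shiftH]
        split_ifs with hcond
        · exfalso
          obtain ⟨h1, h2, h3⟩ := hcond
          subst h1
          apply hc
          have hi' : i' = ⟨(i : ℕ) + 1, h⟩ :=
            Fin.ext (by show (i' : ℕ) = (i : ℕ) + 1; omega)
          have hp' : p' = p := Fin.ext h3.symm
          rw [hi', hp']
        · rfl
      rw [this, zero_mul]
    · intro h'; exact absurd (Finset.mem_univ _) h'
  · apply Finset.sum_eq_zero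
    rintro ⟨r', i', p'⟩ -
    have : shiftH N α μ ⟨r, i, p⟩ ⟨r', i', p'⟩ = 0 := by
      simp only [shiftH]
      split_ifs with hcond
      · exfalso
        obtain ⟨h1, h2, h3⟩ := hcond
        subst h1
        have := i'.isLt
        omega
      · rfl
    rw [this, zero_mul]

lemma blockToeplitz_iff_commute {N : ℕ} {α μ : Fin N → ℕ}
    (X : Matrix (BTIdx N α μ) (BTIdx N α μ) ℂ) :
    BlockToeplitz N α μ X ↔ X * shiftH N α μ = shiftH N α μ * X := by
  constructor
  · rintro ⟨h1, h2, h3⟩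
    ext ⟨r, i, p⟩ ⟨s, j, q⟩
    rw [mul_shiftH_apply, shiftH_mul_apply]
    split_ifs with hj hi1 hi2
    · exact (h1 r s i ⟨(i : ℕ) + 1, hi1⟩ ⟨(j : ℕ) - 1, by have := j.isLt; omega⟩ j p q rfl
        (by show (j : ℕ) = (j : ℕ) - 1 + 1; omega)).symm
    · exact h3 r s i ⟨(j : ℕ) - 1, by have := j.isLt; omega⟩ p q
        (by have := i.isLt; omega)
        (by show (j : ℕ) - 1 + 1 < α s; have := j.isLt; omega)
    · exact (h2 r s ⟨(i : ℕ) + 1, hi2⟩ j p q (by show (i : ℕ) + 1 ≠ 0; omega) (by omega)).symm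
    · rfl
  · intro hc
    have key : ∀ (a b : BTIdx N α μ),
        (X * shiftH N α μ) a b = (shiftH N α μ * X) a b := fun a b => by rw [hc]
    refine ⟨?_, ?_, ?_⟩
    · intro r s i i' j j' p q hi hj
      have h := key ⟨r, i, p⟩ ⟨s, j', q⟩
      rw [mul_shiftH_apply, shiftH_mul_apply,
        dif_pos (by omega : 0 < (j' : ℕ)),
        dif_pos (by have := i'.isLt; omega : (i : ℕ) + 1 < α r)] at h
      have e1 : (⟨(j' : ℕ) - 1, by have := j'.isLt; omega⟩ : Fin (α s)) = j :=
        Fin.ext (by show (j' : ℕ) - 1 = (j : ℕ); omega)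
      have e2 : (⟨(i : ℕ) + 1, by have := i'.isLt; omega⟩ : Fin (α r)) = i' :=
        Fin.ext (by show (i : ℕ) + 1 = (i' : ℕ); omega)
      rw [e1, e2] at h
      exact h.symm
    · intro r s i j p q hi hj
      have hi1 : (i : ℕ) - 1 < α r := by have := i.isLt; omega
      have h := key ⟨r, ⟨(i : ℕ) - 1, hi1⟩, p⟩ ⟨s, j, q⟩
      rw [mul_shiftH_apply, shiftH_mul_apply,
        dif_neg (by omega : ¬ 0 < (j : ℕ)),
        dif_pos (by show (i : ℕ) - 1 + 1 < α r; have := i.isLt; omega)] at h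
      have e1 : (⟨((⟨(i : ℕ) - 1, hi1⟩ : Fin (α r)) : ℕ) + 1,
          by show (i : ℕ) - 1 + 1 < α r; have := i.isLt; omega⟩ : Fin (α r)) = i :=
        Fin.ext (by show (i : ℕ) - 1 + 1 = (i : ℕ); omega)
      rw [e1] at h
      exact h.symm
    · intro r s i j p q hi hj
      have h := key ⟨r, i, p⟩ ⟨s, ⟨(j : ℕ) + 1, hj⟩, q⟩
      rw [mul_shiftH_apply, shiftH_mul_apply,
        dif_pos (by show 0 < (j : ℕ) + 1; omega),
        dif_neg (by omega : ¬ (i : ℕ) + 1 < α r)] at h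
      have e1 : (⟨((⟨(j : ℕ) + 1, hj⟩ : Fin (α s)) : ℕ) - 1,
          by show (j : ℕ) + 1 - 1 < α s; have := j.isLt; omega⟩ : Fin (α s)) = j :=
        Fin.ext (by show (j : ℕ) + 1 - 1 = (j : ℕ); omega)
      rw [e1] at h
      exact h

/-- `𝕋^{α,μ}` is a subgroup of `GL_n(ℂ)`: it contains the identity and
is closed under products and inverses. -/
theorem stmt10 (N : ℕ) (hN : 0 < N) (α m : Fin N → ℕ)
    (hmono : ∀ r s : Fin N, r < s → α s < α r)
    (hα : ∀ r, 0 < α r) (hm : ∀ r, 0 < m r) :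
    (1 ∈ {X : Matrix ((r : Fin N) × (Fin (α r) × Fin (m r)))
          ((r : Fin N) × (Fin (α r) × Fin (m r))) ℂ |
        IsUnit X ∧ BlockToeplitz N α m X}) ∧
    (∀ X Y, X ∈ {X | IsUnit X ∧ BlockToeplitz N α m X} →
        Y ∈ {X | IsUnit X ∧ BlockToeplitz N α m X} →
        X * Y ∈ {X | IsUnit X ∧ BlockToeplitz N α m X}) ∧
    (∀ X, X ∈ {X | IsUnit X ∧ BlockToeplitz N α m X} →
        X⁻¹ ∈ {X | IsUnit X ∧ BlockToeplitz N α m X}) := by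
  refine ⟨⟨isUnit_one, ?_⟩, ?_, ?_⟩
  · rw [blockToeplitz_iff_commute, one_mul, mul_one]
  · rintro X Y ⟨hXu, hXt⟩ ⟨hYu, hYt⟩
    refine ⟨hXu.mul hYu, ?_⟩
    rw [blockToeplitz_iff_commute] at hXt hYt ⊢
    rw [mul_assoc, hYt, ← mul_assoc, hXt, mul_assoc]
  · rintro X ⟨hXu, hXt⟩
    have hdet : IsUnit X.det := (Matrix.isUnit_iff_isUnit_det X).mp hXu
    refine ⟨Matrix.isUnit_nonsing_inv_iff.mpr hXu, ?_⟩
    rw [blockToeplitz_iff_commute] at hXt ⊢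
    calc X⁻¹ * shiftH N α m = X⁻¹ * shiftH N α m * (X * X⁻¹) := by
          rw [Matrix.mul_nonsing_inv X hdet, mul_one]
      _ = X⁻¹ * (X * shiftH N α m) * X⁻¹ := by
          rw [hXt]; simp only [mul_assoc]
      _ = shiftH N α m * X⁻¹ := by
          rw [← mul_assoc, Matrix.nonsing_inv_mul X hdet, one_mul]

end
end

section
/- Let λ ∈ ℂ, let α_1, …, α_k ≥ 1 be positive integers (repetitions allowed), and let J := J_{α_1}(λ) ⊕ ⋯ ⊕ J_{α_k}(λ) be the block diagonal matrix of size n = α_1 + … + α_k whose diagonal blocks are Jordan blocks all with the same eigenvalue λ. Then for every n×n complex matrix X: exp(J) X = X exp(J) if and only if J X = X J. In other words, the commutant of exp(J) coincides with the commutant of J. -/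
open Matrix Polynomial

noncomputable section

/-- The `n × n` upper triangular Jordan block `J_n(λ)`. -/
def Jb (n : ℕ) (lam : ℂ) : Matrix (Fin n) (Fin n) ℂ :=
  Matrix.of fun i j => if j = i then lam else if (j : ℕ) = (i : ℕ) + 1 then 1 else 0

section Aux

variable {ι : Type*} [Fintype ι] [DecidableEq ι]

lemma Jb0_pow (m p : ℕ) (i j : Fin m) :
    ((Jb m 0) ^ p) i j = if (j : ℕ) = (i : ℕ) + p then 1 else 0 := by
  induction p generalizing i j with
  | zero => simp [Matrix.one_apply, Fin.ext_iff, eq_comm]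
  | succ p ih =>
    rw [pow_succ, Matrix.mul_apply]
    by_cases h : (i : ℕ) + p < m
    · rw [Finset.sum_eq_single (⟨(i : ℕ) + p, h⟩ : Fin m)]
      · rw [ih]
        simp only [Jb, Matrix.of_apply]
        split_ifs <;> simp_all [Fin.ext_iff] <;> omega
      · intro l _ hl
        rw [ih, if_neg, zero_mul]
        intro hc
        exact hl (Fin.ext hc)
      · intro hmem; exact absurd (Finset.mem_univ _) hmem
    · rw [Finset.sum_eq_zero, if_neg (by omega)]
      intro l _
      rw [ih, if_neg (by omega), zero_mul]

lemma Jb0_pow_eq_zero (m p : ℕ) (h : m ≤ p) : (Jb m 0) ^ p = 0 := by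
  ext i j
  rw [Jb0_pow]
  simp only [Matrix.zero_apply]
  rw [if_neg]
  omega

lemma comm_aeval (N : Matrix ι ι ℂ) (p : ℂ[X]) : Commute N (aeval N p) := by
  induction p using Polynomial.induction_on' with
  | add p q hp hq => rw [map_add]; exact hp.add_right hq
  | monomial n a =>
    rw [aeval_monomial]
    have h1 : Commute N (algebraMap ℂ (Matrix ι ι ℂ) a) := (Algebra.commutes a N).symm
    exact h1.mul_right (Commute.pow_right (Commute.refl N) n)

lemma commute_aeval_right {N X : Matrix ι ι ℂ} (h : Commute X N) (p : ℂ[X]) :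
    Commute X (aeval N p) := by
  induction p using Polynomial.induction_on' with
  | add p q hp hq => rw [map_add]; exact hp.add_right hq
  | monomial n a =>
    rw [aeval_monomial]
    have h1 : Commute X (algebraMap ℂ (Matrix ι ι ℂ) a) := (Algebra.commutes a X).symm
    exact h1.mul_right (h.pow_right n)

/-- Decomposition `N^j * aeval N q = N^(j+1) * aeval N q.divX + q.coeff 0 • N^j`. -/
lemma pow_mul_aeval_dec (N : Matrix ι ι ℂ) (j : ℕ) (q : ℂ[X]) :
    N ^ j * aeval N q = N ^ (j + 1) * aeval N q.divX + q.coeff 0 • N ^ j := by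
  conv_lhs => rw [← q.divX_mul_X_add]
  rw [map_add, _root_.map_mul, aeval_X, aeval_C, mul_add]
  congr 1
  · rw [← mul_assoc, mul_assoc (N ^ j), ← (comm_aeval N q.divX).eq, ← mul_assoc, ← pow_succ]
  · rw [Algebra.algebraMap_eq_smul_one, mul_smul_comm, mul_one]

/-- Core lemma: if `N` is nilpotent, `b` has constant coefficient `1`, and `X` commutes with
`N * b(N)`, then `X` commutes with `N`. -/
lemma commute_of_commute_unipotent_part
    (N X : Matrix ι ι ℂ) (nn : ℕ) (hN : N ^ nn = 0)
    (b : ℂ[X]) (hb : b.coeff 0 = 1)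
    (hM : Commute X (N * aeval N b)) :
    Commute X N := by
  have hMpow : ∀ j : ℕ, (N * aeval N b) ^ j = N ^ j + N ^ (j + 1) * aeval N ((b ^ j).divX) := by
    intro j
    have h1 : (N * aeval N b) ^ j = N ^ j * aeval N (b ^ j) := by
      rw [(comm_aeval N b).mul_pow, map_pow]
    have h2 : (b ^ j).coeff 0 = 1 := by
      have h3 : Polynomial.constantCoeff (b ^ j) = 1 := by
        rw [map_pow, Polynomial.constantCoeff_apply, hb, one_pow]
      rw [← Polynomial.constantCoeff_apply, h3]
    rw [h1, pow_mul_aeval_dec, h2, one_smul, add_comm]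
  have key : ∀ t j : ℕ, nn ≤ j + t → ∀ q : ℂ[X], Commute X (N ^ j * aeval N q) := by
    intro t
    induction t with
    | zero =>
      intro j hj q
      have hz : N ^ j = 0 := by
        calc N ^ j = N ^ nn * N ^ (j - nn) := by rw [← pow_add]; congr 1; omega
        _ = 0 := by rw [hN, zero_mul]
      rw [hz, zero_mul]
      exact Commute.zero_right X
    | succ t ih =>
      intro j hj q
      have hNj : Commute X (N ^ j) := by
        have h1 : N ^ j = (N * aeval N b) ^ j - N ^ (j + 1) * aeval N ((b ^ j).divX) := by
          rw [hMpow j, add_sub_cancel_right]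
        rw [h1]
        exact (hM.pow_right j).sub_right (ih (j + 1) (by omega) _)
      rw [pow_mul_aeval_dec]
      exact (ih (j + 1) (by omega) _).add_right (hNj.smul_right _)
  have h := key nn 1 (by omega) 1
  simpa using h

end Aux

/-- The commutant of `exp(J)`, where
`J = J_{α_1}(λ) ⊕ ⋯ ⊕ J_{α_k}(λ)` has a single eigenvalue `λ`, coincides with the
commutant of `J`. -/
theorem stmt13 (k : ℕ) (α : Fin k → ℕ) (hα : ∀ r, 0 < α r) (lam : ℂ) :
    ∀ X : Matrix ((r : Fin k) × Fin (α r)) ((r : Fin k) × Fin (α r)) ℂ,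
      NormedSpace.exp (Matrix.blockDiagonal' fun r => Jb (α r) lam) * X
          = X * NormedSpace.exp (Matrix.blockDiagonal' fun r => Jb (α r) lam) ↔
      (Matrix.blockDiagonal' fun r => Jb (α r) lam) * X
          = X * (Matrix.blockDiagonal' fun r => Jb (α r) lam) := by
  intro X
  classical
  rcases Nat.eq_zero_or_pos k with hk | hk
  · subst hk
    haveI : IsEmpty ((r : Fin 0) × Fin (α r)) := by
      constructor; rintro ⟨⟨_, h⟩, _⟩; omega
    constructor <;> intro _ <;> apply Subsingleton.elim
  set N : Matrix ((r : Fin k) × Fin (α r)) ((r : Fin k) × Fin (α r)) ℂ :=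
    Matrix.blockDiagonal' (fun r => Jb (α r) 0) with hNdef
  set J : Matrix ((r : Fin k) × Fin (α r)) ((r : Fin k) × Fin (α r)) ℂ :=
    Matrix.blockDiagonal' (fun r => Jb (α r) lam) with hJdef
  have hblock : ∀ m : ℕ, Jb m lam = lam • (1 : Matrix (Fin m) (Fin m) ℂ) + Jb m 0 := by
    intro m
    ext i j
    simp only [Jb, Matrix.add_apply, Matrix.smul_apply, Matrix.one_apply, Matrix.of_apply,
      smul_eq_mul]
    by_cases h1 : j = i
    · subst h1; simp
    · simp [h1, Ne.symm h1]
  have hJ : J = lam • 1 + N := by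
    rw [hJdef, hNdef, ← Matrix.blockDiagonal'_one (α := ℂ), ← Matrix.blockDiagonal'_smul,
      ← Matrix.blockDiagonal'_add]
    refine congrArg Matrix.blockDiagonal' ?_
    funext r
    simpa using hblock (α r)
  set d := Finset.univ.sup α with hd
  have hαd : ∀ r, α r ≤ d := fun r => Finset.le_sup (Finset.mem_univ r)
  have hNnil : N ^ (d + 1) = 0 := by
    rw [hNdef, ← Matrix.blockDiagonal'_pow]
    have h1 : ((fun r => Jb (α r) 0) ^ (d + 1) : ∀ r : Fin k, Matrix (Fin (α r)) (Fin (α r)) ℂ)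
        = 0 := by
      funext r
      exact Jb0_pow_eq_zero _ _ (le_trans (hαd r) (Nat.le_succ d))
    rw [h1, Matrix.blockDiagonal'_zero]
  have hd1 : 1 ≤ d := le_trans (hα ⟨0, hk⟩) (hαd ⟨0, hk⟩)
  set b : ℂ[X] := ∑ i ∈ Finset.range d, Polynomial.C ((((i + 1).factorial : ℂ))⁻¹) *
    Polynomial.X ^ i with hbdef
  have hb0 : b.coeff 0 = 1 := by
    rw [hbdef, Polynomial.finset_sum_coeff]
    rw [Finset.sum_eq_single 0]
    · simp
    · intro i _ hi
      simp [Polynomial.coeff_C_mul, Polynomial.coeff_X_pow, hi, Ne.symm hi]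
    · intro h; exact absurd (Finset.mem_range.mpr (by omega)) h
  have hexpN : NormedSpace.exp N = 1 + N * aeval N b := by
    simp only [NormedSpace.exp_eq_tsum (𝕂 := ℂ)]
    have hvan : ∀ i ∉ Finset.range (d + 1),
        ((i.factorial : ℂ))⁻¹ • N ^ i = 0 := by
      intro i hi
      simp only [Finset.mem_range, not_lt] at hi
      have h1 : N ^ i = N ^ (d + 1) * N ^ (i - (d + 1)) := by
        rw [← pow_add]; congr 1; omega
      rw [h1, hNnil, zero_mul, smul_zero]
    have h2 : aeval N b = ∑ i ∈ Finset.range d, (((i + 1).factorial : ℂ))⁻¹ • N ^ i := by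
      rw [hbdef, map_sum]
      refine Finset.sum_congr rfl fun i _ => ?_
      rw [_root_.map_mul, aeval_C, map_pow, aeval_X, ← Algebra.smul_def]
    rw [tsum_eq_sum hvan, Finset.sum_range_succ', h2, Finset.mul_sum,
      add_comm (1 : Matrix ((r : Fin k) × Fin (α r)) ((r : Fin k) × Fin (α r)) ℂ)]
    congr 1
    · refine Finset.sum_congr rfl fun i _ => ?_
      rw [mul_smul_comm, ← pow_succ']
    · simp
  have hexpscal : NormedSpace.exp
      (lam • (1 : Matrix ((r : Fin k) × Fin (α r)) ((r : Fin k) × Fin (α r)) ℂ))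
      = Complex.exp lam • 1 := by
    simp only [NormedSpace.exp_eq_tsum (𝕂 := ℂ)]
    simp_rw [_root_.smul_pow, one_pow, smul_smul]
    rw [Summable.tsum_smul_const]
    · congr 1
      rw [Complex.exp_eq_exp_ℂ, NormedSpace.exp_eq_tsum (𝕂 := ℂ)]
      simp [smul_eq_mul]
    · have h6 := NormedSpace.expSeries_summable' (𝕂 := ℂ) (𝔸 := ℂ) lam
      simpa [smul_eq_mul] using h6
  have hexpJ : NormedSpace.exp J = Complex.exp lam • NormedSpace.exp N := by
    rw [hJ, Matrix.exp_add_of_commute (lam • 1) N ((Commute.one_left N).smul_left lam),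
      hexpscal, smul_mul_assoc, one_mul]
  constructor
  · intro h
    have hE : Commute X (NormedSpace.exp N) := by
      rw [hexpJ] at h
      have h2 : Complex.exp lam • (NormedSpace.exp N * X)
          = Complex.exp lam • (X * NormedSpace.exp N) := by
        rw [← smul_mul_assoc, ← mul_smul_comm]; exact h
      have h3 := smul_right_injective
        (Matrix ((r : Fin k) × Fin (α r)) ((r : Fin k) × Fin (α r)) ℂ)
        (Complex.exp_ne_zero lam) h2
      exact h3.symm
    have hM : Commute X (N * aeval N b) := by
      have h4 : N * aeval N b = NormedSpace.exp N - 1 := by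
        rw [hexpN, add_sub_cancel_left]
      rw [h4]
      exact hE.sub_right (Commute.one_right X)
    have hXN : Commute X N := commute_of_commute_unipotent_part N X (d + 1) hNnil b hb0 hM
    rw [hJ, add_mul, mul_add, smul_mul_assoc, mul_smul_comm, one_mul, mul_one, hXN.eq]
  · intro h
    have hXN : Commute X N := by
      rw [hJ, add_mul, mul_add, smul_mul_assoc, mul_smul_comm, one_mul, mul_one] at h
      exact (add_left_cancel h).symm
    have hE : Commute X (NormedSpace.exp N) := by
      rw [hexpN]
      exact (Commute.one_right X).add_right (hXN.mul_right (commute_aeval_right hXN b))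
    rw [hexpJ, smul_mul_assoc, mul_smul_comm, hE.eq]

end
end

section
/- Fix integers N ≥ 1, α_1 > α_2 > … > α_N ≥ 1 and m_1, …, m_N ≥ 1. Let 𝓕 := ⊕_{r=1}^{N} E_{α_r}(I_{m_r}), and let 𝓑 = ⊕_{r=1}^{N} T_a(B_0^r, B_1^r, …, B_{α_r−1}^r) and 𝓒 = ⊕_{r=1}^{N} T_a(C_0^r, C_1^r, …, C_{α_r−1}^r), where B_0^r, C_0^r ∈ GL_{m_r}(ℂ), and where B_l^r and C_l^r are symmetric when α_r − l is odd and skew-symmetric when α_r − l is even. If 𝒳 ∈ 𝕋^{α,μ} satisfies 𝓒 = 𝓕 𝒳ᵀ 𝓕 𝓑 𝒳, then for every r the leading diagonal coefficient A_0^{rr} := (𝒳_{rr})_{11} (the common m_r × m_r sub-block on the diagonal of the r-th diagonal block of 𝒳) satisfies C_0^r = (A_0^{rr})ᵀ B_0^r A_0^{rr}. -/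
open Matrix

noncomputable section

/-- `⊕_{r=1}^{N} T_a(B_0^r, …, B_{α_r-1}^r)`: the direct sum of block alternating upper
triangular Toeplitz matrices with coefficients `B r 0, B r 1, …`. -/
def TaDiag (N : ℕ) (α μ : Fin N → ℕ) (B : ∀ r, ℕ → Matrix (Fin (μ r)) (Fin (μ r)) ℂ) :
    Matrix ((r : Fin N) × (Fin (α r) × Fin (μ r)))
      ((r : Fin N) × (Fin (α r) × Fin (μ r))) ℂ :=
  Matrix.of fun x y =>
    if h : x.1 = y.1 ∧ (x.2.1 : ℕ) ≤ (y.2.1 : ℕ) then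
      (-1 : ℂ) ^ (x.2.1 : ℕ) *
        B x.1 ((y.2.1 : ℕ) - (x.2.1 : ℕ)) x.2.2 (Fin.cast (congrArg μ h.1.symm) y.2.2)
    else 0

/-- Diagonal shift invariance from the block-Toeplitz pattern, val-based form. -/
lemma shiftT {N : ℕ} {α μ : Fin N → ℕ}
    {X : Matrix ((r : Fin N) × (Fin (α r) × Fin (μ r)))
      ((r : Fin N) × (Fin (α r) × Fin (μ r))) ℂ}
    (hT : BlockToeplitz N α μ X) (s r : Fin N) :
    ∀ (t : ℕ) (i i' : Fin (α s)) (j j' : Fin (α r)) (a : Fin (μ s)) (q : Fin (μ r)),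
      (i' : ℕ) = (i : ℕ) + t → (j' : ℕ) = (j : ℕ) + t →
      X ⟨s, i', a⟩ ⟨r, j', q⟩ = X ⟨s, i, a⟩ ⟨r, j, q⟩ := by
  intro t
  induction t with
  | zero =>
    intro i i' j j' a q hi hj
    have : i' = i := Fin.ext (by omega)
    have : j' = j := Fin.ext (by omega)
    subst this; subst ‹i' = i›; rfl
  | succ t ih =>
    intro i i' j j' a q hi hj
    have hi2 : (i : ℕ) + t < α s := by have := i'.isLt; omega
    have hj2 : (j : ℕ) + t < α r := by have := j'.isLt; omega
    have key := hT.1 s r ⟨(i : ℕ) + t, hi2⟩ i' ⟨(j : ℕ) + t, hj2⟩ j' a q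
      (show (i' : ℕ) = (i : ℕ) + t + 1 by omega)
      (show (j' : ℕ) = (j : ℕ) + t + 1 by omega)
    exact key.trans (ih i ⟨(i : ℕ) + t, hi2⟩ j ⟨(j : ℕ) + t, hj2⟩ a q rfl rfl)

lemma fcal_mul_apply {N : ℕ} (α μ : Fin N → ℕ)
    (M : Matrix ((r : Fin N) × (Fin (α r) × Fin (μ r)))
      ((r : Fin N) × (Fin (α r) × Fin (μ r))) ℂ)
    (x y : (r : Fin N) × (Fin (α r) × Fin (μ r))) :
    (Fcal N α μ * M) x y
      = M ⟨x.1, ⟨⟨α x.1 - 1 - (x.2.1 : ℕ), by have := x.2.1.isLt; omega⟩, x.2.2⟩⟩ y := by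
  rw [mul_apply]
  rw [Finset.sum_eq_single (⟨x.1, ⟨⟨α x.1 - 1 - (x.2.1 : ℕ), by have := x.2.1.isLt; omega⟩,
      x.2.2⟩⟩ : (r : Fin N) × (Fin (α r) × Fin (μ r)))]
  · have hc : x.1 = x.1 ∧ (x.2.1 : ℕ) + (α x.1 - 1 - (x.2.1 : ℕ)) + 1 = α x.1 ∧
        (x.2.2 : ℕ) = (x.2.2 : ℕ) := ⟨rfl, by have := x.2.1.isLt; omega, rfl⟩
    simp [Fcal, hc]
  · intro z _ hz
    have : Fcal N α μ x z = 0 := by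
      simp only [Fcal, of_apply, ite_eq_right_iff, one_ne_zero]
      rintro ⟨h1, h2, h3⟩
      apply hz
      rcases x with ⟨xr, xi, xp⟩
      rcases z with ⟨zr, zi, zp⟩
      simp only at h1 h2 h3
      subst h1
      simp only [Sigma.mk.inj_iff, heq_eq_eq, Prod.mk.injEq, true_and]
      constructor
      · rw [Fin.eq_mk_iff_val_eq]; have := xi.isLt; omega
      · exact Fin.ext h3.symm
    rw [this, zero_mul]
  · intro h; exact absurd (Finset.mem_univ _) h

lemma tbx {N : ℕ} {α μ : Fin N → ℕ}
    {X : Matrix ((r : Fin N) × (Fin (α r) × Fin (μ r)))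
      ((r : Fin N) × (Fin (α r) × Fin (μ r))) ℂ}
    (hT : BlockToeplitz N α μ X) (B : ∀ r, ℕ → Matrix (Fin (μ r)) (Fin (μ r)) ℂ)
    (v : (r : Fin N) × (Fin (α r) × Fin (μ r))) (r : Fin N) (h0 : 0 < α r) (q : Fin (μ r)) :
    (TaDiag N α μ B * X) v ⟨r, ⟨0, h0⟩, q⟩
      = if (v.2.1 : ℕ) = 0 then
          ∑ w : Fin (μ v.1), B v.1 0 v.2.2 w * X ⟨v.1, ⟨0, v.2.1.pos⟩, w⟩ ⟨r, ⟨0, h0⟩, q⟩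
        else 0 := by
  rw [mul_apply]
  by_cases hv : (v.2.1 : ℕ) = 0
  · rw [if_pos hv]
    rw [← Finset.univ_sigma_univ, Finset.sum_sigma]
    rw [Finset.sum_eq_single v.1]
    · rw [Fintype.sum_prod_type]
      rw [Finset.sum_eq_single (⟨0, v.2.1.pos⟩ : Fin (α v.1))]
      · apply Finset.sum_congr rfl
        intro w _
        congr 1
        have hc : v.1 = v.1 ∧ (v.2.1 : ℕ) ≤ ((⟨0, v.2.1.pos⟩ : Fin (α v.1)) : ℕ) :=
          ⟨rfl, by simp [hv]⟩
        rw [TaDiag]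
        rw [of_apply, dif_pos hc]
        simp [hv]
      · intro k _ hk
        apply Finset.sum_eq_zero
        intro w _
        have hk0 : (k : ℕ) ≠ 0 := by
          intro h; exact hk (Fin.ext h)
        rw [hT.2.1 v.1 r k ⟨0, h0⟩ w q hk0 rfl, mul_zero]
      · intro h; exact absurd (Finset.mem_univ _) h
    · intro s _ hs
      apply Finset.sum_eq_zero
      intro kw _
      have : TaDiag N α μ B v ⟨s, kw⟩ = 0 := by
        rw [TaDiag, of_apply, dif_neg]
        rintro ⟨h1, -⟩
        exact hs h1.symm
      rw [this, zero_mul]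
    · intro h; exact absurd (Finset.mem_univ _) h
  · rw [if_neg hv]
    apply Finset.sum_eq_zero
    intro z _
    by_cases hz : (z.2.1 : ℕ) = 0
    · have : TaDiag N α μ B v z = 0 := by
        rw [TaDiag, of_apply, dif_neg]
        rintro ⟨-, h2⟩
        omega
      rw [this, zero_mul]
    · have : X z ⟨r, ⟨0, h0⟩, q⟩ = 0 := hT.2.1 z.1 r z.2.1 ⟨0, h0⟩ z.2.2 q hz rfl
      rw [this, mul_zero]

/-- If `𝒳 ∈ 𝕋^{α,μ}` satisfies `𝓒 = 𝓕𝒳ᵀ𝓕𝓑𝒳`, then for every `r` the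
leading diagonal coefficient `A_0^{rr} = (𝒳_{rr})_{11}` satisfies
`C_0^r = (A_0^{rr})ᵀ B_0^r A_0^{rr}`. -/
theorem stmt14 (N : ℕ) (hN : 0 < N) (α m : Fin N → ℕ)
    (hmono : ∀ r s : Fin N, r < s → α s < α r)
    (hα : ∀ r, 0 < α r) (hm : ∀ r, 0 < m r)
    (B C : ∀ r, ℕ → Matrix (Fin (m r)) (Fin (m r)) ℂ)
    (hB0 : ∀ r, IsUnit (B r 0)) (hC0 : ∀ r, IsUnit (C r 0))
    (hBsym : ∀ r l, l < α r → Odd (α r - l) → (B r l)ᵀ = B r l)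
    (hBskew : ∀ r l, l < α r → Even (α r - l) → (B r l)ᵀ = -B r l)
    (hCsym : ∀ r l, l < α r → Odd (α r - l) → (C r l)ᵀ = C r l)
    (hCskew : ∀ r l, l < α r → Even (α r - l) → (C r l)ᵀ = -C r l)
    (X : Matrix ((r : Fin N) × (Fin (α r) × Fin (m r)))
      ((r : Fin N) × (Fin (α r) × Fin (m r))) ℂ)
    (hX : IsUnit X ∧ BlockToeplitz N α m X)
    (heq : TaDiag N α m C =
      Fcal N α m * Xᵀ * Fcal N α m * TaDiag N α m B * X) :
    ∀ r : Fin N,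
      (Matrix.of fun p q : Fin (m r) =>
          X ⟨r, ⟨0, hα r⟩, p⟩ ⟨r, ⟨0, hα r⟩, q⟩)ᵀ * B r 0 *
        (Matrix.of fun p q : Fin (m r) => X ⟨r, ⟨0, hα r⟩, p⟩ ⟨r, ⟨0, hα r⟩, q⟩)
      = C r 0 := by
  intro r
  obtain ⟨-, hT⟩ := hX
  ext p q
  have H : TaDiag N α m C ⟨r, ⟨0, hα r⟩, p⟩ ⟨r, ⟨0, hα r⟩, q⟩
      = (Fcal N α m * (Xᵀ * (Fcal N α m * (TaDiag N α m B * X))))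
          ⟨r, ⟨0, hα r⟩, p⟩ ⟨r, ⟨0, hα r⟩, q⟩ := by
    rw [← Matrix.mul_assoc, ← Matrix.mul_assoc, ← Matrix.mul_assoc, ← heq]
  have hL : TaDiag N α m C ⟨r, ⟨0, hα r⟩, p⟩ ⟨r, ⟨0, hα r⟩, q⟩ = C r 0 p q := by
    have hc : r = r ∧ ((⟨0, hα r⟩ : Fin (α r)) : ℕ) ≤ ((⟨0, hα r⟩ : Fin (α r)) : ℕ) :=
      ⟨rfl, le_refl _⟩
    rw [TaDiag, of_apply, dif_pos hc]
    simp
  have hR : (Fcal N α m * (Xᵀ * (Fcal N α m * (TaDiag N α m B * X))))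
        ⟨r, ⟨0, hα r⟩, p⟩ ⟨r, ⟨0, hα r⟩, q⟩
      = ∑ a : Fin (m r), X ⟨r, ⟨0, hα r⟩, a⟩ ⟨r, ⟨0, hα r⟩, p⟩ *
          ∑ w : Fin (m r), B r 0 a w * X ⟨r, ⟨0, hα r⟩, w⟩ ⟨r, ⟨0, hα r⟩, q⟩ := by
    rw [fcal_mul_apply]
    rw [mul_apply]
    rw [← Finset.univ_sigma_univ, Finset.sum_sigma]
    rw [Finset.sum_eq_single r]
    · rw [Fintype.sum_prod_type]
      rw [Finset.sum_eq_single
        (⟨α r - 1 - ((⟨0, hα r⟩ : Fin (α r)) : ℕ), by have := hα r; omega⟩ : Fin (α r))]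
      · apply Finset.sum_congr rfl
        intro a _
        rw [transpose_apply, fcal_mul_apply, tbx hT]
        rw [if_pos (show α r - 1 - (α r - 1 - 0) = 0 by omega)]
        congr 1
        · exact shiftT hT r r (α r - 1) ⟨0, hα r⟩ _ ⟨0, hα r⟩ _ a p
            (show α r - 1 - 0 = 0 + (α r - 1) by omega)
            (show α r - 1 - 0 = 0 + (α r - 1) by omega)
      · -- k ≠ last row index : the tbx `if` is zero
        intro k _ hk
        apply Finset.sum_eq_zero
        intro a _
        rw [transpose_apply, fcal_mul_apply, tbx hT]
        have hkv : (k : ℕ) ≠ α r - 1 := by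
          intro h
          exact hk (Fin.ext (show (k : ℕ) = α r - 1 - 0 by omega))
        rw [if_neg (show ¬ (α r - 1 - (k : ℕ) = 0) by have := k.isLt; omega), mul_zero]
      · intro h; exact absurd (Finset.mem_univ _) h
    · -- s ≠ r
      intro s _ hs
      apply Finset.sum_eq_zero
      intro ka _
      obtain ⟨k, a⟩ := ka
      rw [transpose_apply, fcal_mul_apply, tbx hT]
      by_cases hz : (α s - 1 - (k : ℕ) : ℕ) = 0
      · rw [if_pos hz]
        have hk : (k : ℕ) = α s - 1 := by have := k.isLt; omega
        have hαne : α s ≠ α r := by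
          rcases lt_trichotomy s r with h' | h' | h'
          · have := hmono s r h'; omega
          · exact absurd h' hs
          · have := hmono r s h'; omega
        rcases lt_or_gt_of_ne hαne with hlt | hgt
        · -- α s < α r : second factor vanishes
          have hzero : ∀ w : Fin (m s), X ⟨s, ⟨0, k.pos⟩, w⟩ ⟨r, ⟨0, hα r⟩, q⟩ = 0 := by
            intro w
            have hsh := shiftT hT s r (α s - 1) ⟨0, k.pos⟩
              ⟨α s - 1, by have := hα s; omega⟩ ⟨0, hα r⟩ ⟨α s - 1, by omega⟩ w q
              (show α s - 1 = 0 + (α s - 1) by omega)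
              (show α s - 1 = 0 + (α s - 1) by omega)
            rw [← hsh]
            exact hT.2.2 s r ⟨α s - 1, by have := hα s; omega⟩ ⟨α s - 1, by omega⟩ w q
              (show α s - 1 + 1 = α s by have := hα s; omega)
              (show α s - 1 + 1 < α r by have := hα s; omega)
          rw [Finset.sum_eq_zero (fun w _ => by rw [hzero w, mul_zero]), mul_zero]
        · -- α s > α r : first factor vanishes
          have hb1 : α r - 1 - ((⟨0, hα r⟩ : Fin (α r)) : ℕ) < α r :=
            Nat.lt_of_le_of_lt (Nat.sub_le _ _) (Nat.sub_lt (hα r) Nat.one_pos)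
          have hb2 : α s - α r < α s := Nat.sub_lt_self (hα r) (le_of_lt hgt)
          have hzero : X ⟨s, k, a⟩
              ⟨r, ⟨α r - 1 - ((⟨0, hα r⟩ : Fin (α r)) : ℕ), hb1⟩, p⟩ = 0 := by
            have hsh := shiftT hT s r (α r - 1) ⟨α s - α r, hb2⟩ k ⟨0, hα r⟩
              ⟨α r - 1 - ((⟨0, hα r⟩ : Fin (α r)) : ℕ), hb1⟩ a p
              (show (k : ℕ) = α s - α r + (α r - 1) by omega)
              (show α r - 1 - 0 = 0 + (α r - 1) by omega)
            rw [hsh]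
            exact hT.2.1 s r ⟨α s - α r, hb2⟩ ⟨0, hα r⟩ a p
              (show α s - α r ≠ 0 by omega) rfl
          rw [hzero, zero_mul]
      · rw [if_neg hz, mul_zero]
    · intro h; exact absurd (Finset.mem_univ _) h
  rw [hL, hR] at H
  rw [H]
  simp only [mul_apply, transpose_apply, of_apply, Finset.sum_mul, Finset.mul_sum, mul_assoc]
  exact Finset.sum_comm

end
end

section
/- Let α, m ≥ 1 and let B_0, …, B_{α−1} ∈ M_m(ℂ) satisfy: B_l is symmetric (B_lᵀ = B_l) when α − l is odd, and skew-symmetric (B_lᵀ = −B_l) when α − l is even. Then E_α(I_m) · (T_a(B_0, …, B_{α−1}))ᵀ · E_α(I_m) = T_a(B_0, …, B_{α−1}). -/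
open Matrix

noncomputable section

/-- The block alternating upper triangular Toeplitz matrix `T_a(B 0, …, B (a-1))`:
the `(j,k)`-th `m × m` block (0-based) equals `(-1)^j B (k - j)` for `j ≤ k` and `0`
otherwise. -/
def TaMat (a m : ℕ) (B : ℕ → Matrix (Fin m) (Fin m) ℂ) :
    Matrix (Fin a × Fin m) (Fin a × Fin m) ℂ :=
  Matrix.of fun x y =>
    if (x.1 : ℕ) ≤ (y.1 : ℕ) then
      (-1 : ℂ) ^ (x.1 : ℕ) * B ((y.1 : ℕ) - (x.1 : ℕ)) x.2 y.2
    else 0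

/-- `E_a(I_m)`: the block exchange matrix, with `I_m` on the block antidiagonal. -/
def EaMat (a m : ℕ) : Matrix (Fin a × Fin m) (Fin a × Fin m) ℂ :=
  Matrix.of fun x y => if (x.1 : ℕ) + (y.1 : ℕ) + 1 = a ∧ x.2 = y.2 then 1 else 0

private lemma neg_one_pow_congr_mod {n k : ℕ} (h : n % 2 = k % 2) :
    ((-1 : ℂ)) ^ n = (-1) ^ k := by
  conv_lhs => rw [← Nat.div_add_mod n 2]
  conv_rhs => rw [← Nat.div_add_mod k 2]
  rw [pow_add, pow_add, pow_mul, pow_mul, h]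
  norm_num

private lemma EaMat_mul (a m : ℕ) (ha : 0 < a)
    (M : Matrix (Fin a × Fin m) (Fin a × Fin m) ℂ) (x y : Fin a × Fin m) :
    (EaMat a m * M) x y = M (⟨a - 1 - (x.1 : ℕ), by omega⟩, x.2) y := by
  rw [Matrix.mul_apply]
  have h0 : ∀ b ∈ Finset.univ, b ≠ (⟨⟨a - 1 - (x.1 : ℕ), by omega⟩, x.2⟩ :
      Fin a × Fin m) → EaMat a m x b * M b y = 0 := by
    intro b _ hb
    have hx := x.1.isLt
    have : ¬ ((x.1 : ℕ) + (b.1 : ℕ) + 1 = a ∧ x.2 = b.2) := by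
      rintro ⟨h1, h2⟩
      apply hb
      refine Prod.ext (Fin.ext ?_) h2.symm
      show (b.1 : ℕ) = a - 1 - (x.1 : ℕ)
      omega
    simp [EaMat, this]
  rw [Finset.sum_eq_single _ h0 (fun h => absurd (Finset.mem_univ _) h)]
  have hx := x.1.isLt
  have : (x.1 : ℕ) + (a - 1 - (x.1 : ℕ)) + 1 = a ∧ x.2 = x.2 := ⟨by omega, rfl⟩
  simp [EaMat, this]

private lemma mul_EaMat (a m : ℕ) (ha : 0 < a)
    (M : Matrix (Fin a × Fin m) (Fin a × Fin m) ℂ) (x y : Fin a × Fin m) :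
    (M * EaMat a m) x y = M x (⟨a - 1 - (y.1 : ℕ), by omega⟩, y.2) := by
  rw [Matrix.mul_apply]
  have h0 : ∀ b ∈ Finset.univ, b ≠ (⟨⟨a - 1 - (y.1 : ℕ), by omega⟩, y.2⟩ :
      Fin a × Fin m) → M x b * EaMat a m b y = 0 := by
    intro b _ hb
    have hy := y.1.isLt
    have : ¬ ((b.1 : ℕ) + (y.1 : ℕ) + 1 = a ∧ b.2 = y.2) := by
      rintro ⟨h1, h2⟩
      apply hb
      refine Prod.ext (Fin.ext ?_) h2
      show (b.1 : ℕ) = a - 1 - (y.1 : ℕ)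
      omega
    simp [EaMat, this]
  rw [Finset.sum_eq_single _ h0 (fun h => absurd (Finset.mem_univ _) h)]
  have hy := y.1.isLt
  have : (a - 1 - (y.1 : ℕ)) + (y.1 : ℕ) + 1 = a ∧ y.2 = y.2 := ⟨by omega, rfl⟩
  simp [EaMat, this]

/-- If `B_l` is symmetric when `a - l` is odd and skew-symmetric when
`a - l` is even, then `E_a(I_m) (T_a(B_0,…,B_{a-1}))ᵀ E_a(I_m) = T_a(B_0,…,B_{a-1})`. -/
theorem stmt17 (a m : ℕ) (ha : 0 < a) (hm : 0 < m)
    (B : ℕ → Matrix (Fin m) (Fin m) ℂ)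
    (hsym : ∀ l, l < a → Odd (a - l) → (B l)ᵀ = B l)
    (hskew : ∀ l, l < a → Even (a - l) → (B l)ᵀ = -B l) :
    EaMat a m * (TaMat a m B)ᵀ * EaMat a m = TaMat a m B := by
  ext x y
  obtain ⟨x1, x2⟩ := x
  obtain ⟨y1, y2⟩ := y
  rw [mul_EaMat a m ha, EaMat_mul a m ha, Matrix.transpose_apply]
  simp only [TaMat, Matrix.of_apply]
  have hx1 := x1.isLt
  have hy1 := y1.isLt
  by_cases hle : (x1 : ℕ) ≤ (y1 : ℕ)
  · have hle' : a - 1 - (y1 : ℕ) ≤ a - 1 - (x1 : ℕ) := by omega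
    rw [if_pos hle, if_pos hle']
    have hdiff : (a - 1 - (x1 : ℕ)) - (a - 1 - (y1 : ℕ)) = (y1 : ℕ) - (x1 : ℕ) := by
      omega
    rw [hdiff]
    set l := (y1 : ℕ) - (x1 : ℕ) with hl
    have hla : l < a := by omega
    rcases Nat.even_or_odd (a - l) with he | ho
    · have hB := hskew l hla he
      have hBe : B l y2 x2 = -(B l x2 y2) := by
        have := congrFun (congrFun hB x2) y2
        simpa [Matrix.transpose_apply] using this
      have hpar : (a - 1 - (y1 : ℕ)) % 2 = ((x1 : ℕ) + 1) % 2 := by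
        obtain ⟨t, ht⟩ := he
        omega
      rw [hBe, neg_one_pow_congr_mod hpar, pow_succ]
      ring
    · have hB := hsym l hla ho
      have hBe : B l y2 x2 = B l x2 y2 := by
        have := congrFun (congrFun hB x2) y2
        simpa [Matrix.transpose_apply] using this
      have hpar : (a - 1 - (y1 : ℕ)) % 2 = (x1 : ℕ) % 2 := by
        obtain ⟨t, ht⟩ := ho
        omega
      rw [hBe, neg_one_pow_congr_mod hpar]
  · have hle' : ¬ (a - 1 - (y1 : ℕ) ≤ a - 1 - (x1 : ℕ)) := by omega
    rw [if_neg hle, if_neg hle']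

end
end

section
/- Let m ≥ 1 and λ ∈ ℂ. Define S_{2m} := (I_m ⊕ F_m) · (1/√2)(I_{2m} + i E_{2m}) and S'_{2m−1} := (I_m ⊕ F_{m−1}) · (1/√2)(I_{2m−1} + i E_{2m−1}). Then S_{2m} and S'_{2m−1} are invertible, and: (1) S_{2m} K_m(λ) S_{2m}^{-1} = J_m(λ) ⊕ J_m(−λ); (2) S'_{2m−1} L_{2m−1} (S'_{2m−1})^{-1} = J_{2m−1}(0). Moreover, K_m(λ) and L_{2m−1} are skew-symmetric; in particular, K_m(λ) is a skew-symmetric matrix similar to J_m(λ) ⊕ J_m(−λ), and L_{2m−1} is a skew-symmetric matrix similar to the nilpotent Jordan block J_{2m−1}(0). -/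
open Matrix Complex

noncomputable section

/-- The `m × m` matrix `M_m` with `1/2` on the first superdiagonal and `-1/2` on the
first subdiagonal. -/
def Mmat (m : ℕ) : Matrix (Fin m) (Fin m) ℂ :=
  Matrix.of fun j k =>
    if (k : ℕ) = (j : ℕ) + 1 then (1 : ℂ) / 2
    else if (j : ℕ) = (k : ℕ) + 1 then -(1 / 2) else 0

/-- The `m × m` matrix `N_m(λ)`. -/
def Nmat (m : ℕ) (lam : ℂ) : Matrix (Fin m) (Fin m) ℂ :=
  Matrix.of fun j k =>
    if (j : ℕ) + (k : ℕ) + 2 = m + 1 then Complex.I * lam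
    else if (j : ℕ) + (k : ℕ) + 2 = m ∨ (j : ℕ) + (k : ℕ) + 2 = m + 2 then Complex.I / 2
    else 0

/-- The `2m × 2m` skew-symmetric matrix `K_m(λ) = [[M_m, N_m(λ)], [-N_m(λ), -M_m]]`. -/
def Kmat (m : ℕ) (lam : ℂ) : Matrix (Fin m ⊕ Fin m) (Fin m ⊕ Fin m) ℂ :=
  Matrix.fromBlocks (Mmat m) (Nmat m lam) (-Nmat m lam) (-Mmat m)

/-- `K_m(λ)` reindexed to have index type `Fin (m + m)`. -/
def KmatFin (m : ℕ) (lam : ℂ) : Matrix (Fin (m + m)) (Fin (m + m)) ℂ :=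
  Matrix.reindex finSumFinEquiv finSumFinEquiv (Kmat m lam)

/-- The skew-symmetric matrix `L_a` of odd size `a = 2m-1`, `L_a = (1/2)(T + iS)`. -/
def Lmat (a : ℕ) : Matrix (Fin a) (Fin a) ℂ :=
  Matrix.of fun j k =>
    (1 / 2 : ℂ) *
      ((if (k : ℕ) = (j : ℕ) + 1 then (if (j : ℕ) + 2 ≤ (a + 1) / 2 then 1 else -1)
        else if (j : ℕ) = (k : ℕ) + 1 then (if (k : ℕ) + 2 ≤ (a + 1) / 2 then -1 else 1)
        else 0)
      + Complex.I *
        (if (j : ℕ) + (k : ℕ) + 2 = a ∨ (j : ℕ) + (k : ℕ) = a then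
          (if (j : ℕ) < (k : ℕ) then 1 else if (k : ℕ) < (j : ℕ) then -1 else 0)
        else 0))

/-- `J_m(λ) ⊕ J_m(-λ)` reindexed to have index type `Fin (m + m)`. -/
def JsumFin (m : ℕ) (lam : ℂ) : Matrix (Fin (m + m)) (Fin (m + m)) ℂ :=
  Matrix.reindex finSumFinEquiv finSumFinEquiv
    (Matrix.fromBlocks (Jb m lam) 0 0 (Jb m (-lam)))

/-- The `n × n` exchange (backward identity) matrix `E_n`. -/
def Emat (n : ℕ) : Matrix (Fin n) (Fin n) ℂ :=
  Matrix.of fun j k => if (j : ℕ) + (k : ℕ) + 1 = n then 1 else 0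

/-- `P_n = (1/√2)(I_n + i E_n)`. -/
def Pmat (n : ℕ) : Matrix (Fin n) (Fin n) ℂ :=
  ((Real.sqrt 2 : ℂ))⁻¹ • (1 + Complex.I • Emat n)

/-- `I_m ⊕ F_m` of size `2m`, where `F_m = diag((-1)^1, …, (-1)^m)`. -/
def RmatEven (m : ℕ) : Matrix (Fin (m + m)) (Fin (m + m)) ℂ :=
  Matrix.of fun j k =>
    if j = k then (if (j : ℕ) < m then 1 else (-1 : ℂ) ^ ((j : ℕ) - m + 1)) else 0

/-- `I_m ⊕ F_{m-1}` of size `2m-1`. -/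
def RmatOdd (m : ℕ) : Matrix (Fin (2 * m - 1)) (Fin (2 * m - 1)) ℂ :=
  Matrix.of fun j k =>
    if j = k then (if (j : ℕ) < m then 1 else (-1 : ℂ) ^ ((j : ℕ) - m + 1)) else 0

set_option maxHeartbeats 2000000

namespace S19

/-! ### Scalar auxiliary functions -/

def rv (m j : ℕ) : ℂ := if j < m then 1 else (-1) ^ (j - m + 1)

lemma sign_self (p : ℕ) : ((-1 : ℂ)) ^ p * (-1 : ℂ) ^ p = 1 := by
  rw [← pow_add, ← two_mul, pow_mul, neg_one_sq, one_pow]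

lemma sign_succ (p : ℕ) : ((-1 : ℂ)) ^ p * (-1 : ℂ) ^ (p + 1) = -1 := by
  rw [pow_succ, ← mul_assoc, sign_self, one_mul]

lemma rv_sq (m j : ℕ) : rv m j * rv m j = 1 := by
  unfold rv; split_ifs
  · norm_num
  · exact sign_self _

def mv (j k : ℕ) : ℂ := if k = j + 1 then 1 / 2 else if j = k + 1 then -(1 / 2) else 0

def nv' (m : ℕ) (lam : ℂ) (j k : ℕ) : ℂ :=
  if j + k + 2 = m + 1 then lam
  else if j + k + 2 = m ∨ j + k + 2 = m + 2 then 1 / 2 else 0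

def kt (m j k : ℕ) : ℂ :=
  if j < m then (if k < m then mv j k else 0)
  else (if k < m then 0 else -mv (j - m) (k - m))

def ks (m : ℕ) (lam : ℂ) (j k : ℕ) : ℂ :=
  if j < m then (if k < m then 0 else nv' m lam j (k - m))
  else (if k < m then -nv' m lam (j - m) k else 0)

def jf (m : ℕ) (lam : ℂ) (j k : ℕ) : ℂ :=
  if j < m then (if k < m then (if k = j then lam else if k = j + 1 then 1 else 0) else 0)
  else (if k < m then 0
    else (if k - m = j - m then -lam else if k - m = j - m + 1 then 1 else 0))

def lt' (m j k : ℕ) : ℂ :=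
  (1 / 2) * (if k = j + 1 then (if j + 2 ≤ m then 1 else -1)
    else if j = k + 1 then (if k + 2 ≤ m then -1 else 1) else 0)

def ls' (m j k : ℕ) : ℂ :=
  (1 / 2) * (if j + k + 2 = 2 * m - 1 ∨ j + k = 2 * m - 1 then
      (if j < k then 1 else if k < j then -1 else 0) else 0)

def jodd (j k : ℕ) : ℂ := if k = j then 0 else if k = j + 1 then 1 else 0

/-! ### Infrastructure -/

def Qmat (n : ℕ) : Matrix (Fin n) (Fin n) ℂ :=
  ((Real.sqrt 2 : ℂ))⁻¹ • (1 - Complex.I • Emat n)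

lemma Emat_mul_apply {n : ℕ} (A : Matrix (Fin n) (Fin n) ℂ) (j k : Fin n) :
    (Emat n * A) j k = A j.rev k := by
  rw [Matrix.mul_apply, Finset.sum_eq_single j.rev]
  · have h1 : Emat n j j.rev = 1 := by
      simp only [Emat, Matrix.of_apply, Fin.val_rev]
      rw [if_pos (by omega)]
    rw [h1, one_mul]
  · intro b _ hb
    have h0 : Emat n j b = 0 := by
      simp only [Emat, Matrix.of_apply]
      rw [if_neg]
      intro h; exact hb (Fin.ext (by simp [Fin.val_rev]; omega))
    rw [h0, zero_mul]
  · intro h; exact absurd (Finset.mem_univ _) h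

lemma mul_Emat_apply {n : ℕ} (A : Matrix (Fin n) (Fin n) ℂ) (j k : Fin n) :
    (A * Emat n) j k = A j k.rev := by
  rw [Matrix.mul_apply, Finset.sum_eq_single k.rev]
  · have h1 : Emat n k.rev k = 1 := by
      simp only [Emat, Matrix.of_apply, Fin.val_rev]
      rw [if_pos (by omega)]
    rw [h1, mul_one]
  · intro b _ hb
    have h0 : Emat n b k = 0 := by
      simp only [Emat, Matrix.of_apply]
      rw [if_neg]
      intro h; exact hb (Fin.ext (by simp [Fin.val_rev]; omega))
    rw [h0, mul_zero]
  · intro h; exact absurd (Finset.mem_univ _) h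

lemma Emat_mul_Emat (n : ℕ) : Emat n * Emat n = 1 := by
  ext j k
  rw [Emat_mul_apply]
  simp only [Emat, Matrix.of_apply, Matrix.one_apply, Fin.val_rev, Fin.ext_iff]
  split_ifs <;> first | rfl | (exfalso; omega)

lemma diag_mul_apply {n m : ℕ} (A : Matrix (Fin n) (Fin n) ℂ) (j k : Fin n) :
    ((Matrix.of fun a b : Fin n => if a = b then rv m (a : ℕ) else 0) * A) j k
      = rv m (j : ℕ) * A j k := by
  rw [Matrix.mul_apply, Finset.sum_eq_single j]
  · simp
  · intro b _ hb
    simp only [Matrix.of_apply]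
    rw [if_neg (fun h => hb h.symm), zero_mul]
  · intro h; exact absurd (Finset.mem_univ _) h

lemma mul_diag_apply {n m : ℕ} (A : Matrix (Fin n) (Fin n) ℂ) (j k : Fin n) :
    (A * (Matrix.of fun a b : Fin n => if a = b then rv m (a : ℕ) else 0)) j k
      = A j k * rv m (k : ℕ) := by
  rw [Matrix.mul_apply, Finset.sum_eq_single k]
  · simp
  · intro b _ hb
    simp only [Matrix.of_apply]
    rw [if_neg hb, mul_zero]
  · intro h; exact absurd (Finset.mem_univ _) h

lemma diag_mul_self {n m : ℕ} :
    (Matrix.of fun a b : Fin n => if a = b then rv m (a : ℕ) else 0)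
      * (Matrix.of fun a b : Fin n => if a = b then rv m (a : ℕ) else 0) = 1 := by
  ext j k
  rw [diag_mul_apply]
  simp only [Matrix.of_apply, Matrix.one_apply]
  split_ifs with h
  · subst h; exact rv_sq m j
  · exact mul_zero _

lemma RmatEven_eq (m : ℕ) :
    RmatEven m = Matrix.of fun a b : Fin (m + m) => if a = b then rv m (a : ℕ) else 0 := rfl

lemma RmatOdd_eq (m : ℕ) :
    RmatOdd m = Matrix.of fun a b : Fin (2 * m - 1) => if a = b then rv m (a : ℕ) else 0 := rfl

lemma hc2 : ((Real.sqrt 2 : ℂ))⁻¹ * ((Real.sqrt 2 : ℂ))⁻¹ * 2 = 1 := by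
  have h : ((Real.sqrt 2 : ℝ) : ℂ) * ((Real.sqrt 2 : ℝ) : ℂ) = 2 := by
    norm_cast
    rw [Real.mul_self_sqrt (by norm_num)]
  rw [← mul_inv, h]
  norm_num

lemma one_add_mul_one_sub (n : ℕ) :
    (1 + Complex.I • Emat n) * (1 - Complex.I • Emat n) = (2 : ℂ) • 1 := by
  simp only [mul_sub, add_mul, sub_mul, one_mul, mul_one, Matrix.smul_mul,
    Matrix.mul_smul, smul_smul, Complex.I_mul_I, Emat_mul_Emat, neg_smul, one_smul]
  module

lemma one_sub_mul_one_add (n : ℕ) :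
    (1 - Complex.I • Emat n) * (1 + Complex.I • Emat n) = (2 : ℂ) • 1 := by
  simp only [mul_add, sub_mul, add_mul, one_mul, mul_one, Matrix.smul_mul,
    Matrix.mul_smul, smul_smul, Complex.I_mul_I, Emat_mul_Emat, neg_smul, one_smul]
  module

lemma P_mul_Q (n : ℕ) : Pmat n * Qmat n = 1 := by
  rw [Pmat, Qmat, Matrix.smul_mul, Matrix.mul_smul, smul_smul, one_add_mul_one_sub,
    smul_smul, hc2, one_smul]

lemma Q_mul_P (n : ℕ) : Qmat n * Pmat n = 1 := by
  rw [Pmat, Qmat, Matrix.smul_mul, Matrix.mul_smul, smul_smul, one_sub_mul_one_add,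
    smul_smul, hc2, one_smul]

lemma expand {n : ℕ} (A : Matrix (Fin n) (Fin n) ℂ) :
    (1 + Complex.I • Emat n) * A * (1 - Complex.I • Emat n)
      = A + Complex.I • (Emat n * A) - Complex.I • (A * Emat n)
        + Emat n * A * Emat n := by
  simp only [add_mul, sub_mul, mul_add, mul_sub, one_mul, mul_one, Matrix.smul_mul,
    Matrix.mul_smul, smul_smul, Complex.I_mul_I, neg_smul, one_smul, mul_assoc]
  module

/-! ### Entry formulas -/

lemma finSumFinEquiv_symm_eq_left {m : ℕ} (j : Fin (m + m)) (h : (j : ℕ) < m) :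
    finSumFinEquiv.symm j = Sum.inl (⟨(j : ℕ), h⟩ : Fin m) := by
  rw [Equiv.symm_apply_eq]
  exact (Fin.ext (by simp)).symm

lemma finSumFinEquiv_symm_eq_right {m : ℕ} (j : Fin (m + m)) (h : ¬ (j : ℕ) < m) :
    finSumFinEquiv.symm j = Sum.inr (⟨(j : ℕ) - m, by omega⟩ : Fin m) := by
  rw [Equiv.symm_apply_eq]
  refine (Fin.ext ?_).symm
  simp
  omega

lemma KmatFin_apply (m : ℕ) (lam : ℂ) (j k : Fin (m + m)) :
    KmatFin m lam j k = kt m (j : ℕ) (k : ℕ) + Complex.I * ks m lam (j : ℕ) (k : ℕ) := by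
  rw [KmatFin, Matrix.reindex_apply, Matrix.submatrix_apply]
  rcases Nat.lt_or_ge (j : ℕ) m with hj | hj' <;>
    rcases Nat.lt_or_ge (k : ℕ) m with hk | hk' <;>
    (try have hj : ¬ (j:ℕ) < m := Nat.not_lt.mpr hj') <;>
    (try have hk : ¬ (k:ℕ) < m := Nat.not_lt.mpr hk')
  · rw [finSumFinEquiv_symm_eq_left j hj, finSumFinEquiv_symm_eq_left k hk]
    simp only [Kmat, Matrix.fromBlocks_apply₁₁, Mmat, Matrix.of_apply, kt, ks, mv,
      if_pos hj, if_pos hk]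
    ring
  · rw [finSumFinEquiv_symm_eq_left j hj, finSumFinEquiv_symm_eq_right k hk]
    simp only [Kmat, Matrix.fromBlocks_apply₁₂, Nmat, Matrix.of_apply, kt, ks, nv',
      if_pos hj, if_neg hk]
    (try split_ifs) <;> first | (exfalso; omega) | ring1
  · rw [finSumFinEquiv_symm_eq_right j hj, finSumFinEquiv_symm_eq_left k hk]
    simp only [Kmat, Matrix.fromBlocks_apply₂₁, Nmat, Matrix.of_apply, Matrix.neg_apply,
      kt, ks, nv', if_neg hj, if_pos hk]
    (try split_ifs) <;> first | (exfalso; omega) | ring1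
  · rw [finSumFinEquiv_symm_eq_right j hj, finSumFinEquiv_symm_eq_right k hk]
    simp only [Kmat, Matrix.fromBlocks_apply₂₂, Mmat, Matrix.of_apply, Matrix.neg_apply,
      kt, ks, mv, if_neg hj, if_neg hk]
    ring

lemma JsumFin_apply (m : ℕ) (lam : ℂ) (j k : Fin (m + m)) :
    JsumFin m lam j k = jf m lam (j : ℕ) (k : ℕ) := by
  rw [JsumFin, Matrix.reindex_apply, Matrix.submatrix_apply]
  rcases Nat.lt_or_ge (j : ℕ) m with hj | hj' <;>
    rcases Nat.lt_or_ge (k : ℕ) m with hk | hk' <;>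
    (try have hj : ¬ (j:ℕ) < m := Nat.not_lt.mpr hj') <;>
    (try have hk : ¬ (k:ℕ) < m := Nat.not_lt.mpr hk')
  · rw [finSumFinEquiv_symm_eq_left j hj, finSumFinEquiv_symm_eq_left k hk]
    simp only [Matrix.fromBlocks_apply₁₁, Jb, Matrix.of_apply, jf, if_pos hj, if_pos hk,
      Fin.mk.injEq]
  · rw [finSumFinEquiv_symm_eq_left j hj, finSumFinEquiv_symm_eq_right k hk]
    simp only [Matrix.fromBlocks_apply₁₂, jf, if_pos hj, if_neg hk, Matrix.zero_apply]
  · rw [finSumFinEquiv_symm_eq_right j hj, finSumFinEquiv_symm_eq_left k hk]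
    simp only [Matrix.fromBlocks_apply₂₁, jf, if_neg hj, if_pos hk, Matrix.zero_apply]
  · rw [finSumFinEquiv_symm_eq_right j hj, finSumFinEquiv_symm_eq_right k hk]
    simp only [Matrix.fromBlocks_apply₂₂, Jb, Matrix.of_apply, jf, if_neg hj, if_neg hk,
      Fin.mk.injEq]

lemma Lmat_apply (m : ℕ) (hm : 0 < m) (j k : Fin (2 * m - 1)) :
    Lmat (2 * m - 1) j k = lt' m (j : ℕ) (k : ℕ) + Complex.I * ls' m (j : ℕ) (k : ℕ) := by
  have h2 : (2 * m - 1 + 1) / 2 = m := by omega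
  simp only [Lmat, Matrix.of_apply, h2, lt', ls']
  ring

lemma Jb_zero_apply (a : ℕ) (j k : Fin a) : Jb a 0 j k = jodd (j : ℕ) (k : ℕ) := by
  simp only [Jb, Matrix.of_apply, jodd, Fin.ext_iff]

/-! ### The scalar identities -/

lemma kf_skew (m : ℕ) (lam : ℂ) (j k : ℕ) :
    kt m k j + Complex.I * ks m lam k j = -(kt m j k + Complex.I * ks m lam j k) := by
  simp only [kt, ks, mv, nv']
  (try split_ifs) <;> first | (exfalso; omega) | ring1

lemma evenA (m : ℕ) (hm : 0 < m) (lam : ℂ) (j k j' k' : ℕ)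
    (hj : j + j' + 1 = m + m) (hk : k + k' + 1 = m + m) :
    kt m j k - ks m lam j' k + ks m lam j k' + kt m j' k'
      = 2 * (rv m j * (jf m lam j k * rv m k)) := by
  rcases Nat.lt_or_ge j m with hjm | hjm' <;>
    rcases Nat.lt_or_ge k m with hkm | hkm' <;>
    (try have hjm : ¬ j < m := Nat.not_lt.mpr hjm') <;>
    (try have hkm : ¬ k < m := Nat.not_lt.mpr hkm')
  · have h1 : ¬ j' < m := by omega
    have h2 : ¬ k' < m := by omega
    simp only [kt, ks, jf, rv, mv, nv', if_pos hjm, if_pos hkm, if_neg h1, if_neg h2]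
    (try split_ifs) <;> first | (exfalso; omega) | ring1
  · have h1 : ¬ j' < m := by omega
    have h2 : k' < m := by omega
    simp only [kt, ks, jf, rv, mv, nv', if_pos hjm, if_neg hkm, if_neg h1, if_pos h2]
    (try split_ifs) <;> first | (exfalso; omega) | ring1
  · have h1 : j' < m := by omega
    have h2 : ¬ k' < m := by omega
    simp only [kt, ks, jf, rv, mv, nv', if_neg hjm, if_pos hkm, if_pos h1, if_neg h2]
    (try split_ifs) <;> first | (exfalso; omega) | ring1
  · have h1 : j' < m := by omega
    have h2 : k' < m := by omega
    simp only [kt, ks, jf, rv, if_neg hjm, if_neg hkm, if_pos h1, if_pos h2]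
    by_cases hd : k - m = j - m
    · rw [if_pos hd, show k - m + 1 = j - m + 1 from by omega]
      simp only [mv, nv']
      split_ifs <;>
        first
          | (exfalso; omega)
          | linear_combination (2 * lam) * sign_self (j - m + 1)
          | ring1
    · by_cases hd2 : k - m = j - m + 1
      · rw [if_neg hd, if_pos hd2, show k - m + 1 = (j - m + 1) + 1 from by omega]
        simp only [mv, nv']
        split_ifs <;>
          first
            | (exfalso; omega)
            | linear_combination (-2 : ℂ) * sign_succ (j - m + 1)
            | ring1
      · rw [if_neg hd, if_neg hd2]
        simp only [mv, nv']
        (try split_ifs) <;> first | (exfalso; omega) | ring1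

lemma evenB (m : ℕ) (hm : 0 < m) (lam : ℂ) (j k j' k' : ℕ)
    (hj : j + j' + 1 = m + m) (hk : k + k' + 1 = m + m) :
    ks m lam j k + kt m j' k - kt m j k' + ks m lam j' k' = 0 := by
  rcases Nat.lt_or_ge j m with hjm | hjm' <;>
    rcases Nat.lt_or_ge k m with hkm | hkm' <;>
    (try have hjm : ¬ j < m := Nat.not_lt.mpr hjm') <;>
    (try have hkm : ¬ k < m := Nat.not_lt.mpr hkm')
  · have h1 : ¬ j' < m := by omega
    have h2 : ¬ k' < m := by omega
    simp only [kt, ks, mv, nv', if_pos hjm, if_pos hkm, if_neg h1, if_neg h2]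
    (try split_ifs) <;> first | (exfalso; omega) | ring1
  · have h1 : ¬ j' < m := by omega
    have h2 : k' < m := by omega
    simp only [kt, ks, mv, nv', if_pos hjm, if_neg hkm, if_neg h1, if_pos h2]
    (try split_ifs) <;> first | (exfalso; omega) | ring1
  · have h1 : j' < m := by omega
    have h2 : ¬ k' < m := by omega
    simp only [kt, ks, mv, nv', if_neg hjm, if_pos hkm, if_pos h1, if_neg h2]
    (try split_ifs) <;> first | (exfalso; omega) | ring1
  · have h1 : j' < m := by omega
    have h2 : k' < m := by omega
    simp only [kt, ks, mv, nv', if_neg hjm, if_neg hkm, if_pos h1, if_pos h2]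
    (try split_ifs) <;> first | (exfalso; omega) | ring1

lemma oddB (m : ℕ) (hm : 0 < m) (j k j' k' : ℕ)
    (hj : j + j' + 1 = 2 * m - 1) (hk : k + k' + 1 = 2 * m - 1) :
    ls' m j k + lt' m j' k - lt' m j k' + ls' m j' k' = 0 := by
  simp only [lt', ls']
  (try split_ifs) <;> first | (exfalso; omega) | ring1

lemma oddA (m : ℕ) (hm : 0 < m) (j k j' k' : ℕ)
    (hj : j + j' + 1 = 2 * m - 1) (hk : k + k' + 1 = 2 * m - 1) :
    lt' m j k - ls' m j' k + ls' m j k' + lt' m j' k'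
      = 2 * (rv m j * (jodd j k * rv m k)) := by
  rcases Nat.lt_or_ge j m with hjm | hjm' <;>
    rcases Nat.lt_or_ge k m with hkm | hkm' <;>
    (try have hjm : ¬ j < m := Nat.not_lt.mpr hjm') <;>
    (try have hkm : ¬ k < m := Nat.not_lt.mpr hkm')
  · simp only [rv, jodd, lt', ls', if_pos hjm, if_pos hkm]
    (try split_ifs) <;> first | (exfalso; omega) | ring1
  · by_cases hd : k = j + 1
    · have h1 : k - m + 1 = 1 := by omega
      simp only [rv, jodd, if_pos hjm, if_neg hkm, if_neg (show ¬ k = j by omega),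
        if_pos hd, h1, pow_one, lt', ls']
      (try split_ifs) <;> first | (exfalso; omega) | ring1
    · simp only [rv, jodd, if_pos hjm, if_neg hkm, if_neg (show ¬ k = j by omega),
        if_neg hd, lt', ls']
      (try split_ifs) <;> first | (exfalso; omega) | ring1
  · simp only [rv, jodd, if_neg hjm, if_pos hkm, if_neg (show ¬ k = j by omega),
      if_neg (show ¬ k = j + 1 by omega), lt', ls']
    (try split_ifs) <;> first | (exfalso; omega) | ring1
  · by_cases hd : k = j + 1
    · have h1 : k - m + 1 = (j - m + 1) + 1 := by omega
      simp only [rv, jodd, if_neg hjm, if_neg hkm, if_neg (show ¬ k = j by omega),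
        if_pos hd, h1, lt', ls']
      split_ifs <;>
        first
          | (exfalso; omega)
          | linear_combination (-2 : ℂ) * sign_succ (j - m + 1)
          | ring1
    · simp only [rv, jodd, if_neg hjm, if_neg hkm, if_neg hd, ite_self, lt', ls']
      (try split_ifs) <;> first | (exfalso; omega) | ring1

/-! ### Core conjugation identities -/

lemma evenCore (m : ℕ) (hm : 0 < m) (lam : ℂ) :
    (1 + Complex.I • Emat (m + m)) * KmatFin m lam * (1 - Complex.I • Emat (m + m))
      = (2 : ℂ) • (RmatEven m * (JsumFin m lam * RmatEven m)) := by
  rw [expand, RmatEven_eq m]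
  ext j k
  have h1 : (j : ℕ) + ((j.rev : Fin (m + m)) : ℕ) + 1 = m + m := by
    rw [Fin.val_rev]; omega
  have h2 : (k : ℕ) + ((k.rev : Fin (m + m)) : ℕ) + 1 = m + m := by
    rw [Fin.val_rev]; omega
  simp only [Matrix.add_apply, Matrix.sub_apply, Matrix.smul_apply, smul_eq_mul,
    Emat_mul_apply, mul_Emat_apply, diag_mul_apply, mul_diag_apply, KmatFin_apply,
    JsumFin_apply]
  linear_combination evenA m hm lam (j : ℕ) (k : ℕ) ((j.rev : Fin (m + m)) : ℕ)
      ((k.rev : Fin (m + m)) : ℕ) h1 h2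
    + Complex.I * evenB m hm lam (j : ℕ) (k : ℕ) ((j.rev : Fin (m + m)) : ℕ)
      ((k.rev : Fin (m + m)) : ℕ) h1 h2
    + (ks m lam ((j.rev : Fin (m + m)) : ℕ) (k : ℕ)
        - ks m lam (j : ℕ) ((k.rev : Fin (m + m)) : ℕ)) * Complex.I_sq

lemma oddCore (m : ℕ) (hm : 0 < m) :
    (1 + Complex.I • Emat (2 * m - 1)) * Lmat (2 * m - 1)
        * (1 - Complex.I • Emat (2 * m - 1))
      = (2 : ℂ) • (RmatOdd m * (Jb (2 * m - 1) 0 * RmatOdd m)) := by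
  rw [expand, RmatOdd_eq m]
  ext j k
  have h1 : (j : ℕ) + ((j.rev : Fin (2 * m - 1)) : ℕ) + 1 = 2 * m - 1 := by
    rw [Fin.val_rev]; omega
  have h2 : (k : ℕ) + ((k.rev : Fin (2 * m - 1)) : ℕ) + 1 = 2 * m - 1 := by
    rw [Fin.val_rev]; omega
  simp only [Matrix.add_apply, Matrix.sub_apply, Matrix.smul_apply, smul_eq_mul,
    Emat_mul_apply, mul_Emat_apply, diag_mul_apply, mul_diag_apply, Lmat_apply m hm,
    Jb_zero_apply]
  linear_combination oddA m hm (j : ℕ) (k : ℕ) ((j.rev : Fin (2 * m - 1)) : ℕ)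
      ((k.rev : Fin (2 * m - 1)) : ℕ) h1 h2
    + Complex.I * oddB m hm (j : ℕ) (k : ℕ) ((j.rev : Fin (2 * m - 1)) : ℕ)
      ((k.rev : Fin (2 * m - 1)) : ℕ) h1 h2
    + (ls' m ((j.rev : Fin (2 * m - 1)) : ℕ) (k : ℕ)
        - ls' m (j : ℕ) ((k.rev : Fin (2 * m - 1)) : ℕ)) * Complex.I_sq

lemma Lmat_skew (a : ℕ) : (Lmat a)ᵀ = -(Lmat a) := by
  ext j k
  simp only [Matrix.transpose_apply, Lmat, Matrix.of_apply, Matrix.neg_apply]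
  (try split_ifs) <;> first | (exfalso; omega) | ring1

end S19

open S19 in
/-- The transition matrices `S_{2m} = (I_m ⊕ F_m)·(1/√2)(I + iE)` and
`S'_{2m-1} = (I_m ⊕ F_{m-1})·(1/√2)(I + iE)` are invertible and conjugate `K_m(λ)` to
`J_m(λ) ⊕ J_m(-λ)` and `L_{2m-1}` to `J_{2m-1}(0)`, respectively; moreover `K_m(λ)` and
`L_{2m-1}` are skew-symmetric. -/
theorem stmt19 (m : ℕ) (hm : 0 < m) (lam : ℂ) :
    IsUnit (RmatEven m * Pmat (m + m)) ∧
    IsUnit (RmatOdd m * Pmat (2 * m - 1)) ∧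
    (RmatEven m * Pmat (m + m)) * KmatFin m lam * (RmatEven m * Pmat (m + m))⁻¹
      = JsumFin m lam ∧
    (RmatOdd m * Pmat (2 * m - 1)) * Lmat (2 * m - 1) * (RmatOdd m * Pmat (2 * m - 1))⁻¹
      = Jb (2 * m - 1) 0 ∧
    (KmatFin m lam)ᵀ = -KmatFin m lam ∧
    (Lmat (2 * m - 1))ᵀ = -Lmat (2 * m - 1) := by
  have hRRe : RmatEven m * RmatEven m = 1 := by rw [RmatEven_eq m]; exact diag_mul_self
  have hRRo : RmatOdd m * RmatOdd m = 1 := by rw [RmatOdd_eq m]; exact diag_mul_self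
  have hSTe : (RmatEven m * Pmat (m + m)) * (Qmat (m + m) * RmatEven m) = 1 := by
    rw [mul_assoc, ← mul_assoc (Pmat (m + m)), P_mul_Q, one_mul, hRRe]
  have hTSe : (Qmat (m + m) * RmatEven m) * (RmatEven m * Pmat (m + m)) = 1 := by
    rw [mul_assoc, ← mul_assoc (RmatEven m), hRRe, one_mul, Q_mul_P]
  have hSTo : (RmatOdd m * Pmat (2 * m - 1)) * (Qmat (2 * m - 1) * RmatOdd m) = 1 := by
    rw [mul_assoc, ← mul_assoc (Pmat (2 * m - 1)), P_mul_Q, one_mul, hRRo]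
  have hTSo : (Qmat (2 * m - 1) * RmatOdd m) * (RmatOdd m * Pmat (2 * m - 1)) = 1 := by
    rw [mul_assoc, ← mul_assoc (RmatOdd m), hRRo, one_mul, Q_mul_P]
  refine ⟨⟨⟨_, _, hSTe, hTSe⟩, rfl⟩, ⟨⟨_, _, hSTo, hTSo⟩, rfl⟩, ?_, ?_, ?_, ?_⟩
  · rw [Matrix.inv_eq_right_inv hSTe]
    have hmid : Pmat (m + m) * (KmatFin m lam * Qmat (m + m))
        = RmatEven m * (JsumFin m lam * RmatEven m) := by
      simp only [Pmat, Qmat, Matrix.smul_mul, Matrix.mul_smul, smul_smul]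
      rw [← mul_assoc, evenCore m hm lam, smul_smul, hc2, one_smul]
    calc RmatEven m * Pmat (m + m) * KmatFin m lam * (Qmat (m + m) * RmatEven m)
        = RmatEven m * (Pmat (m + m) * (KmatFin m lam * Qmat (m + m))) * RmatEven m := by
          simp only [mul_assoc]
      _ = JsumFin m lam := by
          rw [hmid]
          simp only [← mul_assoc]
          rw [hRRe, one_mul, mul_assoc, hRRe, mul_one]
  · rw [Matrix.inv_eq_right_inv hSTo]
    have hmid : Pmat (2 * m - 1) * (Lmat (2 * m - 1) * Qmat (2 * m - 1))
        = RmatOdd m * (Jb (2 * m - 1) 0 * RmatOdd m) := by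
      simp only [Pmat, Qmat, Matrix.smul_mul, Matrix.mul_smul, smul_smul]
      rw [← mul_assoc, oddCore m hm, smul_smul, hc2, one_smul]
    calc RmatOdd m * Pmat (2 * m - 1) * Lmat (2 * m - 1) * (Qmat (2 * m - 1) * RmatOdd m)
        = RmatOdd m * (Pmat (2 * m - 1) * (Lmat (2 * m - 1) * Qmat (2 * m - 1)))
            * RmatOdd m := by
          simp only [mul_assoc]
      _ = Jb (2 * m - 1) 0 := by
          rw [hmid]
          simp only [← mul_assoc]
          rw [hRRo, one_mul, mul_assoc, hRRo, mul_one]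
  · ext j k
    rw [Matrix.transpose_apply, Matrix.neg_apply, KmatFin_apply, KmatFin_apply]
    exact kf_skew m lam (j : ℕ) (k : ℕ)
  · exact Lmat_skew _

end
end
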